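/- arXiv:1905.08681 — 4 statements merged into one kernel-verified Lean document; each statement's English description precedes it below -/
import Mathlib

section
/- Two tiles P and Q in the Walsh phase plane are disjoint (as rectangles) if and only if their associated wave packets w_P and w_Q are orthogonal in L²(W;ℂ), i.e. ∫_W w_P(x) conj(w_Q(x)) dx = 0. -/
open scoped ENNReal NNReal Classical

noncomputable section


/-- The ternary digit of a nonnegative real number `x` at position `m`. -/
def tdig (m : ℤ) (x : ℝ) : ℕ := (Int.floor (x * (3:ℝ) ^ (-m)) % 3).toNat

/-- A primitive cube root of unity. -/
def om3 : ℂ := Complex.exp (2 * Real.pi * Complex.I / 3)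

/-- The Walsh character `exp_ξ(x) = ω^{Σ_{j+k=−1} [ξ]_j [x]_k}`. -/
def wexp (xi x : ℝ) : ℂ := om3 ^ (∑ᶠ m : ℤ, tdig m xi * tdig (-1 - m) x)

/-- A tile `I × ω` of area 1 in the Walsh phase plane `[0,∞) × [0,∞)`, where
`I = [i·3^n, (i+1)·3^n)` and `ω = [j·3^(−n), (j+1)·3^(−n))`. -/
structure Tile where
  n : ℤ
  i : ℕ
  j : ℕ

namespace Tile

/-- The time interval of a tile. -/
def I (P : Tile) : Set ℝ :=
  Set.Ico ((P.i : ℝ) * (3:ℝ) ^ P.n) (((P.i : ℝ) + 1) * (3:ℝ) ^ P.n)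

/-- The frequency interval of a tile. -/
def freqI (P : Tile) : Set ℝ :=
  Set.Ico ((P.j : ℝ) * (3:ℝ) ^ (-P.n)) (((P.j : ℝ) + 1) * (3:ℝ) ^ (-P.n))

/-- The canonical frequency of a tile. -/
def freq (P : Tile) : ℝ := (P.j : ℝ) * (3:ℝ) ^ (-P.n)

/-- The tile, as a rectangle in the phase plane. -/
def rect (P : Tile) : Set (ℝ × ℝ) := P.I ×ˢ P.freqI

end Tile

/-- The Walsh wave packet associated with a tile:
`w_P = |I_P|⁻¹ · exp_{ξ_P} · 1_{I_P}`. -/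
def wp (P : Tile) : ℝ → ℂ :=
  fun x => if x ∈ P.I then (3:ℂ) ^ (-P.n) * wexp P.freq x else 0

/-- A tritile: a rectangle `I × ω` of area 3 with triadic sides,
`I = [i·3^n, (i+1)·3^n)`, `ω = [j·3^(1−n), (j+1)·3^(1−n))`. -/
structure Tritile where
  n : ℤ
  i : ℕ
  j : ℕ

namespace Tritile

/-- The time interval of a tritile. -/
def I (P : Tritile) : Set ℝ :=
  Set.Ico ((P.i : ℝ) * (3:ℝ) ^ P.n) (((P.i : ℝ) + 1) * (3:ℝ) ^ P.n)

/-- The frequency interval of a tritile. -/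
def freqI (P : Tritile) : Set ℝ :=
  Set.Ico ((P.j : ℝ) * (3:ℝ) ^ (1 - P.n)) (((P.j : ℝ) + 1) * (3:ℝ) ^ (1 - P.n))

/-- The tritile, as a rectangle in the phase plane. -/
def rect (P : Tritile) : Set (ℝ × ℝ) := P.I ×ˢ P.freqI

/-- The three horizontal subtiles `𝐏_u` of a tritile `𝐏`. -/
def sub (P : Tritile) (u : Fin 3) : Tile := ⟨P.n, P.i, 3 * P.j + u.val⟩

end Tritile

open MeasureTheory

namespace Stmt2Aux
open Finset

lemma om3_pow_three : om3 ^ 3 = 1 := by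
  rw [om3, ← Complex.exp_nat_mul]
  rw [show ((3:ℕ):ℂ) * (2 * Real.pi * Complex.I / 3) = 2 * Real.pi * Complex.I by push_cast; ring]
  exact Complex.exp_two_pi_mul_I

lemma om3_ne_zero : om3 ≠ 0 := Complex.exp_ne_zero _

lemma om3_ne_one : om3 ≠ 1 := by
  intro h
  rw [om3, Complex.exp_eq_one_iff] at h
  obtain ⟨n, hn⟩ := h
  have h2 : (2 * Real.pi * Complex.I) ≠ 0 := by
    simp [Real.pi_ne_zero, Complex.I_ne_zero]
  have h3 : ((n : ℂ) * 3) * (2 * Real.pi * Complex.I) = 1 * (2 * Real.pi * Complex.I) := by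
    linear_combination (-3:ℂ) * hn
  have h4 : (n : ℂ) * 3 = 1 := mul_right_cancel₀ h2 h3
  have h5 : ((n * 3 : ℤ) : ℂ) = ((1 : ℤ) : ℂ) := by push_cast; linear_combination h4
  have h6 : (n * 3 : ℤ) = 1 := by exact_mod_cast h5
  omega

lemma om3_sum : 1 + om3 + om3 ^ 2 = 0 := by
  have h2 : (om3 - 1) * (1 + om3 + om3 ^ 2) = om3 ^ 3 - 1 := by ring
  rw [om3_pow_three, sub_self] at h2
  rcases mul_eq_zero.mp h2 with h | h
  · exact absurd (sub_eq_zero.mp h) om3_ne_one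
  · exact h

/-- `OM z = om3 ^ z.val`. -/
def OM (z : ZMod 3) : ℂ := om3 ^ z.val

lemma OM_natCast (k : ℕ) : OM (k : ZMod 3) = om3 ^ k := by
  have : OM (k : ZMod 3) = om3 ^ (k % 3) := by
    rw [OM, ZMod.val_natCast]
  rw [this]
  conv_rhs => rw [← Nat.div_add_mod k 3, pow_add, pow_mul, om3_pow_three, one_pow, one_mul]

lemma OM_add (a b : ZMod 3) : OM (a + b) = OM a * OM b := by
  have ha : ((a.val : ℕ) : ZMod 3) = a := by simp [ZMod.natCast_val, ZMod.cast_id]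
  have hb : ((b.val : ℕ) : ZMod 3) = b := by simp [ZMod.natCast_val, ZMod.cast_id]
  rw [← ha, ← hb, ← Nat.cast_add, OM_natCast, pow_add]
  rw [ha, hb]
  rfl

lemma OM_ne_zero (z : ZMod 3) : OM z ≠ 0 := pow_ne_zero _ om3_ne_zero

lemma zmod3_cases (z : ZMod 3) : z = 0 ∨ z = 1 ∨ z = 2 := by revert z; decide

lemma OM_sum3 (b : ZMod 3) (hb : b ≠ 0) : OM (b * 0) + OM (b * 1) + OM (b * 2) = 0 := by
  rcases zmod3_cases b with h | h | h
  · exact absurd h hb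
  · subst h
    show OM 0 + OM 1 + OM 2 = 0
    · show om3 ^ (0 : ZMod 3).val + om3 ^ (1 : ZMod 3).val + om3 ^ (2 : ZMod 3).val = 0
      norm_num [show (0 : ZMod 3).val = 0 from rfl, show (1 : ZMod 3).val = 1 from rfl,
        show (2 : ZMod 3).val = 2 from rfl]
      linear_combination om3_sum
  · subst h
    show OM 0 + OM 2 + OM 1 = 0
    · show om3 ^ (0 : ZMod 3).val + om3 ^ (2 : ZMod 3).val + om3 ^ (1 : ZMod 3).val = 0
      norm_num [show (0 : ZMod 3).val = 0 from rfl, show (1 : ZMod 3).val = 1 from rfl,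
        show (2 : ZMod 3).val = 2 from rfl]
      linear_combination om3_sum

end Stmt2Aux
namespace Stmt2Aux
open Finset

lemma sum_range_three_mul {M : Type*} [AddCommMonoid M] (n : ℕ) (f : ℕ → M) :
    ∑ t ∈ range (3 * n), f t =
      (∑ r ∈ range n, f (0 * n + r)) + (∑ r ∈ range n, f (1 * n + r))
        + ∑ r ∈ range n, f (2 * n + r) := by
  rw [show 3 * n = n + (n + n) by ring, Finset.sum_range_add, Finset.sum_range_add]
  rw [add_assoc]
  congr 1
  · exact Finset.sum_congr rfl fun r _ => by rw [zero_mul, zero_add]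
  congr 1
  · exact Finset.sum_congr rfl fun r _ => by rw [one_mul]
  · exact Finset.sum_congr rfl fun r _ => by rw [show 2 * n + r = n + (n + r) by ring]

/-- digit of `u * 3^D + r` at position `a < D` is the digit of `r`. -/
lemma dig_add_mul (u r a D : ℕ) (ha : a < D) :
    (u * 3 ^ D + r) / 3 ^ a % 3 = r / 3 ^ a % 3 := by
  have h1 : u * 3 ^ D = 3 * (u * 3 ^ (D - a - 1)) * 3 ^ a := by
    have h2 : 3 ^ (D - a - 1) * 3 ^ a * 3 = 3 ^ (D - a - 1 + a + 1) := by ring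
    have h3 : D - a - 1 + a + 1 = D := by omega
    calc u * 3 ^ D = u * (3 ^ (D - a - 1) * 3 ^ a * 3) := by rw [h2, h3]
      _ = 3 * (u * 3 ^ (D - a - 1)) * 3 ^ a := by ring
  rw [h1, add_comm, Nat.add_mul_div_right _ _ (by positivity : 0 < 3 ^ a),
    Nat.add_mul_mod_self_left]

/-- top digit. -/
lemma dig_top (u r D : ℕ) (hu : u < 3) (hr : r < 3 ^ D) :
    (u * 3 ^ D + r) / 3 ^ D % 3 = u := by
  rw [add_comm, Nat.add_mul_div_right _ _ (by positivity : 0 < 3 ^ D),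
    Nat.div_eq_of_lt hr, zero_add, Nat.mod_eq_of_lt hu]

lemma sumzero (D : ℕ) (b : ℕ → ZMod 3) (h : ∃ a, a < D ∧ b a ≠ 0) :
    ∑ t ∈ range (3 ^ D), OM (∑ a ∈ range D, b a * ((t / 3 ^ a % 3 : ℕ) : ZMod 3)) = 0 := by
  induction D with
  | zero => obtain ⟨a, ha, _⟩ := h; omega
  | succ D ih =>
    rw [show (3:ℕ) ^ (D + 1) = 3 * 3 ^ D by ring, sum_range_three_mul]
    have key : ∀ u r : ℕ, u < 3 → r < 3 ^ D →
        (∑ a ∈ range (D + 1), b a * (((u * 3 ^ D + r) / 3 ^ a % 3 : ℕ) : ZMod 3))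
          = (∑ a ∈ range D, b a * ((r / 3 ^ a % 3 : ℕ) : ZMod 3)) + b D * ((u : ℕ) : ZMod 3) := by
      intro u r hu hr
      rw [Finset.sum_range_succ, dig_top u r D hu hr]
      congr 1
      exact Finset.sum_congr rfl fun a ha => by
        rw [dig_add_mul u r a D (Finset.mem_range.mp ha)]
    have block : ∀ u : ℕ, u < 3 →
        (∑ r ∈ range (3 ^ D), OM (∑ a ∈ range (D + 1),
            b a * (((u * 3 ^ D + r) / 3 ^ a % 3 : ℕ) : ZMod 3)))
          = OM (b D * ((u : ℕ) : ZMod 3)) *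
            ∑ r ∈ range (3 ^ D), OM (∑ a ∈ range D, b a * ((r / 3 ^ a % 3 : ℕ) : ZMod 3)) := by
      intro u hu
      rw [Finset.mul_sum]
      exact Finset.sum_congr rfl fun r hr => by
        rw [key u r hu (Finset.mem_range.mp hr), OM_add, mul_comm]
    rw [block 0 (by norm_num), block 1 (by norm_num), block 2 (by norm_num)]
    by_cases hD : b D = 0
    · have hz : ∑ r ∈ range (3 ^ D), OM (∑ a ∈ range D, b a * ((r / 3 ^ a % 3 : ℕ) : ZMod 3)) = 0 := by
        apply ih
        obtain ⟨a, haD, hba⟩ := h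
        refine ⟨a, ?_, hba⟩
        rcases Nat.lt_succ_iff_lt_or_eq.mp haD with h' | h'
        · exact h'
        · exact absurd (h' ▸ hba) (by simp [hD])
      rw [hz, mul_zero, mul_zero, mul_zero]; ring
    · have hsum := OM_sum3 (b D) hD
      rw [← add_mul, ← add_mul]
      push_cast
      rw [hsum, zero_mul]

lemma natdig (E : ℕ) : ∀ a b : ℕ, a < 3 ^ E → b < 3 ^ E →
    (∀ k, a / 3 ^ k % 3 = b / 3 ^ k % 3) → a = b := by
  induction E with
  | zero => intro a b ha hb _; simp at ha hb; omega
  | succ E ih =>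
    intro a b ha hb h
    have h0 := h 0
    simp at h0
    have hd : a / 3 = b / 3 := by
      apply ih _ _ (by rw [Nat.div_lt_iff_lt_mul (by norm_num)]; calc a < 3 ^ (E+1) := ha
                       _ = 3 ^ E * 3 := by ring)
        (by rw [Nat.div_lt_iff_lt_mul (by norm_num)]; calc b < 3 ^ (E+1) := hb
            _ = 3 ^ E * 3 := by ring)
      intro k
      have := h (k + 1)
      rwa [pow_succ', ← Nat.div_div_eq_div_mul, ← Nat.div_div_eq_div_mul] at this
    omega

end Stmt2Aux
namespace Stmt2Aux
open Finset

lemma tdig_lt_three (m : ℤ) (x : ℝ) : tdig m x < 3 := by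
  rw [tdig]
  have := Int.emod_lt_of_pos (⌊x * (3:ℝ) ^ (-m)⌋) (by norm_num : (0:ℤ) < 3)
  omega

lemma three_zpow_pos (k : ℤ) : (0:ℝ) < (3:ℝ) ^ k := zpow_pos (by norm_num) _

lemma mem_scale {t : ℕ} {K : ℤ} {x : ℝ}
    (hx : x ∈ Set.Ico ((t:ℝ) * (3:ℝ) ^ K) (((t:ℝ) + 1) * (3:ℝ) ^ K)) :
    (t:ℝ) ≤ x * (3:ℝ) ^ (-K) ∧ x * (3:ℝ) ^ (-K) < (t:ℝ) + 1 := by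
  obtain ⟨hx1, hx2⟩ := hx
  have hc : (3:ℝ) ^ K * (3:ℝ) ^ (-K) = 1 := by
    rw [← zpow_add₀ (by norm_num : (3:ℝ) ≠ 0)]; norm_num
  constructor
  · calc (t:ℝ) = (t:ℝ) * ((3:ℝ) ^ K * (3:ℝ) ^ (-K)) := by rw [hc, mul_one]
      _ = ((t:ℝ) * (3:ℝ) ^ K) * (3:ℝ) ^ (-K) := by ring
      _ ≤ x * (3:ℝ) ^ (-K) :=
          mul_le_mul_of_nonneg_right hx1 (le_of_lt (three_zpow_pos (-K)))
  · calc x * (3:ℝ) ^ (-K) < (((t:ℝ) + 1) * (3:ℝ) ^ K) * (3:ℝ) ^ (-K) :=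
          mul_lt_mul_of_pos_right hx2 (three_zpow_pos (-K))
      _ = ((t:ℝ) + 1) * ((3:ℝ) ^ K * (3:ℝ) ^ (-K)) := by ring
      _ = (t:ℝ) + 1 := by rw [hc, mul_one]

/-- Digit of a point of a triadic interval, at a scale at least that of the interval. -/
lemma tdig_of_mem {t : ℕ} {K k : ℤ} (hk : K ≤ k) {x : ℝ}
    (hx : x ∈ Set.Ico ((t:ℝ) * (3:ℝ) ^ K) (((t:ℝ) + 1) * (3:ℝ) ^ K)) :
    tdig k x = t / 3 ^ (k - K).toNat % 3 := by
  obtain ⟨hy1, hy2⟩ := mem_scale hx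
  set y : ℝ := x * (3:ℝ) ^ (-K) with hy
  set a : ℕ := (k - K).toNat with ha
  have hka : k = K + (a : ℤ) := by omega
  have h3a : (0:ℝ) < ((3:ℕ) ^ a : ℕ) := by positivity
  have hsplit : x * (3:ℝ) ^ (-k) = y / ((3:ℕ) ^ a : ℕ) := by
    rw [hy, hka, neg_add, zpow_add₀ (by norm_num : (3:ℝ) ≠ 0)]
    rw [zpow_neg (3:ℝ) (a:ℤ), zpow_natCast]
    push_cast
    ring
  have hfloor : ⌊x * (3:ℝ) ^ (-k)⌋ = ((t / 3 ^ a : ℕ) : ℤ) := by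
    rw [hsplit, Int.floor_eq_iff]
    constructor
    · have hle : t / 3 ^ a * 3 ^ a ≤ t := Nat.div_mul_le_self t (3 ^ a)
      have e1 : (((t / 3 ^ a : ℕ) : ℤ) : ℝ) * ((3 ^ a : ℕ) : ℝ) = ((t / 3 ^ a * 3 ^ a : ℕ) : ℝ) := by
        norm_cast
      rw [le_div_iff₀ h3a, e1]
      calc ((t / 3 ^ a * 3 ^ a : ℕ) : ℝ) ≤ (t : ℝ) := Nat.cast_le.mpr hle
        _ ≤ y := hy1
    · have hn : t + 1 ≤ (t / 3 ^ a + 1) * 3 ^ a := by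
        have := Nat.div_add_mod t (3 ^ a)
        have h2 : t % 3 ^ a < 3 ^ a := Nat.mod_lt t (by positivity)
        nlinarith
      have e2 : ((((t / 3 ^ a : ℕ) : ℤ) : ℝ) + 1) * ((3 ^ a : ℕ) : ℝ)
          = (((t / 3 ^ a + 1) * 3 ^ a : ℕ) : ℝ) := by norm_cast
      rw [div_lt_iff₀ h3a, e2]
      calc y < (t:ℝ) + 1 := hy2
        _ = ((t + 1 : ℕ) : ℝ) := by push_cast; ring
        _ ≤ _ := Nat.cast_le.mpr hn
  rw [tdig, hfloor]
  omega

/-- Digits of `j·3^(-n)` vanish below scale `-n`. -/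
lemma tdig_zero_of_lt {j : ℕ} {n m : ℤ} (hm : m < -n) : tdig m ((j:ℝ) * (3:ℝ) ^ (-n)) = 0 := by
  set p : ℕ := (-n - m).toNat with hp
  have hp1 : 1 ≤ p := by omega
  have hval : (j:ℝ) * (3:ℝ) ^ (-n) * (3:ℝ) ^ (-m) = ((j * 3 ^ p : ℕ) : ℝ) := by
    rw [mul_assoc, ← zpow_add₀ (by norm_num : (3:ℝ) ≠ 0)]
    push_cast
    rw [show -n + -m = (p : ℤ) by omega, zpow_natCast]
  rw [tdig, hval, Int.floor_natCast]
  have hdvd : (3:ℤ) ∣ ((j * 3 ^ p : ℕ) : ℤ) := by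
    push_cast
    exact Dvd.dvd.mul_left (dvd_pow_self 3 (by omega)) _
  omega

/-- Digits of `j·3^(-n)` vanish at scale `j - n` and above. -/
lemma tdig_zero_of_ge {j : ℕ} {n m : ℤ} (hm : (j:ℤ) - n ≤ m) :
    tdig m ((j:ℝ) * (3:ℝ) ^ (-n)) = 0 := by
  have hlt : (j:ℝ) * (3:ℝ) ^ (-n) * (3:ℝ) ^ (-m) < 1 := by
    rcases Nat.eq_zero_or_pos j with hj | hj
    · subst hj; simp
    have h1 : (j:ℝ) < (3:ℝ) ^ (n + m) := by
      have h2 : j < 3 ^ j := Nat.lt_pow_self (by norm_num)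
      have h3 : (3:ℝ) ^ (j : ℤ) ≤ (3:ℝ) ^ (n + m) := by
        apply zpow_le_zpow_right₀ (by norm_num)
        omega
      calc (j:ℝ) < ((3 ^ j : ℕ) : ℝ) := by exact_mod_cast h2
        _ = (3:ℝ) ^ (j : ℤ) := by push_cast [zpow_natCast]; ring
        _ ≤ (3:ℝ) ^ (n + m) := h3
    have hpos := three_zpow_pos (n + m)
    rw [mul_assoc, ← zpow_add₀ (by norm_num : (3:ℝ) ≠ 0)]
    rw [show -n + -m = -(n + m) by ring, zpow_neg]
    rw [mul_inv_lt_iff₀ hpos, one_mul]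
    exact h1
  have hge : (0:ℝ) ≤ (j:ℝ) * (3:ℝ) ^ (-n) * (3:ℝ) ^ (-m) := by positivity
  rw [tdig, Int.floor_eq_zero_iff.mpr ⟨hge, hlt⟩]
  rfl

end Stmt2Aux
namespace Stmt2Aux
open Finset MeasureTheory

lemma wexp_sum (xi x : ℝ) (s : Finset ℤ) (hs : ∀ m ∉ s, tdig m xi = 0) :
    wexp xi x = om3 ^ (∑ m ∈ s, tdig m xi * tdig (-1 - m) x) := by
  rw [wexp]
  congr 1
  apply finsum_eq_sum_of_support_subset
  intro m hm
  simp only [Function.mem_support, ne_eq] at hm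
  by_contra hms
  exact hm (by rw [hs m hms, zero_mul])

lemma conj_om3 : (starRingEnd ℂ) om3 = om3 ^ 2 := by
  have h1 : om3 * om3 ^ 2 = 1 := by
    rw [← pow_succ']
    exact om3_pow_three
  have hz : (starRingEnd ℂ) (2 * (Real.pi:ℂ) * Complex.I / 3)
      = -(2 * (Real.pi:ℂ) * Complex.I / 3) := by
    simp only [map_div₀, map_mul, map_ofNat, Complex.conj_I, Complex.conj_ofReal]
    ring
  have h2 : (starRingEnd ℂ) om3 * om3 = 1 := by
    rw [om3, ← Complex.exp_conj, ← Complex.exp_add, hz]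
    rw [neg_add_cancel, Complex.exp_zero]
  have h3 : (starRingEnd ℂ) om3 = om3⁻¹ := eq_inv_of_mul_eq_one_left h2
  have h4 : om3⁻¹ = om3 ^ 2 := inv_eq_of_mul_eq_one_right h1
  rw [h3, h4]

lemma conj_om3_pow (e : ℕ) : (starRingEnd ℂ) (om3 ^ e) = om3 ^ (2 * e) := by
  rw [map_pow, conj_om3, ← pow_mul, mul_comm]

lemma conj_three_zpow (n : ℤ) : (starRingEnd ℂ) ((3:ℂ) ^ n) = (3:ℂ) ^ n := by
  rw [map_zpow₀, map_ofNat]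

/-- Integral of a piecewise constant function over a partition of `[N·h, (N+T)·h)`. -/
lemma integral_partition (h : ℝ) (hh : 0 < h) (G : ℝ → ℂ) (v : ℕ → ℂ) :
    ∀ (T N : ℕ),
      (∀ t, t < T → ∀ x ∈ Set.Ico ((((N + t : ℕ)) : ℝ) * h) ((((N + t : ℕ) : ℝ) + 1) * h),
        G x = v t) →
      IntegrableOn G (Set.Ico ((N : ℝ) * h) (((N : ℝ) + T) * h)) ∧
        ∫ x in Set.Ico ((N : ℝ) * h) (((N : ℝ) + T) * h), G x = ∑ t ∈ range T, h • v t := by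
  intro T
  induction T with
  | zero =>
    intro N _
    norm_num
  | succ T ih =>
    intro N hv
    obtain ⟨ihi, ihe⟩ := ih N (fun t ht => hv t (by omega))
    have hab : (N : ℝ) * h ≤ ((N : ℝ) + T) * h := by nlinarith [Nat.cast_nonneg (α := ℝ) T]
    have hbc : ((N : ℝ) + T) * h ≤ ((N : ℝ) + (T + 1 : ℕ)) * h := by
      push_cast
      nlinarith
    have hunion : Set.Ico ((N : ℝ) * h) (((N : ℝ) + (T + 1 : ℕ)) * h)
        = Set.Ico ((N : ℝ) * h) (((N : ℝ) + T) * h)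
          ∪ Set.Ico (((N : ℝ) + T) * h) (((N : ℝ) + (T + 1 : ℕ)) * h) := by
      rw [Set.Ico_union_Ico_eq_Ico hab hbc]
    have heq : Set.EqOn G (fun _ => v T) (Set.Ico (((N : ℝ) + T) * h) (((N : ℝ) + (T + 1 : ℕ)) * h)) := by
      intro x hx
      apply hv T (by omega)
      constructor
      · calc (((N + T : ℕ)) : ℝ) * h = ((N : ℝ) + T) * h := by push_cast; ring
          _ ≤ x := hx.1
      · calc x < ((N : ℝ) + (T + 1 : ℕ)) * h := hx.2
          _ = (((N + T : ℕ) : ℝ) + 1) * h := by push_cast; ring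
    have hlast_int : IntegrableOn G (Set.Ico (((N : ℝ) + T) * h) (((N : ℝ) + (T + 1 : ℕ)) * h)) := by
      rw [integrableOn_congr_fun heq measurableSet_Ico]
      apply (integrableOn_const_iff (C := v T) (by finiteness)).mpr
      right
      exact measure_Ico_lt_top
    have hlast_val : ∫ x in Set.Ico (((N : ℝ) + T) * h) (((N : ℝ) + (T + 1 : ℕ)) * h), G x = h • v T := by
      rw [setIntegral_congr_fun measurableSet_Ico heq, setIntegral_const]
      congr 1
      rw [measureReal_def, Real.volume_Ico, ENNReal.toReal_ofReal (by linarith)]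
      push_cast
      ring
    constructor
    · rw [hunion]
      exact ihi.union hlast_int
    · rw [hunion, setIntegral_union (Set.Ico_disjoint_Ico_same) measurableSet_Ico
        ihi hlast_int, ihe, hlast_val, Finset.sum_range_succ]

/-- Triadic nesting: containment case. -/
lemma triadic_subset {n n' : ℤ} (hnn : n ≤ n') {i i' : ℕ} (h : i / 3 ^ (n' - n).toNat = i') :
    Set.Ico ((i : ℝ) * (3:ℝ) ^ n) (((i : ℝ) + 1) * (3:ℝ) ^ n)
      ⊆ Set.Ico ((i' : ℝ) * (3:ℝ) ^ n') (((i' : ℝ) + 1) * (3:ℝ) ^ n') := by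
  set e : ℕ := (n' - n).toNat with he
  have h3 : (3:ℝ) ^ n' = ((3 ^ e : ℕ) : ℝ) * (3:ℝ) ^ n := by
    push_cast
    rw [← zpow_natCast (3:ℝ) e, ← zpow_add₀ (by norm_num : (3:ℝ) ≠ 0)]
    congr 1
    omega
  have hlo : i' * 3 ^ e ≤ i := by rw [← h]; exact Nat.div_mul_le_self i (3 ^ e)
  have hhi : i + 1 ≤ (i' + 1) * 3 ^ e := by
    have h1 := Nat.div_add_mod i (3 ^ e)
    have h2 : i % 3 ^ e < 3 ^ e := Nat.mod_lt i (by positivity)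
    nlinarith [h.symm ▸ h1]
  intro x hx
  obtain ⟨hx1, hx2⟩ := hx
  have h3n := three_zpow_pos n
  constructor
  · rw [h3]
    calc (i' : ℝ) * (((3 ^ e : ℕ) : ℝ) * (3:ℝ) ^ n)
          = ((i' * 3 ^ e : ℕ) : ℝ) * (3:ℝ) ^ n := by push_cast; ring
      _ ≤ (i : ℝ) * (3:ℝ) ^ n := by
        apply mul_le_mul_of_nonneg_right _ (le_of_lt h3n)
        exact_mod_cast hlo
      _ ≤ x := hx1
  · rw [h3]
    calc x < ((i : ℝ) + 1) * (3:ℝ) ^ n := hx2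
      _ = ((i + 1 : ℕ) : ℝ) * (3:ℝ) ^ n := by push_cast; ring
      _ ≤ (((i' + 1) * 3 ^ e : ℕ) : ℝ) * (3:ℝ) ^ n := by
        apply mul_le_mul_of_nonneg_right _ (le_of_lt h3n)
        exact_mod_cast hhi
      _ = ((i' : ℝ) + 1) * (((3 ^ e : ℕ) : ℝ) * (3:ℝ) ^ n) := by push_cast; ring

/-- Triadic nesting: disjointness case. -/
lemma triadic_disjoint {n n' : ℤ} (hnn : n ≤ n') {i i' : ℕ} (h : i / 3 ^ (n' - n).toNat ≠ i') :
    Disjoint (Set.Ico ((i : ℝ) * (3:ℝ) ^ n) (((i : ℝ) + 1) * (3:ℝ) ^ n))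
      (Set.Ico ((i' : ℝ) * (3:ℝ) ^ n') (((i' : ℝ) + 1) * (3:ℝ) ^ n')) := by
  set e : ℕ := (n' - n).toNat with he
  have h3 : (3:ℝ) ^ n' = ((3 ^ e : ℕ) : ℝ) * (3:ℝ) ^ n := by
    push_cast
    rw [← zpow_natCast (3:ℝ) e, ← zpow_add₀ (by norm_num : (3:ℝ) ≠ 0)]
    congr 1
    omega
  have h3n := three_zpow_pos n
  rw [Set.disjoint_left]
  rintro x ⟨hx1, hx2⟩ ⟨hy1, hy2⟩
  have h1 := Nat.div_add_mod i (3 ^ e)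
  have h2 : i % 3 ^ e < 3 ^ e := Nat.mod_lt i (by positivity)
  rcases lt_or_gt_of_ne h with hlt | hgt
  · -- i / 3^e < i' : x < (i+1)·3^n ≤ i'·3^e·3^n ≤ x, contradiction
    have h4 : i / 3 ^ e + 1 ≤ i' := hlt
    have h5 : 3 ^ e * (i / 3 ^ e + 1) ≤ 3 ^ e * i' := Nat.mul_le_mul_left _ h4
    have h6 : i + 1 ≤ 3 ^ e * (i / 3 ^ e) + 3 ^ e := by linarith
    have hn : i + 1 ≤ i' * 3 ^ e := by linarith [h5, h6]
    have : x < (i' : ℝ) * (3:ℝ) ^ n' := by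
      rw [h3]
      calc x < ((i : ℝ) + 1) * (3:ℝ) ^ n := hx2
        _ = ((i + 1 : ℕ) : ℝ) * (3:ℝ) ^ n := by push_cast; ring
        _ ≤ ((i' * 3 ^ e : ℕ) : ℝ) * (3:ℝ) ^ n := by
          apply mul_le_mul_of_nonneg_right _ (le_of_lt h3n)
          exact_mod_cast hn
        _ = (i' : ℝ) * (((3 ^ e : ℕ) : ℝ) * (3:ℝ) ^ n) := by push_cast; ring
    linarith
  · -- i' < i / 3^e : x ≥ i·3^n ≥ (i'+1)·3^e·3^n > x
    have h4 : i' + 1 ≤ i / 3 ^ e := hgt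
    have h5 : 3 ^ e * (i' + 1) ≤ 3 ^ e * (i / 3 ^ e) := Nat.mul_le_mul_left _ h4
    have h6 : i / 3 ^ e * 3 ^ e ≤ i := Nat.div_mul_le_self i (3 ^ e)
    have hn : (i' + 1) * 3 ^ e ≤ i := by linarith [h5, h6]
    have : ((i' : ℝ) + 1) * (3:ℝ) ^ n' ≤ x := by
      rw [h3]
      calc ((i' : ℝ) + 1) * (((3 ^ e : ℕ) : ℝ) * (3:ℝ) ^ n)
          = (((i' + 1) * 3 ^ e : ℕ) : ℝ) * (3:ℝ) ^ n := by push_cast; ring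
        _ ≤ ((i : ℕ) : ℝ) * (3:ℝ) ^ n := by
          apply mul_le_mul_of_nonneg_right _ (le_of_lt h3n)
          exact_mod_cast hn
        _ ≤ x := hx1
    linarith

end Stmt2Aux
namespace Stmt2Aux
open Finset MeasureTheory

lemma left_mem (t : ℕ) (K : ℤ) :
    (t:ℝ) * (3:ℝ) ^ K ∈ Set.Ico ((t:ℝ) * (3:ℝ) ^ K) (((t:ℝ) + 1) * (3:ℝ) ^ K) := by
  refine ⟨le_rfl, ?_⟩
  have := three_zpow_pos K
  nlinarith

lemma freq_mem (R : Tile) :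
    R.freq ∈ Set.Ico ((R.j:ℝ) * (3:ℝ) ^ (-R.n)) (((R.j:ℝ) + 1) * (3:ℝ) ^ (-R.n)) :=
  left_mem R.j (-R.n)

lemma tdig_freq (R : Tile) (m : ℤ) (hm : -R.n ≤ m) :
    tdig m R.freq = R.j / 3 ^ (m + R.n).toNat % 3 := by
  have h := tdig_of_mem (t := R.j) (K := -R.n) (k := m) (by omega) (freq_mem R)
  rw [show m - -R.n = m + R.n by ring] at h
  exact h

lemma tdig_freqQ (P Q : Tile) (hn : P.n ≤ Q.n) (m : ℤ) (hm : -P.n ≤ m) :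
    tdig m Q.freq = (Q.j / 3 ^ (Q.n - P.n).toNat) / 3 ^ (m + P.n).toNat % 3 := by
  rw [tdig_freq Q m (by omega), Nat.div_div_eq_div_mul, ← pow_add]
  have h2 : (Q.n - P.n).toNat + (m + P.n).toNat = (m + Q.n).toNat := by omega
  rw [h2]

lemma digits_eq_of_nested (P Q : Tile) (hn : P.n ≤ Q.n)
    (hJ : Q.j / 3 ^ (Q.n - P.n).toNat = P.j) (m : ℤ) (hm : -P.n ≤ m) :
    tdig m P.freq = tdig m Q.freq := by
  rw [tdig_freq P m hm, tdig_freqQ P Q hn m hm, hJ]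

lemma digits_ne_of_not_nested (P Q : Tile) (hn : P.n ≤ Q.n)
    (hJ : Q.j / 3 ^ (Q.n - P.n).toNat ≠ P.j) :
    ∃ m : ℤ, -P.n ≤ m ∧ tdig m P.freq ≠ tdig m Q.freq := by
  set B := Q.j / 3 ^ (Q.n - P.n).toNat with hB
  set E := max P.j Q.j with hE
  have hPE : P.j < 3 ^ E :=
    lt_of_lt_of_le (Nat.lt_pow_self (n := P.j) (by norm_num : 1 < 3))
      (Nat.pow_le_pow_right (by norm_num) (le_max_left _ _))
  have hBE : B < 3 ^ E :=
    lt_of_le_of_lt (Nat.div_le_self _ _)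
      (lt_of_lt_of_le (Nat.lt_pow_self (n := Q.j) (by norm_num : 1 < 3))
        (Nat.pow_le_pow_right (by norm_num) (le_max_right _ _)))
  have hne : ¬ ∀ k, P.j / 3 ^ k % 3 = B / 3 ^ k % 3 := by
    intro hall
    exact hJ (natdig E B P.j hBE hPE (fun k => (hall k).symm))
  push_neg at hne
  obtain ⟨k, hk⟩ := hne
  refine ⟨(k:ℤ) - P.n, by omega, ?_⟩
  rw [tdig_freq P _ (by omega), tdig_freqQ P Q hn _ (by omega)]
  rw [show ((k:ℤ) - P.n + P.n).toNat = k by omega]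
  exact hk

lemma cfn_cast_ne_zero {dP dQ : ℕ} (h : dP ≠ dQ) (h1 : dP < 3) (h2 : dQ < 3) :
    ((dP + 2 * dQ : ℕ) : ZMod 3) ≠ 0 := by
  interval_cases dP <;> interval_cases dQ <;> simp_all <;> decide

lemma om3_pow_congr {a b : ℕ} (h : ((a : ℕ) : ZMod 3) = (b : ℕ)) : om3 ^ a = om3 ^ b := by
  rw [← OM_natCast, ← OM_natCast, h]

/-- `(i·3^D + t) / 3^a = i / 3^(a-D)` when `t < 3^D ≤ 3^a`. -/
lemma ndiv_coarse (i t D a : ℕ) (ht : t < 3 ^ D) (ha : D ≤ a) :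
    (i * 3 ^ D + t) / 3 ^ a = i / 3 ^ (a - D) := by
  rw [show (3:ℕ) ^ a = 3 ^ D * 3 ^ (a - D) by rw [← pow_add]; congr 1; omega]
  rw [← Nat.div_div_eq_div_mul]
  congr 1
  rw [add_comm, Nat.add_mul_div_right _ _ (by positivity : 0 < 3 ^ D)]
  rw [Nat.div_eq_of_lt ht, zero_add]

lemma integrand_zero (P Q : Tile) (x : ℝ) (hx : x ∉ P.I) :
    wp P x * (starRingEnd ℂ) (wp Q x) = 0 := by
  rw [wp, if_neg hx, zero_mul]

lemma integrand_zero' (P Q : Tile) (x : ℝ) (hx : x ∉ Q.I) :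
    wp P x * (starRingEnd ℂ) (wp Q x) = 0 := by
  simp only [wp, if_neg hx, map_zero, mul_zero]

end Stmt2Aux
namespace Stmt2Aux
open Finset MeasureTheory

lemma supp_aux (P Q : Tile) (hn : P.n ≤ Q.n) :
    (∀ m ∉ Finset.Icc (-Q.n) (max ((P.j:ℤ) - P.n) ((Q.j:ℤ) - Q.n) - 1), tdig m P.freq = 0)
      ∧ ∀ m ∉ Finset.Icc (-Q.n) (max ((P.j:ℤ) - P.n) ((Q.j:ℤ) - Q.n) - 1),
          tdig m Q.freq = 0 := by
  constructor <;>
  · intro m hm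
    rw [Finset.mem_Icc] at hm
    push_neg at hm
    first
    | · show tdig m ((P.j:ℝ) * (3:ℝ) ^ (-P.n)) = 0
        by_cases h1 : m < -P.n
        · exact tdig_zero_of_lt h1
        · refine tdig_zero_of_ge ?_
          rcases lt_or_ge m (-Q.n) with h2 | h2
          · omega
          · have := hm h2
            have h3 : max ((P.j:ℤ) - P.n) ((Q.j:ℤ) - Q.n) ≤ m := by omega
            have h4 : (P.j:ℤ) - P.n ≤ max ((P.j:ℤ) - P.n) ((Q.j:ℤ) - Q.n) := le_max_left _ _
            omega
    | · show tdig m ((Q.j:ℝ) * (3:ℝ) ^ (-Q.n)) = 0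
        by_cases h1 : m < -Q.n
        · exact tdig_zero_of_lt h1
        · refine tdig_zero_of_ge ?_
          push_neg at h1
          have := hm h1
          have h4 : (Q.j:ℤ) - Q.n ≤ max ((P.j:ℤ) - P.n) ((Q.j:ℤ) - Q.n) := le_max_right _ _
          omega

lemma integrand_eq (P Q : Tile) (hn : P.n ≤ Q.n) (hsub : P.I ⊆ Q.I) (x : ℝ) (hx : x ∈ P.I) :
    wp P x * (starRingEnd ℂ) (wp Q x)
      = ((3:ℂ) ^ (-P.n) * (3:ℂ) ^ (-Q.n)) * om3 ^
          (∑ m ∈ Finset.Icc (-Q.n) (max ((P.j:ℤ) - P.n) ((Q.j:ℤ) - Q.n) - 1),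
            (tdig m P.freq + 2 * tdig m Q.freq) * tdig (-1 - m) x) := by
  obtain ⟨hPsupp, hQsupp⟩ := supp_aux P Q hn
  set s := Finset.Icc (-Q.n) (max ((P.j:ℤ) - P.n) ((Q.j:ℤ) - Q.n) - 1) with hs
  simp only [wp, if_pos hx, if_pos (hsub hx)]
  rw [map_mul, conj_three_zpow, wexp_sum P.freq x s hPsupp, wexp_sum Q.freq x s hQsupp,
    conj_om3_pow]
  have hE : (∑ m ∈ s, (tdig m P.freq + 2 * tdig m Q.freq) * tdig (-1 - m) x)
      = (∑ m ∈ s, tdig m P.freq * tdig (-1 - m) x)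
        + 2 * (∑ m ∈ s, tdig m Q.freq * tdig (-1 - m) x) := by
    rw [Finset.mul_sum, ← Finset.sum_add_distrib]
    exact Finset.sum_congr rfl fun m _ => by ring
  rw [hE, pow_add]
  ring

end Stmt2Aux
namespace Stmt2Aux
open Finset MeasureTheory

lemma integral_nested (P Q : Tile) (hn : P.n ≤ Q.n) (hsub : P.I ⊆ Q.I)
    (hJ : Q.j / 3 ^ (Q.n - P.n).toNat = P.j) :
    ∫ x, wp P x * (starRingEnd ℂ) (wp Q x) ≠ 0 := by
  set x0 : ℝ := (P.i:ℝ) * (3:ℝ) ^ P.n with hx0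
  have hx0mem : x0 ∈ P.I := left_mem P.i P.n
  set C0 : ℂ := ((3:ℂ) ^ (-P.n) * (3:ℂ) ^ (-Q.n)) * om3 ^
      (∑ m ∈ Finset.Icc (-Q.n) (max ((P.j:ℤ) - P.n) ((Q.j:ℤ) - Q.n) - 1),
        (tdig m P.freq + 2 * tdig m Q.freq) * tdig (-1 - m) x0) with hC0
  have hconst : ∀ x ∈ P.I,
      om3 ^ (∑ m ∈ Finset.Icc (-Q.n) (max ((P.j:ℤ) - P.n) ((Q.j:ℤ) - Q.n) - 1),
        (tdig m P.freq + 2 * tdig m Q.freq) * tdig (-1 - m) x)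
      = om3 ^ (∑ m ∈ Finset.Icc (-Q.n) (max ((P.j:ℤ) - P.n) ((Q.j:ℤ) - Q.n) - 1),
        (tdig m P.freq + 2 * tdig m Q.freq) * tdig (-1 - m) x0) := by
    intro x hx
    apply om3_pow_congr
    push_cast
    apply Finset.sum_congr rfl
    intro m hms
    by_cases hm : -P.n ≤ m
    · have hdig := digits_eq_of_nested P Q hn hJ m hm
      have hcoef : ((tdig m P.freq : ZMod 3) + 2 * (tdig m Q.freq : ZMod 3)) = 0 := by
        rw [hdig]
        have h3 : ((tdig m Q.freq : ZMod 3) + 2 * (tdig m Q.freq : ZMod 3))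
            = 3 * (tdig m Q.freq : ZMod 3) := by ring
        rw [h3, show (3 : ZMod 3) = 0 by decide, zero_mul]
      rw [hcoef, zero_mul, zero_mul]
    · have hk : P.n ≤ -1 - m := by omega
      have hd1 : tdig (-1 - m) x = P.i / 3 ^ (-1 - m - P.n).toNat % 3 :=
        tdig_of_mem hk hx
      have hd2 : tdig (-1 - m) x0 = P.i / 3 ^ (-1 - m - P.n).toNat % 3 :=
        tdig_of_mem hk hx0mem
      rw [hd1, hd2]
  have hpt : ∀ x, wp P x * (starRingEnd ℂ) (wp Q x) = Set.indicator P.I (fun _ => C0) x := by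
    intro x
    rw [Set.indicator_apply]
    split_ifs with hx
    · rw [integrand_eq P Q hn hsub x hx, hconst x hx]
    · exact integrand_zero P Q x hx
  have hint : ∫ x, wp P x * (starRingEnd ℂ) (wp Q x)
      = ∫ x, Set.indicator P.I (fun _ => C0) x :=
    integral_congr_ae (Filter.Eventually.of_forall hpt)
  rw [hint, integral_indicator_const _ (by exact measurableSet_Ico)]
  have hvol : (MeasureTheory.volume (P.I)).toReal = (3:ℝ) ^ P.n := by
    show (MeasureTheory.volume (Set.Ico ((P.i:ℝ) * (3:ℝ) ^ P.n) (((P.i:ℝ) + 1) * (3:ℝ) ^ P.n))).toReal = _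
    rw [Real.volume_Ico, ENNReal.toReal_ofReal (by nlinarith [three_zpow_pos P.n])]
    ring
  rw [measureReal_def, hvol]
  apply smul_ne_zero (ne_of_gt (three_zpow_pos P.n))
  apply mul_ne_zero
  · exact mul_ne_zero (zpow_ne_zero _ (by norm_num)) (zpow_ne_zero _ (by norm_num))
  · exact pow_ne_zero _ om3_ne_zero

end Stmt2Aux
namespace Stmt2Aux
open Finset MeasureTheory

lemma integral_mismatch (P Q : Tile) (hn : P.n ≤ Q.n) (hsub : P.I ⊆ Q.I)
    (hJ : Q.j / 3 ^ (Q.n - P.n).toNat ≠ P.j) :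
    ∫ x, wp P x * (starRingEnd ℂ) (wp Q x) = 0 := by
  set M : ℤ := max ((P.j:ℤ) - P.n) ((Q.j:ℤ) - Q.n) with hMdef
  have hM : -P.n ≤ M := le_trans (by omega) (le_max_left _ _)
  obtain ⟨m0, hm0, hdne⟩ := digits_ne_of_not_nested P Q hn hJ
  have hm0M : m0 < M := by
    by_contra hc
    push_neg at hc
    have hP0 : tdig m0 P.freq = 0 := by
      show tdig m0 ((P.j:ℝ) * (3:ℝ) ^ (-P.n)) = 0
      refine tdig_zero_of_ge ?_
      have := le_max_left ((P.j:ℤ) - P.n) ((Q.j:ℤ) - Q.n)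
      omega
    have hQ0 : tdig m0 Q.freq = 0 := by
      show tdig m0 ((Q.j:ℝ) * (3:ℝ) ^ (-Q.n)) = 0
      refine tdig_zero_of_ge ?_
      have := le_max_right ((P.j:ℤ) - P.n) ((Q.j:ℤ) - Q.n)
      omega
    exact hdne (hP0.trans hQ0.symm)
  set D : ℕ := (P.n + M).toNat with hDdef
  have hD : (D:ℤ) = P.n + M := by omega
  set T : ℕ := 3 ^ D with hTdef
  set N : ℕ := P.i * 3 ^ D with hNdef
  set c1 : ℂ := (3:ℂ) ^ (-P.n) * (3:ℂ) ^ (-Q.n) with hc1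
  set G : ℝ → ℂ := fun x => c1 * om3 ^
      (∑ m ∈ Finset.Icc (-Q.n) (M - 1),
        (tdig m P.freq + 2 * tdig m Q.freq) * tdig (-1 - m) x) with hG
  set g : ℕ → ℕ := fun t => ∑ m ∈ Finset.Icc (-Q.n) (M - 1),
      (tdig m P.freq + 2 * tdig m Q.freq) * ((N + t) / 3 ^ (M - 1 - m).toNat % 3) with hg
  set v : ℕ → ℂ := fun t => c1 * om3 ^ g t with hv
  -- PART hypothesis
  have hyp : ∀ t, t < T → ∀ x ∈ Set.Ico ((((N + t : ℕ)) : ℝ) * (3:ℝ) ^ (-M))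
      ((((N + t : ℕ) : ℝ) + 1) * (3:ℝ) ^ (-M)), G x = v t := by
    intro t ht x hx
    have hsum : (∑ m ∈ Finset.Icc (-Q.n) (M - 1),
          (tdig m P.freq + 2 * tdig m Q.freq) * tdig (-1 - m) x)
        = ∑ m ∈ Finset.Icc (-Q.n) (M - 1),
            (tdig m P.freq + 2 * tdig m Q.freq) * ((N + t) / 3 ^ (M - 1 - m).toNat % 3) := by
      apply Finset.sum_congr rfl
      intro m hms
      rw [Finset.mem_Icc] at hms
      have hk : -M ≤ -1 - m := by omega
      have hd := tdig_of_mem (t := N + t) (K := -M) (k := -1 - m) hk hx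
      rw [show -1 - m - -M = M - 1 - m by ring] at hd
      rw [hd]
    simp only [hG, hv, hg]
    rw [hsum]
  obtain ⟨hGint, hGval⟩ :=
    integral_partition ((3:ℝ) ^ (-M)) (three_zpow_pos _) G v T N hyp
  -- identify P.I with the partition interval
  have h3DM : (((3:ℕ) ^ D : ℕ) : ℝ) * (3:ℝ) ^ (-M) = (3:ℝ) ^ P.n := by
    push_cast
    rw [← zpow_natCast (3:ℝ) D, ← zpow_add₀ (by norm_num : (3:ℝ) ≠ 0)]
    congr 1
    omega
  have e3 : (3:ℝ) ^ P.n = (3:ℝ) ^ (D:ℤ) * (3:ℝ) ^ (-M) := by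
    rw [← zpow_add₀ (by norm_num : (3:ℝ) ≠ 0)]
    congr 1
    omega
  have hsetI : P.I = Set.Ico ((N : ℝ) * (3:ℝ) ^ (-M)) (((N : ℝ) + (T:ℕ)) * (3:ℝ) ^ (-M)) := by
    show Set.Ico ((P.i : ℝ) * (3:ℝ) ^ P.n) (((P.i : ℝ) + 1) * (3:ℝ) ^ P.n) = _
    rw [hNdef, hTdef, e3]
    push_cast [zpow_natCast]
    congr 1 <;> ring
  -- pointwise identification of the integrand
  have hpt : ∀ x, wp P x * (starRingEnd ℂ) (wp Q x) = Set.indicator P.I G x := by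
    intro x
    rw [Set.indicator_apply]
    split_ifs with hx
    · rw [integrand_eq P Q hn hsub x hx, hG, hc1]
    · exact integrand_zero P Q x hx
  have hint : ∫ x, wp P x * (starRingEnd ℂ) (wp Q x) = ∫ x in P.I, G x := by
    rw [integral_congr_ae (Filter.Eventually.of_forall hpt),
      integral_indicator (by show MeasurableSet (Set.Ico _ _); exact measurableSet_Ico)]
  rw [hint, hsetI, hGval]
  -- now show the finite sum vanishes
  set b : ℕ → ZMod 3 := fun a =>
      ((tdig (M - 1 - (a:ℤ)) P.freq + 2 * tdig (M - 1 - (a:ℤ)) Q.freq : ℕ) : ZMod 3) with hb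
  set CC : ZMod 3 := ∑ m ∈ Finset.Icc (-Q.n) (-P.n - 1),
      ((tdig m P.freq + 2 * tdig m Q.freq : ℕ) : ZMod 3)
        * ((P.i / 3 ^ ((M - 1 - m).toNat - D) % 3 : ℕ) : ZMod 3) with hCC
  have hgt : ∀ t, t < T → ((g t : ℕ) : ZMod 3)
      = CC + ∑ a ∈ range D, b a * ((t / 3 ^ a % 3 : ℕ) : ZMod 3) := by
    intro t ht
    rw [hg]
    push_cast
    rw [← Finset.sum_filter_add_sum_filter_not (Finset.Icc (-Q.n) (M - 1)) (fun m => m < -P.n)]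
    congr 1
    · -- coarse part equals CC
      have hfil : (Finset.Icc (-Q.n) (M - 1)).filter (fun m => m < -P.n)
          = Finset.Icc (-Q.n) (-P.n - 1) := by
        ext k
        simp only [Finset.mem_filter, Finset.mem_Icc]
        omega
      rw [hfil, hCC]
      apply Finset.sum_congr rfl
      intro m hms
      rw [Finset.mem_Icc] at hms
      have hge : D ≤ (M - 1 - m).toNat := by omega
      have hdiv : (N + t) / 3 ^ (M - 1 - m).toNat = P.i / 3 ^ ((M - 1 - m).toNat - D) := by
        rw [hNdef]
        exact ndiv_coarse P.i t D _ (by rw [hTdef] at ht; exact ht) hge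
      rw [hdiv]
      push_cast
      ring
    · -- fine part
      have hfil : (Finset.Icc (-Q.n) (M - 1)).filter (fun m => ¬ m < -P.n)
          = Finset.Icc (-P.n) (M - 1) := by
        ext k
        simp only [Finset.mem_filter, Finset.mem_Icc]
        omega
      rw [hfil]
      apply Finset.sum_nbij' (i := fun m => (M - 1 - m).toNat) (j := fun a => M - 1 - (a:ℤ))
      · intro m hms
        rw [Finset.mem_Icc] at hms
        rw [Finset.mem_range]
        omega
      · intro a ha
        rw [Finset.mem_range] at ha
        rw [Finset.mem_Icc]
        omega
      · intro m hms
        rw [Finset.mem_Icc] at hms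
        omega
      · intro a ha
        rw [Finset.mem_range] at ha
        omega
      · intro m hms
        rw [Finset.mem_Icc] at hms
        simp only [hb]
        have harg : M - 1 - (((M - 1 - m).toNat : ℕ) : ℤ) = m := by omega
        rw [harg]
        have hdig : (N + t) / 3 ^ (M - 1 - m).toNat % 3 = t / 3 ^ (M - 1 - m).toNat % 3 := by
          rw [hNdef]
          exact dig_add_mul P.i t _ D (by omega)
        rw [hdig]
        push_cast
        ring
  have hzero : ∑ t ∈ range T, om3 ^ g t = 0 := by
    have hrw : ∀ t ∈ range T, om3 ^ g t
        = OM CC * OM (∑ a ∈ range D, b a * ((t / 3 ^ a % 3 : ℕ) : ZMod 3)) := by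
      intro t ht
      rw [← OM_natCast, hgt t (Finset.mem_range.mp ht), OM_add]
    rw [Finset.sum_congr rfl hrw, ← Finset.mul_sum]
    have hsz : ∑ t ∈ range (3 ^ D), OM (∑ a ∈ range D, b a * ((t / 3 ^ a % 3 : ℕ) : ZMod 3)) = 0 := by
      apply sumzero
      refine ⟨(M - 1 - m0).toNat, by omega, ?_⟩
      simp only [hb]
      have harg : M - 1 - (((M - 1 - m0).toNat : ℕ) : ℤ) = m0 := by omega
      rw [harg]
      exact cfn_cast_ne_zero hdne (tdig_lt_three _ _) (tdig_lt_three _ _)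
    rw [hTdef, hsz, mul_zero]
  rw [← Finset.smul_sum]
  have : ∑ t ∈ range T, v t = 0 := by
    rw [hv, ← Finset.mul_sum, hzero, mul_zero]
  rw [this, smul_zero]

end Stmt2Aux
namespace Stmt2Aux
open Finset MeasureTheory

lemma key (P Q : Tile) (hn : P.n ≤ Q.n) :
    Disjoint P.rect Q.rect ↔ ∫ x, wp P x * (starRingEnd ℂ) (wp Q x) = 0 := by
  by_cases hI : P.i / 3 ^ (Q.n - P.n).toNat = Q.i
  case neg =>
    have hd : Disjoint P.I Q.I := by
      simpa only [Tile.I] using triadic_disjoint hn (i := P.i) (i' := Q.i) hI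
    apply iff_of_true
    · rw [Set.disjoint_left]
      rintro ⟨x, y⟩ hp hq
      rw [Tile.rect, Set.mem_prod] at hp hq
      exact (Set.disjoint_left.mp hd hp.1) hq.1
    · have hz : ∀ x : ℝ, wp P x * (starRingEnd ℂ) (wp Q x) = 0 := by
        intro x
        by_cases hx : x ∈ P.I
        · exact integrand_zero' P Q x (Set.disjoint_left.mp hd hx)
        · exact integrand_zero P Q x hx
      simp only [hz, integral_zero]
  case pos =>
    have hsub : P.I ⊆ Q.I := by
      simpa only [Tile.I] using triadic_subset hn (i := P.i) (i' := Q.i) hI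
    by_cases hJ : Q.j / 3 ^ (Q.n - P.n).toNat = P.j
    · -- nested frequencies: not disjoint, nonzero integral
      have hJ' : Q.j / 3 ^ (-P.n - -Q.n).toNat = P.j := by
        rw [show -P.n - -Q.n = Q.n - P.n by ring]
        exact hJ
      have hfsub : Q.freqI ⊆ P.freqI := by
        simpa only [Tile.freqI] using
          triadic_subset (by omega : -Q.n ≤ -P.n) (i := Q.j) (i' := P.j) hJ'
      apply iff_of_false
      · rw [Set.not_disjoint_iff]
        refine ⟨((P.i:ℝ) * (3:ℝ) ^ P.n, Q.freq), ?_, ?_⟩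
        · rw [Tile.rect, Set.mem_prod]
          exact ⟨left_mem P.i P.n, hfsub (freq_mem Q)⟩
        · rw [Tile.rect, Set.mem_prod]
          exact ⟨hsub (left_mem P.i P.n), freq_mem Q⟩
      · exact integral_nested P Q hn hsub hJ
    · -- separated frequencies: disjoint, zero integral
      have hJ' : Q.j / 3 ^ (-P.n - -Q.n).toNat ≠ P.j := by
        rw [show -P.n - -Q.n = Q.n - P.n by ring]
        exact hJ
      have hfd : Disjoint Q.freqI P.freqI := by
        simpa only [Tile.freqI] using
          triadic_disjoint (by omega : -Q.n ≤ -P.n) (i := Q.j) (i' := P.j) hJ'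
      apply iff_of_true
      · rw [Set.disjoint_left]
        rintro ⟨x, y⟩ hp hq
        rw [Tile.rect, Set.mem_prod] at hp hq
        exact (Set.disjoint_left.mp hfd hq.2) hp.2
      · exact integral_mismatch P Q hn hsub hJ

end Stmt2Aux

theorem stmt2' (P Q : Tile) :
    Disjoint P.rect Q.rect ↔ ∫ x, wp P x * (starRingEnd ℂ) (wp Q x) = 0 := by
  rcases le_total P.n Q.n with h | h
  · exact Stmt2Aux.key P Q h
  · have hk := Stmt2Aux.key Q P h
    rw [disjoint_comm, hk]
    have hc : ∫ x, wp P x * (starRingEnd ℂ) (wp Q x)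
        = (starRingEnd ℂ) (∫ x, wp Q x * (starRingEnd ℂ) (wp P x)) := by
      rw [← integral_conj]
      apply integral_congr_ae
      apply Filter.Eventually.of_forall
      intro x
      simp only [map_mul, Complex.conj_conj]
      ring
    rw [hc]
    constructor
    · intro h0
      rw [h0, map_zero]
    · intro h0
      rwa [starRingEnd_apply, star_eq_zero] at h0
/-- Two tiles are disjoint (as rectangles in the phase plane) if and
only if their wave packets are orthogonal in `L²(𝕎;ℂ)`. -/
theorem stmt2 (P Q : Tile) :
    Disjoint P.rect Q.rect ↔ ∫ x, wp P x * (starRingEnd ℂ) (wp Q x) = 0 := by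
  exact stmt2' P Q
end
end

section
/- Kahane–Khintchine inequality: Let X be a Banach space and (ε_n)_{n=1}^N independent Rademacher variables. For all p ∈ (0,∞) there are constants depending only on p such that for every finite sequence (x_n)_{n=1}^N in X, E‖Σ_{n=1}^N ε_n x_n‖_X ≃_p (E‖Σ_{n=1}^N ε_n x_n‖_X^p)^{1/p}, with implicit constants independent of N. -/
open scoped ENNReal NNReal Classical

noncomputable section


open MeasureTheory

namespace KK6

open Finset

def sg (b : Bool) : ℝ := if b then 1 else -1

lemma sg_not (b : Bool) : sg (!b) = - sg b := by cases b <;> simp [sg]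

lemma sg_injective : Function.Injective sg := by
  intro a b h; cases a <;> cases b <;> simp [sg] at h ⊢ <;> norm_num at h

lemma norm_sg_smul {X : Type} [NormedAddCommGroup X] [NormedSpace ℝ X] (b : Bool) (v : X) :
    ‖sg b • v‖ = ‖v‖ := by cases b <;> simp [sg, norm_smul]

variable {X : Type} [NormedAddCommGroup X] [NormedSpace ℝ X] {N : ℕ}

def xx (x : Fin N → X) (n : ℕ) : X := if h : n < N then x ⟨n, h⟩ else 0

def ss (σ : Fin N → Bool) (n : ℕ) : ℝ := if h : n < N then sg (σ ⟨n, h⟩) else 1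

def Sp (x : Fin N → X) (σ : Fin N → Bool) (k : ℕ) : X := ∑ n ∈ range k, ss σ n • xx x n

def Rp (x : Fin N → X) (σ : Fin N → Bool) (k : ℕ) : X := Sp x σ N - Sp x σ k

lemma Sp_zero (x : Fin N → X) (σ) : Sp x σ 0 = 0 := by simp [Sp]

lemma Sp_succ (x : Fin N → X) (σ) (k : ℕ) :
    Sp x σ (k + 1) = Sp x σ k + ss σ k • xx x k := Finset.sum_range_succ _ _

lemma norm_smul_xx (x : Fin N → X) (σ : Fin N → Bool) (n : ℕ) :
    ‖ss σ n • xx x n‖ = ‖xx x n‖ := by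
  unfold ss
  split
  · exact norm_sg_smul _ _
  · simp

lemma ss_congr {σ σ' : Fin N → Bool} (n : ℕ)
    (h : ∀ hN : n < N, σ ⟨n, hN⟩ = σ' ⟨n, hN⟩) : ss σ n = ss σ' n := by
  unfold ss
  by_cases hN : n < N
  · simp only [dif_pos hN, h hN]
  · simp only [dif_neg hN]

lemma Sp_congr_lt {σ σ' : Fin N → Bool} {k : ℕ} (x : Fin N → X)
    (h : ∀ n : Fin N, (n : ℕ) < k → σ n = σ' n) {j : ℕ} (hj : j ≤ k) :
    Sp x σ j = Sp x σ' j := by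
  refine Finset.sum_congr rfl fun n hn => ?_
  have hn' : n < k := lt_of_lt_of_le (Finset.mem_range.1 hn) hj
  rw [ss_congr n (fun hN => h ⟨n, hN⟩ hn')]

lemma Rp_eq_Ico (x : Fin N → X) (σ : Fin N → Bool) {k : ℕ} (hk : k ≤ N) :
    Rp x σ k = ∑ n ∈ Finset.Ico k N, ss σ n • xx x n := by
  unfold Rp Sp
  rw [Finset.range_eq_Ico, ← Finset.sum_Ico_consecutive _ (Nat.zero_le k) hk]
  rw [← Finset.range_eq_Ico]
  abel

lemma Rp_congr_ge {σ σ' : Fin N → Bool} {k : ℕ} (x : Fin N → X) (hk : k ≤ N)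
    (h : ∀ n : Fin N, k ≤ (n : ℕ) → σ n = σ' n) :
    Rp x σ k = Rp x σ' k := by
  rw [Rp_eq_Ico x σ hk, Rp_eq_Ico x σ' hk]
  refine Finset.sum_congr rfl fun n hn => ?_
  obtain ⟨h1, h2⟩ := Finset.mem_Ico.1 hn
  rw [ss_congr n (fun hN => h ⟨n, hN⟩ h1)]

def flipFrom (k : ℕ) (σ : Fin N → Bool) : Fin N → Bool :=
  fun n => if (n : ℕ) < k then σ n else !(σ n)

lemma flipFrom_flipFrom (k : ℕ) (σ : Fin N → Bool) : flipFrom k (flipFrom k σ) = σ := by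
  funext n; unfold flipFrom; split <;> simp

lemma flipFrom_invol (k : ℕ) : Function.Involutive (flipFrom (N := N) k) :=
  fun σ => flipFrom_flipFrom k σ

lemma Sp_flipFrom (x : Fin N → X) (σ : Fin N → Bool) {j k : ℕ} (hj : j ≤ k) :
    Sp x (flipFrom k σ) j = Sp x σ j :=
  Sp_congr_lt x (fun n hn => by unfold flipFrom; simp [hn]) hj

lemma Sp_flipFrom_N (x : Fin N → X) (σ : Fin N → Bool) {k : ℕ} (hk : k ≤ N) :
    Sp x (flipFrom k σ) N = Sp x σ k - Rp x σ k := by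
  have h1 : Sp x (flipFrom k σ) N = Sp x (flipFrom k σ) k + Rp x (flipFrom k σ) k := by
    unfold Rp; abel
  rw [h1, Sp_flipFrom x σ le_rfl, Rp_eq_Ico x _ hk, Rp_eq_Ico x σ hk]
  have h2 : ∑ n ∈ Finset.Ico k N, ss (flipFrom k σ) n • xx x n
      = -∑ n ∈ Finset.Ico k N, ss σ n • xx x n := by
    rw [← Finset.sum_neg_distrib]
    refine Finset.sum_congr rfl fun n hn => ?_
    obtain ⟨h1', h2'⟩ := Finset.mem_Ico.1 hn
    have hflip : flipFrom k σ ⟨n, h2'⟩ = !(σ ⟨n, h2'⟩) := by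
      unfold flipFrom; simp [Nat.not_lt.2 h1']
    unfold ss
    rw [dif_pos h2', dif_pos h2', hflip, sg_not, neg_smul]
  rw [h2]; abel

lemma sum_boole_card (A : Finset (Fin N → Bool)) :
    ∑ σ : Fin N → Bool, (if σ ∈ A then (1 : ℕ) else 0) = A.card := by
  rw [Finset.sum_ite_mem, Finset.univ_inter, Finset.card_eq_sum_ones]

lemma card_cube : Fintype.card (Fin N → Bool) = 2 ^ N := by
  simp [Fintype.card_fun]

/-- Independence by counting: if `A` depends on coordinates `< k` and `B` on
coordinates `≥ k`, then `card (A ∩ B) * 2^N = card A * card B`. -/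
lemma card_inter_mul (k : ℕ) (A B : Finset (Fin N → Bool))
    (hA : ∀ σ σ' : Fin N → Bool, (∀ n : Fin N, (n : ℕ) < k → σ n = σ' n) → (σ ∈ A ↔ σ' ∈ A))
    (hB : ∀ σ σ' : Fin N → Bool, (∀ n : Fin N, k ≤ (n : ℕ) → σ n = σ' n) → (σ ∈ B ↔ σ' ∈ B)) :
    (A ∩ B).card * 2 ^ N = A.card * B.card := by
  classical
  let P := Fin N → Bool
  have hcube : Fintype.card P = 2 ^ N := card_cube
  set m : P → P → P := fun σ σ' n => if (n : ℕ) < k then σ n else σ' n with hm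
  set e : P × P → P × P := fun p => (m p.1 p.2, m p.2 p.1) with he
  have einv : Function.Involutive e := by
    intro p
    simp only [he, hm]
    refine Prod.ext ?_ ?_ <;> funext n <;> by_cases hn : (n : ℕ) < k <;> simp [hn]
  have hmA : ∀ σ σ' : P, (m σ σ' ∈ A ↔ σ ∈ A) := fun σ σ' =>
    hA (m σ σ') σ (fun n hn => by simp [hm, hn])
  have hmB : ∀ σ σ' : P, (m σ σ' ∈ B ↔ σ' ∈ B) := fun σ σ' =>
    hB (m σ σ') σ' (fun n hn => by simp [hm, Nat.not_lt.2 hn])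
  have key : ∑ p : P × P, (if m p.1 p.2 ∈ A ∩ B then (1 : ℕ) else 0)
      = ∑ p : P × P, (if p.1 ∈ A ∩ B then (1 : ℕ) else 0) :=
    Fintype.sum_equiv (einv.toPerm e) _ _ fun p => rfl
  have lhs_eq : ∑ p : P × P, (if m p.1 p.2 ∈ A ∩ B then (1 : ℕ) else 0)
      = A.card * B.card := by
    have hsplit : ∀ σ σ' : P, (if m σ σ' ∈ A ∩ B then (1 : ℕ) else 0)
        = (if σ ∈ A then 1 else 0) * (if σ' ∈ B then 1 else 0) := by
      intro σ σ'
      by_cases h1 : σ ∈ A <;> by_cases h2 : σ' ∈ B <;>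
        simp [Finset.mem_inter, hmA, hmB, h1, h2]
    rw [Fintype.sum_prod_type]
    calc ∑ σ : P, ∑ σ' : P, (if m σ σ' ∈ A ∩ B then (1 : ℕ) else 0)
        = ∑ σ : P, ∑ σ' : P, (if σ ∈ A then 1 else 0) * (if σ' ∈ B then 1 else 0) := by
          exact Finset.sum_congr rfl fun σ _ => Finset.sum_congr rfl fun σ' _ => hsplit σ σ'
      _ = (∑ σ : P, (if σ ∈ A then (1 : ℕ) else 0)) * (∑ σ' : P, (if σ' ∈ B then (1:ℕ) else 0)) := by
          rw [Finset.sum_mul_sum]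
      _ = A.card * B.card := by rw [sum_boole_card A, sum_boole_card B]
  have rhs_eq : ∑ p : P × P, (if p.1 ∈ A ∩ B then (1 : ℕ) else 0)
      = (A ∩ B).card * 2 ^ N := by
    rw [Fintype.sum_prod_type]
    calc ∑ σ : P, ∑ _σ' : P, (if σ ∈ A ∩ B then (1 : ℕ) else 0)
        = ∑ σ : P, (if σ ∈ A ∩ B then (1 : ℕ) else 0) * 2 ^ N := by
          refine Finset.sum_congr rfl fun σ _ => ?_
          rw [Finset.sum_const, Finset.card_univ, hcube, smul_eq_mul, mul_comm]
      _ = (A ∩ B).card * 2 ^ N := by rw [← Finset.sum_mul, sum_boole_card]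
  rw [← rhs_eq, ← key, lhs_eq]

lemma norm_two_smul (v : X) : ‖(2:ℕ) • v‖ = 2 * ‖v‖ := by
  have h := norm_smul ((2:ℕ) : ℝ) v
  rw [Nat.cast_smul_eq_nsmul] at h
  rw [h]; norm_num

variable (x : Fin N → X) (t : ℝ)

/-- `{σ | ‖S σ‖ > t}` -/
def BS : Finset (Fin N → Bool) := Finset.univ.filter (fun σ => t < ‖Sp x σ N‖)

/-- `{σ | τ σ = k}`: first time the partial sum exceeds `t` is `k`. -/
def TS (k : ℕ) : Finset (Fin N → Bool) :=
  Finset.univ.filter (fun σ => t < ‖Sp x σ k‖ ∧ ∀ j < k, ‖Sp x σ j‖ ≤ t)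

/-- `{σ | ‖S σ - S_k σ‖ > t}` -/
def RS (k : ℕ) : Finset (Fin N → Bool) :=
  Finset.univ.filter (fun σ => t < ‖Rp x σ k‖)

lemma TS_disjoint {k k' : ℕ} (h : k ≠ k') : Disjoint (TS x t k) (TS x t k') := by
  rw [Finset.disjoint_left]
  intro σ h1 h2
  simp only [TS, Finset.mem_filter, Finset.mem_univ, true_and] at h1 h2
  rcases h.lt_or_gt with hlt | hlt
  · exact absurd (h2.2 k hlt) (not_le.2 h1.1)
  · exact absurd (h1.2 k' hlt) (not_le.2 h2.1)

lemma exists_TS {σ : Fin N → Bool} (hσ : t < ‖Sp x σ N‖) :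
    ∃ k ≤ N, σ ∈ TS x t k := by
  have hex : ∃ k, t < ‖Sp x σ k‖ := ⟨N, hσ⟩
  classical
  refine ⟨Nat.find hex, Nat.find_min' hex hσ, ?_⟩
  simp only [TS, Finset.mem_filter, Finset.mem_univ, true_and]
  exact ⟨Nat.find_spec hex, fun j hj => not_lt.1 (Nat.find_min hex hj)⟩

lemma TS_zero_empty (ht : 0 ≤ t) : TS x t 0 = ∅ := by
  ext σ
  simp [TS, Sp_zero, not_lt.2 ht]

/-- Per-level reflection (Lévy) estimate. -/
lemma TS_card_le {k : ℕ} (hk : k ≤ N) :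
    (TS x t k).card ≤ 2 * (TS x t k ∩ BS x t).card := by
  classical
  have hsub : TS x t k ⊆ (TS x t k ∩ BS x t) ∪ (TS x t k ∩ BS x t).image (flipFrom k) := by
    intro σ hσ
    simp only [TS, Finset.mem_filter, Finset.mem_univ, true_and] at hσ
    by_cases hb : t < ‖Sp x σ N‖
    · refine Finset.mem_union_left _ (Finset.mem_inter.2 ⟨?_, ?_⟩)
      · simp only [TS, Finset.mem_filter, Finset.mem_univ, true_and]; exact hσ
      · simp only [BS, Finset.mem_filter, Finset.mem_univ, true_and]; exact hb
    · refine Finset.mem_union_right _ ?_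
      refine Finset.mem_image.2 ⟨flipFrom k σ, ?_, flipFrom_flipFrom k σ⟩
      have h1 : Sp x (flipFrom k σ) N = Sp x σ k - Rp x σ k := Sp_flipFrom_N x σ hk
      have h2 : t < ‖Sp x (flipFrom k σ) N‖ := by
        have : (2 : ℝ) * ‖Sp x σ k‖ - ‖Sp x σ N‖ ≤ ‖Sp x (flipFrom k σ) N‖ := by
          rw [h1]
          have : Sp x σ k - Rp x σ k = 2 • (Sp x σ k) - Sp x σ N := by
            unfold Rp; rw [two_smul]; abel
          rw [this]
          have := norm_sub_norm_le (2 • Sp x σ k) (Sp x σ N)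
          calc (2:ℝ) * ‖Sp x σ k‖ - ‖Sp x σ N‖ = ‖(2:ℕ) • Sp x σ k‖ - ‖Sp x σ N‖ := by
                rw [norm_two_smul]
            _ ≤ ‖2 • Sp x σ k - Sp x σ N‖ := norm_sub_norm_le _ _
        nlinarith [hσ.1, not_lt.1 hb]
      simp only [TS, BS, Finset.mem_inter, Finset.mem_filter, Finset.mem_univ, true_and]
      refine ⟨⟨?_, ?_⟩, h2⟩
      · rw [Sp_flipFrom x σ le_rfl]; exact hσ.1
      · intro j hj
        rw [Sp_flipFrom x σ (le_of_lt hj)]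
        exact hσ.2 j hj
  calc (TS x t k).card ≤ ((TS x t k ∩ BS x t) ∪ (TS x t k ∩ BS x t).image (flipFrom k)).card :=
        Finset.card_le_card hsub
    _ ≤ (TS x t k ∩ BS x t).card + ((TS x t k ∩ BS x t).image (flipFrom k)).card :=
        Finset.card_union_le _ _
    _ ≤ (TS x t k ∩ BS x t).card + (TS x t k ∩ BS x t).card :=
        Nat.add_le_add_left (Finset.card_image_le) _
    _ = 2 * (TS x t k ∩ BS x t).card := by ring

/-- Lévy maximal estimate, summed form. -/
lemma levy_sum (ht : 0 ≤ t) :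
    ∑ k ∈ Finset.range (N + 1), (TS x t k).card ≤ 2 * (BS x t).card := by
  classical
  calc ∑ k ∈ Finset.range (N + 1), (TS x t k).card
      ≤ ∑ k ∈ Finset.range (N + 1), 2 * (TS x t k ∩ BS x t).card := by
        refine Finset.sum_le_sum fun k hk => ?_
        exact TS_card_le x t (Nat.lt_succ_iff.1 (Finset.mem_range.1 hk))
    _ = 2 * ∑ k ∈ Finset.range (N + 1), (TS x t k ∩ BS x t).card := by
        rw [Finset.mul_sum]
    _ ≤ 2 * (BS x t).card := by
        have hdisj : ∀ k ∈ Finset.range (N+1), ∀ k' ∈ Finset.range (N+1), k ≠ k' →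
            Disjoint (TS x t k ∩ BS x t) (TS x t k' ∩ BS x t) := by
          intro k _ k' _ hkk'
          exact (TS_disjoint x t hkk').mono Finset.inter_subset_left Finset.inter_subset_left
        have := Finset.card_biUnion hdisj
        rw [← this]
        have hsub : (Finset.range (N+1)).biUnion (fun k => TS x t k ∩ BS x t) ⊆ BS x t := by
          intro σ hσ
          obtain ⟨k, _, hk⟩ := Finset.mem_biUnion.1 hσ
          exact Finset.mem_inter.1 hk |>.2
        exact Nat.mul_le_mul_left 2 (Finset.card_le_card hsub)

/-- Second Lévy estimate: tail sums past `k`. -/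
lemma RS_card_le {k : ℕ} (hk : k ≤ N) :
    (RS x t k).card ≤ 2 * (BS x t).card := by
  classical
  have hsub : RS x t k ⊆ BS x t ∪ (BS x t).image (flipFrom k) := by
    intro σ hσ
    simp only [RS, Finset.mem_filter, Finset.mem_univ, true_and] at hσ
    by_cases hb : t < ‖Sp x σ N‖
    · exact Finset.mem_union_left _ (by simp [BS, Finset.mem_filter, hb])
    · refine Finset.mem_union_right _ (Finset.mem_image.2 ⟨flipFrom k σ, ?_, flipFrom_flipFrom k σ⟩)
      have h1 : Sp x (flipFrom k σ) N = Sp x σ k - Rp x σ k := Sp_flipFrom_N x σ hk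
      have h2 : t < ‖Sp x (flipFrom k σ) N‖ := by
        have key : (2:ℝ) * ‖Rp x σ k‖ ≤ ‖Sp x σ N‖ + ‖Sp x (flipFrom k σ) N‖ := by
          have : Sp x σ N - Sp x (flipFrom k σ) N = 2 • Rp x σ k := by
            rw [h1, two_smul]; unfold Rp; abel
          have h3 : ‖Sp x σ N - Sp x (flipFrom k σ) N‖ ≤ ‖Sp x σ N‖ + ‖Sp x (flipFrom k σ) N‖ :=
            norm_sub_le _ _
          rw [this] at h3
          calc (2:ℝ) * ‖Rp x σ k‖ = ‖(2:ℕ) • Rp x σ k‖ := by rw [norm_two_smul]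
            _ ≤ _ := h3
        nlinarith [hσ, not_lt.1 hb]
      simp [BS, Finset.mem_filter, h2]
  calc (RS x t k).card ≤ (BS x t ∪ (BS x t).image (flipFrom k)).card := Finset.card_le_card hsub
    _ ≤ (BS x t).card + ((BS x t).image (flipFrom k)).card := Finset.card_union_le _ _
    _ ≤ (BS x t).card + (BS x t).card := Nat.add_le_add_left Finset.card_image_le _
    _ = 2 * (BS x t).card := by ring

lemma BS_mono {t t' : ℝ} (h : t ≤ t') : BS x t' ⊆ BS x t := by
  intro σ hσ
  simp only [BS, Finset.mem_filter, Finset.mem_univ, true_and] at hσ ⊢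
  exact lt_of_le_of_lt h hσ

lemma mem_BS {σ : Fin N → Bool} : σ ∈ BS x t ↔ t < ‖Sp x σ N‖ := by
  simp [BS]

/-- The key concentration inequality: `P(‖S‖ > 3t) ≤ 4 P(‖S‖ > t)²` (in counting form). -/
lemma concentration (ht : 0 ≤ t) :
    (BS x (3 * t)).card * 2 ^ N ≤ 4 * (BS x t).card ^ 2 := by
  classical
  have h3t : t ≤ 3 * t := by linarith
  by_cases hbig : ∃ m : Fin N, t < ‖x m‖
  · -- some vector is large: then `P(‖S‖ > t) ≥ 1/2`
    obtain ⟨m, hm⟩ := hbig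
    set fl : (Fin N → Bool) → (Fin N → Bool) := fun σ => Function.update σ m (!(σ m)) with hfl
    have hdiff : ∀ σ : Fin N → Bool,
        Sp x σ N - Sp x (fl σ) N = (2 * sg (σ m)) • x m := by
      intro σ
      have : Sp x σ N - Sp x (fl σ) N
          = ∑ n ∈ Finset.range N, (ss σ n - ss (fl σ) n) • xx x n := by
        unfold Sp
        rw [← Finset.sum_sub_distrib]
        exact Finset.sum_congr rfl fun n _ => by rw [sub_smul]
      rw [this]
      rw [Finset.sum_eq_single_of_mem (m : ℕ) (Finset.mem_range.2 m.isLt)]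
      · have h1 : ss σ (m : ℕ) = sg (σ m) := by
          unfold ss; rw [dif_pos m.isLt]
        have h2 : ss (fl σ) (m : ℕ) = - sg (σ m) := by
          unfold ss; rw [dif_pos m.isLt]
          have : fl σ ⟨(m : ℕ), m.isLt⟩ = !(σ m) := by
            have hmm : (⟨(m : ℕ), m.isLt⟩ : Fin N) = m := by ext; rfl
            rw [hmm, hfl]; simp
          rw [this, sg_not]
        have h3 : xx x (m : ℕ) = x m := by
          unfold xx; rw [dif_pos m.isLt]
        rw [h1, h2, h3]; ring_nf
      · intro n hn hne
        have : ss σ n = ss (fl σ) n := by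
          refine ss_congr n fun hN => ?_
          have : (⟨n, hN⟩ : Fin N) ≠ m := by
            intro hEq; exact hne (by rw [← hEq])
          rw [hfl]; simp [Function.update_of_ne this]
        rw [this, sub_self, zero_smul]
    have hnorm : ∀ σ, ‖Sp x σ N - Sp x (fl σ) N‖ = 2 * ‖x m‖ := by
      intro σ
      rw [hdiff σ, norm_smul]
      cases h : σ m <;> simp [sg, h, abs_of_nonneg] <;> norm_num
    have hcube : Finset.univ ⊆ BS x t ∪ (BS x t).image fl := by
      intro σ _
      by_cases hσ : t < ‖Sp x σ N‖
      · exact Finset.mem_union_left _ ((mem_BS x t).2 hσ)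
      · refine Finset.mem_union_right _ (Finset.mem_image.2 ⟨fl σ, ?_, ?_⟩)
        · refine (mem_BS x t).2 ?_
          have h4 := norm_sub_norm_le (Sp x σ N - Sp x (fl σ) N) (Sp x σ N)
          have h5 : Sp x σ N - Sp x (fl σ) N - Sp x σ N = - Sp x (fl σ) N := by abel
          rw [h5, norm_neg, hnorm σ] at h4
          have := not_lt.1 hσ
          linarith
        · rw [hfl]; funext n
          by_cases hn : n = m
          · subst hn; simp
          · simp [Function.update_of_ne hn]
    have hhalf : 2 ^ N ≤ 2 * (BS x t).card := by
      calc 2 ^ N = (Finset.univ : Finset (Fin N → Bool)).card := by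
            rw [Finset.card_univ, card_cube]
        _ ≤ (BS x t ∪ (BS x t).image fl).card := Finset.card_le_card hcube
        _ ≤ (BS x t).card + ((BS x t).image fl).card := Finset.card_union_le _ _
        _ ≤ (BS x t).card + (BS x t).card := Nat.add_le_add_left Finset.card_image_le _
        _ = 2 * (BS x t).card := by ring
    calc (BS x (3 * t)).card * 2 ^ N ≤ (BS x t).card * (2 * (BS x t).card) :=
          Nat.mul_le_mul (Finset.card_le_card (BS_mono x h3t)) hhalf
      _ ≤ 4 * (BS x t).card ^ 2 := by ring_nf; omega
  · -- all vectors small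
    push_neg at hbig
    have hsub : BS x (3 * t) ⊆
        (Finset.range (N + 1)).biUnion (fun k => TS x t k ∩ RS x t k) := by
      intro σ hσ
      rw [mem_BS] at hσ
      have hσt : t < ‖Sp x σ N‖ := lt_of_le_of_lt h3t hσ
      obtain ⟨k, hkN, hTS⟩ := exists_TS x t hσt
      have hk1 : 1 ≤ k := by
        rcases Nat.eq_zero_or_pos k with h0 | h1
        · exfalso; rw [h0, TS_zero_empty x t ht] at hTS; exact absurd hTS (Finset.notMem_empty σ)
        · exact h1
      refine Finset.mem_biUnion.2 ⟨k, Finset.mem_range.2 (Nat.lt_succ_of_le hkN), ?_⟩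
      refine Finset.mem_inter.2 ⟨hTS, ?_⟩
      simp only [TS, Finset.mem_filter, Finset.mem_univ, true_and] at hTS
      -- ‖Sp x σ k‖ ≤ 2t
      obtain ⟨j, rfl⟩ := Nat.exists_eq_add_of_le hk1
      have hjN : j < N := by omega
      have hSpk : ‖Sp x σ (1 + j)‖ ≤ 2 * t := by
        have h6 : Sp x σ (j + 1) = Sp x σ j + ss σ j • xx x j := Sp_succ x σ j
        have h7 : ‖Sp x σ j‖ ≤ t := hTS.2 j (by omega)
        have h8 : ‖ss σ j • xx x j‖ ≤ t := by
          rw [norm_smul_xx]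
          unfold xx; rw [dif_pos hjN]; exact hbig _
        have : ‖Sp x σ (j + 1)‖ ≤ 2 * t := by
          rw [h6]
          calc ‖Sp x σ j + ss σ j • xx x j‖ ≤ ‖Sp x σ j‖ + ‖ss σ j • xx x j‖ := norm_add_le _ _
            _ ≤ 2 * t := by linarith
        rwa [Nat.add_comm 1 j]
      simp only [RS, Finset.mem_filter, Finset.mem_univ, true_and]
      have h9 := norm_sub_norm_le (Sp x σ N) (Sp x σ (1 + j))
      unfold Rp
      linarith
    calc (BS x (3 * t)).card * 2 ^ N
        ≤ (∑ k ∈ Finset.range (N + 1), (TS x t k ∩ RS x t k).card) * 2 ^ N := by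
          refine Nat.mul_le_mul_right _ ?_
          exact le_trans (Finset.card_le_card hsub) (Finset.card_biUnion_le)
      _ = ∑ k ∈ Finset.range (N + 1), (TS x t k ∩ RS x t k).card * 2 ^ N := by
          rw [Finset.sum_mul]
      _ = ∑ k ∈ Finset.range (N + 1), (TS x t k).card * (RS x t k).card := by
          refine Finset.sum_congr rfl fun k hk => ?_
          have hkN : k ≤ N := Nat.lt_succ_iff.1 (Finset.mem_range.1 hk)
          refine card_inter_mul k _ _ ?_ ?_
          · intro σ σ' hagree
            have e1 : ∀ j ≤ k, Sp x σ j = Sp x σ' j := fun j hj => Sp_congr_lt x hagree hj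
            simp only [TS, Finset.mem_filter, Finset.mem_univ, true_and]
            constructor
            · rintro ⟨a, b⟩
              exact ⟨by rwa [e1 k le_rfl] at a, fun j hj => by rw [← e1 j hj.le]; exact b j hj⟩
            · rintro ⟨a, b⟩
              exact ⟨by rwa [← e1 k le_rfl] at a, fun j hj => by rw [e1 j hj.le]; exact b j hj⟩
          · intro σ σ' hagree
            have e2 : Rp x σ k = Rp x σ' k := Rp_congr_ge x hkN hagree
            simp only [RS, Finset.mem_filter, Finset.mem_univ, true_and, e2]
      _ ≤ ∑ k ∈ Finset.range (N + 1), (TS x t k).card * (2 * (BS x t).card) := by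
          refine Finset.sum_le_sum fun k hk => ?_
          exact Nat.mul_le_mul_left _ (RS_card_le x t (Nat.lt_succ_iff.1 (Finset.mem_range.1 hk)))
      _ = (∑ k ∈ Finset.range (N + 1), (TS x t k).card) * (2 * (BS x t).card) := by
          rw [Finset.sum_mul]
      _ ≤ (2 * (BS x t).card) * (2 * (BS x t).card) :=
          Nat.mul_le_mul_right _ (levy_sum x t ht)
      _ = 4 * (BS x t).card ^ 2 := by ring

/-! ### Summation of the doubly-exponential tail series -/

def Dser (r : ℝ) : ℝ := ∑' k : ℕ, ((3:ℝ) ^ (k+1)) ^ r * (1/2 : ℝ) ^ (2 ^ k)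

def Dr (r : ℝ) : ℝ := (3:ℝ) ^ r + Dser r

lemma summable_Dser (r : ℝ) :
    Summable (fun k : ℕ => ((3:ℝ) ^ (k+1)) ^ r * (1/2 : ℝ) ^ (2 ^ k)) := by
  have h3r : (0:ℝ) < (3:ℝ) ^ r := Real.rpow_pos_of_pos (by norm_num) r
  refine summable_of_ratio_norm_eventually_le (r := 1/2) (by norm_num) ?_
  have h0 : Filter.Tendsto (fun k : ℕ => ((1:ℝ)/2) ^ k) Filter.atTop (nhds 0) :=
    tendsto_pow_atTop_nhds_zero_of_lt_one (by norm_num) (by norm_num)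
  have hev : ∀ᶠ k in Filter.atTop, ((1:ℝ)/2) ^ k < (1/2) / (3:ℝ) ^ r :=
    h0.eventually (Iio_mem_nhds (by positivity))
  filter_upwards [hev] with k hk
  have hpos : (0:ℝ) < ((3:ℝ) ^ (k+1)) ^ r * (1/2 : ℝ) ^ (2 ^ k) := by positivity
  have hpos2 : (0:ℝ) < ((3:ℝ) ^ (k+1+1)) ^ r * (1/2 : ℝ) ^ (2 ^ (k+1)) := by positivity
  rw [Real.norm_of_nonneg hpos2.le, Real.norm_of_nonneg hpos.le]
  have e1 : ((3:ℝ) ^ (k+1+1)) ^ r = ((3:ℝ) ^ (k+1)) ^ r * (3:ℝ) ^ r := by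
    rw [pow_succ, Real.mul_rpow (by positivity) (by norm_num)]
  have e2 : ((1:ℝ)/2) ^ (2 ^ (k+1)) = (1/2 : ℝ) ^ (2 ^ k) * (1/2 : ℝ) ^ (2 ^ k) := by
    rw [← pow_add]
    congr 1
    rw [pow_succ, Nat.mul_two]
  have hsmall : (3:ℝ) ^ r * ((1:ℝ)/2) ^ (2 ^ k) ≤ 1/2 := by
    have hle : ((1:ℝ)/2) ^ (2 ^ k) ≤ ((1:ℝ)/2) ^ k :=
      pow_le_pow_of_le_one (by norm_num) (by norm_num) (Nat.lt_two_pow_self (n := k)).le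
    have : ((1:ℝ)/2) ^ (2 ^ k) < (1/2) / (3:ℝ) ^ r := lt_of_le_of_lt hle hk
    calc (3:ℝ) ^ r * ((1:ℝ)/2) ^ (2 ^ k) ≤ (3:ℝ) ^ r * ((1/2) / (3:ℝ) ^ r) := by
          exact mul_le_mul_of_nonneg_left this.le h3r.le
      _ = 1/2 := by field_simp
  calc ((3:ℝ) ^ (k+1+1)) ^ r * (1/2 : ℝ) ^ (2 ^ (k+1))
      = ((3:ℝ) ^ r * ((1:ℝ)/2) ^ (2 ^ k)) * (((3:ℝ) ^ (k+1)) ^ r * (1/2 : ℝ) ^ (2 ^ k)) := by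
        rw [e1, e2]; ring
    _ ≤ (1/2) * (((3:ℝ) ^ (k+1)) ^ r * (1/2 : ℝ) ^ (2 ^ k)) :=
        mul_le_mul_of_nonneg_right hsmall hpos.le

lemma Dser_nonneg (r : ℝ) : 0 ≤ Dser r := tsum_nonneg fun k => by positivity

lemma Dr_pos (r : ℝ) : 0 < Dr r :=
  add_pos_of_pos_of_nonneg (Real.rpow_pos_of_pos (by norm_num) r) (Dser_nonneg r)

def Kcube (r s : ℝ) : ℝ := (Dr r) ^ (1/r) * (8:ℝ) ^ (1/s)

lemma Kcube_pos (r s : ℝ) : 0 < Kcube r s :=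
  mul_pos (Real.rpow_pos_of_pos (Dr_pos r) _) (Real.rpow_pos_of_pos (by norm_num) _)

/-! ### Iterated tail bound -/

lemma tail_bound (x : Fin N → X) {t₀ : ℝ} (ht₀ : 0 < t₀)
    (h0 : ((BS x t₀).card : ℝ) * 8 ≤ 2 ^ N) :
    ∀ k : ℕ, 4 * ((BS x ((3:ℝ)^k * t₀)).card : ℝ) ≤ (2:ℝ)^N * (1/2 : ℝ) ^ (2 ^ k) := by
  intro k
  induction k with
  | zero =>
      have h1 : (3:ℝ)^(0:ℕ) * t₀ = t₀ := by norm_num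
      have h2 : (2:ℕ)^(0:ℕ) = 1 := rfl
      rw [h1, h2, pow_one]
      linarith
  | succ k ih =>
      have hcon := concentration x ((3:ℝ)^k * t₀) (by positivity)
      have hcast : ((BS x (3 * ((3:ℝ)^k * t₀))).card : ℝ) * 2^N
          ≤ 4 * ((BS x ((3:ℝ)^k * t₀)).card : ℝ)^2 := by
        have := hcon
        exact_mod_cast this
      have heq : 3 * ((3:ℝ)^k * t₀) = (3:ℝ)^(k+1) * t₀ := by ring
      rw [heq] at hcast
      have h2N : (0:ℝ) < 2^N := by positivity
      have hsq : (4 * ((BS x ((3:ℝ)^k * t₀)).card : ℝ))^2 ≤ ((2:ℝ)^N * (1/2 : ℝ) ^ (2 ^ k))^2 := by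
        have hnn : (0:ℝ) ≤ 4 * ((BS x ((3:ℝ)^k * t₀)).card : ℝ) := by positivity
        exact pow_le_pow_left₀ hnn ih 2
      have hexp : ((1/2 : ℝ) ^ (2 ^ k))^2 = (1/2 : ℝ) ^ (2 ^ (k+1)) := by
        have h2 : (2:ℕ) ^ (k+1) = 2 ^ k * 2 := pow_succ 2 k
        rw [h2, pow_mul]
      have hsq2 : ((2:ℝ)^N * (1/2 : ℝ)^(2^k))^2
          = ((2:ℝ)^N * (1/2 : ℝ)^(2^(k+1))) * 2^N := by rw [← hexp]; ring
      have h1 : 4 * ((BS x ((3:ℝ)^(k+1) * t₀)).card : ℝ) * 2^N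
          ≤ ((2:ℝ)^N * (1/2 : ℝ)^(2^(k+1))) * 2^N := by nlinarith [hcast, hsq, hsq2]
      exact le_of_mul_le_mul_right h1 h2N

lemma sum_boole_card_real (A : Finset (Fin N → Bool)) :
    ∑ σ : Fin N → Bool, (if σ ∈ A then (1:ℝ) else 0) = A.card := by
  rw [Finset.sum_ite_mem, Finset.univ_inter, Finset.sum_const, nsmul_eq_mul, mul_one]

/-- Main inequality on the cube: comparison of `L^r` and `L^s` averages. -/
lemma cube_main (x : Fin N → X) {r s : ℝ} (hr : 0 < r) (hs : 0 < s) :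
    ((∑ σ : Fin N → Bool, ‖Sp x σ N‖ ^ r) / (2:ℝ)^N) ^ (1/r)
      ≤ Kcube r s * ((∑ σ : Fin N → Bool, ‖Sp x σ N‖ ^ s) / (2:ℝ)^N) ^ (1/s) := by
  classical
  by_cases hz : ∀ σ : Fin N → Bool, ‖Sp x σ N‖ = 0
  · have e1 : ∑ σ : Fin N → Bool, ‖Sp x σ N‖ ^ r = 0 :=
      Finset.sum_eq_zero fun σ _ => by rw [hz σ, Real.zero_rpow hr.ne']
    have e2 : ∑ σ : Fin N → Bool, ‖Sp x σ N‖ ^ s = 0 :=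
      Finset.sum_eq_zero fun σ _ => by rw [hz σ, Real.zero_rpow hs.ne']
    rw [e1, e2, zero_div, Real.zero_rpow (one_div_ne_zero hr.ne'),
      Real.zero_rpow (one_div_ne_zero hs.ne'), mul_zero]
  · push_neg at hz
    obtain ⟨σ₀, hσ₀⟩ := hz
    have h2N : (0:ℝ) < (2:ℝ)^N := by positivity
    set A : ℝ := (∑ σ : Fin N → Bool, ‖Sp x σ N‖ ^ s) / (2:ℝ)^N with hAdef
    have hA : 0 < A := by
      refine div_pos ?_ h2N
      refine Finset.sum_pos' (fun σ _ => Real.rpow_nonneg (norm_nonneg _) s) ?_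
      exact ⟨σ₀, Finset.mem_univ _,
        Real.rpow_pos_of_pos (lt_of_le_of_ne (norm_nonneg _) (Ne.symm hσ₀)) s⟩
    have h8A : (0:ℝ) ≤ 8 * A := by linarith
    set t₀ : ℝ := (8 * A) ^ (1/s : ℝ) with ht₀def
    have ht₀ : 0 < t₀ := Real.rpow_pos_of_pos (by linarith) _
    have ht₀s : t₀ ^ s = 8 * A := by
      rw [ht₀def, ← Real.rpow_mul h8A, one_div, inv_mul_cancel₀ hs.ne', Real.rpow_one]
    -- Markov
    have hmk : ((BS x t₀).card : ℝ) * 8 ≤ (2:ℝ)^N := by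
      have h1 : ((BS x t₀).card : ℝ) * (8*A) ≤ ∑ σ : Fin N → Bool, ‖Sp x σ N‖ ^ s := by
        calc ((BS x t₀).card : ℝ) * (8*A) = ∑ _σ ∈ BS x t₀, t₀ ^ s := by
              rw [Finset.sum_const, nsmul_eq_mul, ht₀s]
          _ ≤ ∑ σ ∈ BS x t₀, ‖Sp x σ N‖ ^ s :=
              Finset.sum_le_sum fun σ hσ =>
                Real.rpow_le_rpow ht₀.le ((mem_BS x t₀).1 hσ).le hs.le
          _ ≤ ∑ σ : Fin N → Bool, ‖Sp x σ N‖ ^ s :=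
              Finset.sum_le_sum_of_subset_of_nonneg (Finset.subset_univ _)
                (fun σ _ _ => Real.rpow_nonneg (norm_nonneg _) s)
      have h2 : ∑ σ : Fin N → Bool, ‖Sp x σ N‖ ^ s = A * (2:ℝ)^N := by
        rw [hAdef]; field_simp
      have h3 : (((BS x t₀).card : ℝ) * 8) * A ≤ (2:ℝ)^N * A := by nlinarith [h1, h2]
      exact le_of_mul_le_mul_right h3 hA
    have tail := tail_bound x ht₀ hmk
    -- uniform upper bound for the norms
    set M₀ : ℝ := ∑ n ∈ Finset.range N, ‖xx x n‖ with hM₀def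
    have hfM : ∀ σ : Fin N → Bool, ‖Sp x σ N‖ ≤ M₀ := by
      intro σ
      calc ‖Sp x σ N‖ ≤ ∑ n ∈ Finset.range N, ‖ss σ n • xx x n‖ := norm_sum_le _ _
        _ = M₀ := Finset.sum_congr rfl fun n _ => norm_smul_xx x σ n
    obtain ⟨n₀, hn₀⟩ := exists_nat_gt (M₀ / t₀)
    set K : ℕ := n₀ + 1 with hKdef
    have hK1 : 1 ≤ K := Nat.le_add_left 1 n₀
    have hKM : M₀ < (3:ℝ)^K * t₀ := by
      have hlt : M₀ / t₀ < (K:ℝ) := lt_of_lt_of_le hn₀ (by exact_mod_cast Nat.le_succ n₀)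
      have hK3 : (K:ℝ) ≤ (3:ℝ)^K := by exact_mod_cast (Nat.lt_pow_self (n := K) (by norm_num)).le
      rw [div_lt_iff₀ ht₀] at hlt
      nlinarith
    -- pointwise layered bound
    have hpt : ∀ σ : Fin N → Bool, ‖Sp x σ N‖ ^ r ≤ (3*t₀)^r
        + ∑ k ∈ Finset.Icc 1 K, (((3:ℝ)^(k+1)) ^ r * t₀ ^ r)
            * (if σ ∈ BS x ((3:ℝ)^k * t₀) then (1:ℝ) else 0) := by
      intro σ
      have hterm_nonneg : ∀ k ∈ Finset.Icc 1 K, (0:ℝ) ≤ (((3:ℝ)^(k+1)) ^ r * t₀ ^ r)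
          * (if σ ∈ BS x ((3:ℝ)^k * t₀) then (1:ℝ) else 0) := by
        intro k _
        refine mul_nonneg (by positivity) ?_
        split <;> norm_num
      by_cases hσ : ‖Sp x σ N‖ ≤ 3 * t₀
      · have h1 : ‖Sp x σ N‖ ^ r ≤ (3*t₀)^r := Real.rpow_le_rpow (norm_nonneg _) hσ hr.le
        have h2 : (0:ℝ) ≤ ∑ k ∈ Finset.Icc 1 K, (((3:ℝ)^(k+1)) ^ r * t₀ ^ r)
            * (if σ ∈ BS x ((3:ℝ)^k * t₀) then (1:ℝ) else 0) :=
          Finset.sum_nonneg hterm_nonneg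
        linarith
      · push_neg at hσ
        set P : ℕ → Prop := fun k => (3:ℝ)^k * t₀ < ‖Sp x σ N‖ with hPdef
        have hP1 : P 1 := by simpa [hPdef, pow_one] using hσ
        set k₀ := Nat.findGreatest P K with hk₀def
        have hk₀1 : 1 ≤ k₀ := Nat.le_findGreatest hK1 hP1
        have hk₀K : k₀ ≤ K := Nat.findGreatest_le K
        have hPk₀ : P k₀ := Nat.findGreatest_spec hK1 hP1
        have hk₀ne : k₀ ≠ K := by
          intro h
          rw [h] at hPk₀
          exact absurd hPk₀ (not_lt.2 ((hfM σ).trans hKM.le))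
        have hnot : ¬ P (k₀ + 1) :=
          Nat.findGreatest_is_greatest (Nat.lt_succ_self k₀)
            (Nat.succ_le_of_lt (lt_of_le_of_ne hk₀K hk₀ne))
        have hup : ‖Sp x σ N‖ ≤ (3:ℝ)^(k₀+1) * t₀ := not_lt.1 hnot
        have h1 : ‖Sp x σ N‖ ^ r ≤ ((3:ℝ)^(k₀+1))^r * t₀^r := by
          rw [← Real.mul_rpow (by positivity) ht₀.le]
          exact Real.rpow_le_rpow (norm_nonneg _) hup hr.le
        refine le_trans h1 ?_
        have hterm : (((3:ℝ)^(k₀+1))^r * t₀^r)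
            = (((3:ℝ)^(k₀+1)) ^ r * t₀ ^ r)
              * (if σ ∈ BS x ((3:ℝ)^k₀ * t₀) then (1:ℝ) else 0) := by
          rw [if_pos ((mem_BS _ _).2 hPk₀), mul_one]
        calc ((3:ℝ)^(k₀+1))^r * t₀^r
            = (((3:ℝ)^(k₀+1)) ^ r * t₀ ^ r)
              * (if σ ∈ BS x ((3:ℝ)^k₀ * t₀) then (1:ℝ) else 0) := hterm
          _ ≤ ∑ k ∈ Finset.Icc 1 K, (((3:ℝ)^(k+1)) ^ r * t₀ ^ r)
              * (if σ ∈ BS x ((3:ℝ)^k * t₀) then (1:ℝ) else 0) :=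
            Finset.single_le_sum hterm_nonneg (Finset.mem_Icc.2 ⟨hk₀1, hk₀K⟩)
          _ ≤ _ := le_add_of_nonneg_left (by positivity)
    -- summation over σ
    have hcard : ∀ k : ℕ, ((BS x ((3:ℝ)^k * t₀)).card : ℝ) ≤ (2:ℝ)^N * (1/2 : ℝ)^(2^k) := by
      intro k
      have := tail k
      linarith
    have hsum : (∑ σ : Fin N → Bool, ‖Sp x σ N‖ ^ r)
        ≤ (2:ℝ)^N * ((3*t₀)^r)
          + ∑ k ∈ Finset.Icc 1 K, (((3:ℝ)^(k+1)) ^ r * t₀ ^ r)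
              * ((2:ℝ)^N * (1/2 : ℝ)^(2^k)) := by
      calc (∑ σ : Fin N → Bool, ‖Sp x σ N‖ ^ r)
          ≤ ∑ σ : Fin N → Bool, ((3*t₀)^r
            + ∑ k ∈ Finset.Icc 1 K, (((3:ℝ)^(k+1)) ^ r * t₀ ^ r)
                * (if σ ∈ BS x ((3:ℝ)^k * t₀) then (1:ℝ) else 0)) :=
            Finset.sum_le_sum fun σ _ => hpt σ
        _ = (2:ℝ)^N * ((3*t₀)^r)
            + ∑ k ∈ Finset.Icc 1 K, (((3:ℝ)^(k+1)) ^ r * t₀ ^ r)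
                * ((BS x ((3:ℝ)^k * t₀)).card : ℝ) := by
            rw [Finset.sum_add_distrib, Finset.sum_const, Finset.card_univ, card_cube,
              nsmul_eq_mul, Finset.sum_comm]
            push_cast
            congr 1
            refine Finset.sum_congr rfl fun k _ => ?_
            rw [← Finset.mul_sum, sum_boole_card_real]
        _ ≤ _ := by
            refine add_le_add_right (Finset.sum_le_sum fun k _ => ?_) _
            exact mul_le_mul_of_nonneg_left (hcard k) (by positivity)
    -- comparison with the universal series
    have hseries : ∑ k ∈ Finset.Icc 1 K, ((3:ℝ)^(k+1)) ^ r * (1/2 : ℝ)^(2^k) ≤ Dser r :=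
      Summable.sum_le_tsum _ (fun k _ => by positivity) (summable_Dser r)
    have htot : (∑ σ : Fin N → Bool, ‖Sp x σ N‖ ^ r) ≤ (2:ℝ)^N * (t₀^r * Dr r) := by
      have e3 : (3*t₀)^r = (3:ℝ)^r * t₀^r := Real.mul_rpow (by norm_num) ht₀.le
      have e4 : ∑ k ∈ Finset.Icc 1 K, (((3:ℝ)^(k+1)) ^ r * t₀ ^ r) * ((2:ℝ)^N * (1/2 : ℝ)^(2^k))
          = (2:ℝ)^N * t₀^r * ∑ k ∈ Finset.Icc 1 K, ((3:ℝ)^(k+1)) ^ r * (1/2 : ℝ)^(2^k) := by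
        rw [Finset.mul_sum]
        exact Finset.sum_congr rfl fun k _ => by ring
      have e5 : (2:ℝ)^N * t₀^r * (∑ k ∈ Finset.Icc 1 K, ((3:ℝ)^(k+1)) ^ r * (1/2 : ℝ)^(2^k))
          ≤ (2:ℝ)^N * t₀^r * Dser r :=
        mul_le_mul_of_nonneg_left hseries (by positivity)
      have := hsum
      rw [e4] at this
      have hDr : Dr r = (3:ℝ)^r + Dser r := rfl
      calc (∑ σ : Fin N → Bool, ‖Sp x σ N‖ ^ r)
          ≤ (2:ℝ)^N * ((3*t₀)^r) + (2:ℝ)^N * t₀^r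
              * ∑ k ∈ Finset.Icc 1 K, ((3:ℝ)^(k+1)) ^ r * (1/2 : ℝ)^(2^k) := this
        _ ≤ (2:ℝ)^N * ((3:ℝ)^r * t₀^r) + (2:ℝ)^N * t₀^r * Dser r := by
            rw [e3] at *; linarith [e5]
        _ = (2:ℝ)^N * (t₀^r * Dr r) := by rw [hDr]; ring
    have havg : (∑ σ : Fin N → Bool, ‖Sp x σ N‖ ^ r) / (2:ℝ)^N ≤ t₀^r * Dr r := by
      rw [div_le_iff₀ h2N]
      linarith [htot]
    -- final rpow chain
    have havg_nonneg : (0:ℝ) ≤ (∑ σ : Fin N → Bool, ‖Sp x σ N‖ ^ r) / (2:ℝ)^N :=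
      div_nonneg (Finset.sum_nonneg fun σ _ => Real.rpow_nonneg (norm_nonneg _) r) h2N.le
    have hstep1 : ((∑ σ : Fin N → Bool, ‖Sp x σ N‖ ^ r) / (2:ℝ)^N) ^ (1/r)
        ≤ (t₀^r * Dr r) ^ (1/r) :=
      Real.rpow_le_rpow havg_nonneg havg (by positivity)
    have hstep2 : (t₀^r * Dr r) ^ (1/r) = t₀ * (Dr r) ^ (1/r) := by
      rw [Real.mul_rpow (by positivity) (Dr_pos r).le]
      congr 1
      rw [← Real.rpow_mul ht₀.le, mul_one_div_cancel hr.ne', Real.rpow_one]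
    have hstep3 : t₀ = (8:ℝ)^(1/s : ℝ) * A^(1/s : ℝ) := by
      rw [ht₀def, Real.mul_rpow (by norm_num) hA.le]
    calc ((∑ σ : Fin N → Bool, ‖Sp x σ N‖ ^ r) / (2:ℝ)^N) ^ (1/r)
        ≤ (t₀^r * Dr r) ^ (1/r) := hstep1
      _ = t₀ * (Dr r) ^ (1/r) := hstep2
      _ = (Dr r) ^ (1/r) * ((8:ℝ)^(1/s : ℝ)) * A^(1/s : ℝ) := by rw [hstep3]; ring
      _ = Kcube r s * A ^ (1/s : ℝ) := by rw [Kcube]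

/-! ### Transfer from an abstract probability space to the discrete cube -/

lemma transfer {Om : Type} [MeasurableSpace Om] (mu : Measure Om) [IsProbabilityMeasure mu]
    {N : ℕ} (eps : Fin N → Om → ℝ) (hm : ∀ n, Measurable (eps n))
    (hind : ProbabilityTheory.iIndepFun eps mu)
    (hpm : ∀ n, mu {om | eps n om = 1} = 1/2 ∧ mu {om | eps n om = -1} = 1/2)
    (F : (Fin N → ℝ) → ℝ) :
    ∫ om, F (fun n => eps n om) ∂mu
      = (∑ σ : Fin N → Bool, F (fun n => sg (σ n))) / (2:ℝ)^N := by
  classical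
  set E : (Fin N → Bool) → Set Om := fun σ => ⋂ n, eps n ⁻¹' {sg (σ n)} with hEdef
  have hEmeas : ∀ σ, MeasurableSet (E σ) := fun σ =>
    MeasurableSet.iInter fun n => (hm n) (measurableSet_singleton _)
  have hhalf : ∀ (n : Fin N) (v : Bool), mu (eps n ⁻¹' {sg v}) = 1/2 := by
    intro n v
    cases v
    · have : eps n ⁻¹' {sg false} = {om | eps n om = -1} := by
        ext om; simp [sg]
      rw [this]; exact (hpm n).2
    · have : eps n ⁻¹' {sg true} = {om | eps n om = 1} := by
        ext om; simp [sg]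
      rw [this]; exact (hpm n).1
  have hEmu : ∀ σ, mu (E σ) = (1/2 : ℝ≥0∞)^N := by
    intro σ
    have h := hind.measure_inter_preimage_eq_mul (S := Finset.univ)
      (sets := fun n => {sg (σ n)}) (fun i _ => measurableSet_singleton _)
    have heq : (⋂ i ∈ (Finset.univ : Finset (Fin N)), eps i ⁻¹' {sg (σ i)}) = E σ := by
      simp [hEdef]
    rw [heq] at h
    rw [h]
    rw [Finset.prod_congr rfl (fun n _ => hhalf n (σ n)), Finset.prod_const,
      Finset.card_univ, Fintype.card_fin]
  have hdisj : Pairwise (Function.onFun Disjoint E) := by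
    intro σ σ' hne
    rw [Function.onFun, Set.disjoint_left]
    intro om homσ homσ'
    apply hne
    funext n
    have h1 : eps n om = sg (σ n) := by
      have := Set.mem_iInter.1 homσ n; simpa using this
    have h2 : eps n om = sg (σ' n) := by
      have := Set.mem_iInter.1 homσ' n; simpa using this
    exact sg_injective (h1.symm.trans h2)
  have hU : mu (⋃ σ, E σ) = 1 := by
    rw [measure_iUnion hdisj hEmeas, tsum_fintype]
    simp only [hEmu]
    rw [Finset.sum_const, Finset.card_univ, card_cube, nsmul_eq_mul]
    rw [Nat.cast_pow, Nat.cast_ofNat, one_div, ← mul_pow,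
      ENNReal.mul_inv_cancel (by norm_num) (by norm_num), one_pow]
  have hcompl : mu ((⋃ σ, E σ)ᶜ) = 0 := by
    rw [measure_compl (MeasurableSet.iUnion hEmeas) (measure_ne_top _ _), hU, measure_univ,
      tsub_self]
  have hae : ∀ᵐ om ∂mu, om ∈ ⋃ σ, E σ := by
    rw [MeasureTheory.ae_iff]
    exact hcompl
  have hGh : (fun om => F (fun n => eps n om)) =ᵐ[mu]
      (fun om => ∑ σ : Fin N → Bool,
        Set.indicator (E σ) (fun _ => F (fun n => sg (σ n))) om) := by
    filter_upwards [hae] with om hom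
    obtain ⟨σ, hσ⟩ := Set.mem_iUnion.1 hom
    have homσ : ∀ n, eps n om = sg (σ n) := by
      intro n
      have := Set.mem_iInter.1 hσ n; simpa using this
    have hG : F (fun n => eps n om) = F (fun n => sg (σ n)) :=
      congrArg F (funext fun n => homσ n)
    have hh : ∑ σ' : Fin N → Bool,
        Set.indicator (E σ') (fun _ => F (fun n => sg (σ' n))) om
        = F (fun n => sg (σ n)) := by
      rw [Finset.sum_eq_single_of_mem σ (Finset.mem_univ σ)]
      · exact Set.indicator_of_mem hσ _
      · intro σ' _ hne
        refine Set.indicator_of_notMem ?_ _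
        intro hom'
        apply hne
        funext n
        have h2 : eps n om = sg (σ' n) := by
          have := Set.mem_iInter.1 hom' n; simpa using this
        exact sg_injective (h2.symm.trans (homσ n))
    rw [hG, hh]
  rw [integral_congr_ae hGh,
    integral_finset_sum Finset.univ
      (fun σ _ => (integrable_const (F (fun n => sg (σ n)))).indicator (hEmeas σ))]
  have hint : ∀ σ : Fin N → Bool,
      ∫ om, Set.indicator (E σ) (fun _ => F (fun n => sg (σ n))) om ∂mu
        = ((1:ℝ)/2)^N * F (fun n => sg (σ n)) := by
    intro σ
    rw [integral_indicator_const _ (hEmeas σ), measureReal_def, hEmu σ, smul_eq_mul]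
    congr 1
    rw [ENNReal.toReal_pow]
    congr 1
    simp
  rw [Finset.sum_congr rfl (fun σ _ => hint σ), ← Finset.mul_sum]
  have hh2 : ((1:ℝ)/2)^N = ((2:ℝ)^N)⁻¹ := by rw [one_div, inv_pow]
  rw [hh2, ← div_eq_inv_mul]

lemma Sp_N_eq {X : Type} [NormedAddCommGroup X] [NormedSpace ℝ X] {N : ℕ}
    (x : Fin N → X) (σ : Fin N → Bool) :
    (∑ n : Fin N, sg (σ n) • x n) = Sp x σ N := by
  rw [Sp, ← Fin.sum_univ_eq_sum_range (fun n => ss σ n • xx x n) N]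
  refine Finset.sum_congr rfl fun i _ => ?_
  have h1 : ss σ (i : ℕ) = sg (σ i) := by unfold ss; rw [dif_pos i.isLt]
  have h2 : xx x (i : ℕ) = x i := by unfold xx; rw [dif_pos i.isLt]
  rw [h1, h2]

end KK6

open KK6 in
/-- Kahane–Khintchine inequality: for every `p ∈ (0,∞)` there are
constants `c, C > 0` (depending only on `p`) such that for every Banach space `X`,
every finite sequence `(x_n)` in `X`, and independent Rademacher variables `(ε_n)`,
`E‖Σ ε_n x_n‖ ≃_p (E‖Σ ε_n x_n‖^p)^{1/p}`, uniformly in `N`. -/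
theorem stmt6 :
    ∀ p : ℝ, 0 < p → ∃ c C : ℝ, 0 < c ∧ 0 < C ∧
      ∀ (X : Type) [NormedAddCommGroup X] [NormedSpace ℝ X] [CompleteSpace X]
        (Om : Type) [MeasurableSpace Om] (mu : Measure Om) [IsProbabilityMeasure mu]
        (N : ℕ) (eps : Fin N → Om → ℝ),
        (∀ n, Measurable (eps n)) →
        ProbabilityTheory.iIndepFun eps mu →
        (∀ n, mu {om | eps n om = 1} = 1/2 ∧ mu {om | eps n om = -1} = 1/2) →
        ∀ x : Fin N → X,
          c * ∫ om, ‖∑ n, eps n om • x n‖ ∂mu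
              ≤ (∫ om, ‖∑ n, eps n om • x n‖ ^ p ∂mu) ^ (1/p) ∧
          (∫ om, ‖∑ n, eps n om • x n‖ ^ p ∂mu) ^ (1/p)
              ≤ C * ∫ om, ‖∑ n, eps n om • x n‖ ∂mu := by
  intro p hp
  refine ⟨(Kcube 1 p)⁻¹, Kcube p 1, inv_pos.2 (Kcube_pos 1 p), Kcube_pos p 1, ?_⟩
  intro X _ _ _ Om _ mu _ N eps hmeas hind hpm x
  have h1 : ∫ om, ‖∑ n, eps n om • x n‖ ∂mu
      = (∑ σ : Fin N → Bool, ‖∑ n, sg (σ n) • x n‖) / (2:ℝ)^N :=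
    transfer mu eps hmeas hind hpm (fun v => ‖∑ n, v n • x n‖)
  have h2 : ∫ om, ‖∑ n, eps n om • x n‖ ^ p ∂mu
      = (∑ σ : Fin N → Bool, ‖∑ n, sg (σ n) • x n‖ ^ p) / (2:ℝ)^N :=
    transfer mu eps hmeas hind hpm (fun v => ‖∑ n, v n • x n‖ ^ p)
  rw [h1, h2]
  simp only [Sp_N_eq x, one_div]
  have hm1 := cube_main x (r := 1) (s := p) one_pos hp
  have hm2 := cube_main x (r := p) (s := 1) hp one_pos
  norm_num [Real.rpow_one] at hm1 hm2
  have hKp1 := Kcube_pos 1 p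
  constructor
  · rw [inv_mul_le_iff₀ hKp1]
    exact hm1
  · exact hm2
end
end

section
/- Outer Hölder inequality: Let 𝕏 be a Polish space with generating collection 𝔼 ⊆ Borel(𝕏), premeasure σ, Banach spaces X₀, X₁, X₂, X, sizes S_u (X_u-sizes) and S (X-size) on (𝕏,𝔼), and a bounded trilinear map Π : X₀ × X₁ × X₂ → X such that ‖Π(F₀,F₁,F₂)‖_S ≲ ∏_{u=0}^2 ‖F_u‖_{S_u} for all strongly Borel F_u : 𝕏 → X_u. Then for all p_u ∈ [1,∞] and p with 1/p = Σ 1/p_u, ‖Π(F₀,F₁,F₂)‖_{L^p_σ S} ≲ ∏_{u=0}^2 ‖F_u‖_{L^{p_u}_σ S_u}. -/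
open scoped ENNReal NNReal Classical

noncomputable section


/-- Generating sets and premeasure for an outer structure on `𝕏`. -/
structure OuterBase (Xs : Type*) [MeasurableSpace Xs] where
  gen : Set (Set Xs)
  genMeas : ∀ E ∈ gen, MeasurableSet E
  pre : Set Xs → ℝ≥0∞

/-- The outer measure induced by countable covers by generating sets. -/
def OuterBase.om {Xs : Type*} [MeasurableSpace Xs] (b : OuterBase Xs) (A : Set Xs) : ℝ≥0∞ :=
  ⨅ (c : Set (Set Xs)) (_ : c.Countable) (_ : c ⊆ b.gen) (_ : A ⊆ ⋃₀ c), ∑' E : c, b.pre E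

/-- An `X`-size on the generating sets of an outer base: a uniform family of
quasinorms on `X`-valued functions, one for each generating set, which is
unconditional, homogeneous, and nondegenerate. -/
structure OuterSize {Xs : Type*} [MeasurableSpace Xs] (b : OuterBase Xs)
    (X : Type*) [NormedAddCommGroup X] [NormedSpace ℂ X] where
  size : Set Xs → (Xs → X) → ℝ≥0∞
  C : ℝ≥0∞
  one_le_C : 1 ≤ C
  C_ne_top : C ≠ ⊤
  uncond : ∀ E ∈ b.gen, ∀ A : Set Xs,
    (∃ c : Set (Set Xs), c.Countable ∧ c ⊆ b.gen ∧ A = ⋃₀ c) →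
    ∀ F : Xs → X, size E (A.indicator F) ≤ C * size E F
  homog : ∀ E ∈ b.gen, ∀ (a : ℂ) (F : Xs → X), size E (a • F) = (‖a‖₊ : ℝ≥0∞) * size E F
  tri : ∀ E ∈ b.gen, ∀ F G : Xs → X, size E (F + G) ≤ C * (size E F + size E G)
  nondeg : ∀ F : Xs → X, (∀ E ∈ b.gen, size E F = 0) → F = 0

variable {Xs : Type*} [MeasurableSpace Xs] {b : OuterBase Xs}
  {X : Type*} [NormedAddCommGroup X] [NormedSpace ℂ X]

/-- `‖F‖_S`: the supremum of the sizes over all generating sets. -/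
def OuterSize.sSize (S : OuterSize b X) (F : Xs → X) : ℝ≥0∞ := ⨆ E ∈ b.gen, S.size E F

/-- The superlevel outer measure `σ(‖F‖_S > l)`. -/
def OuterSize.slm (S : OuterSize b X) (F : Xs → X) (l : ℝ≥0∞) : ℝ≥0∞ :=
  ⨅ (A : Set Xs) (_ : S.sSize (Aᶜ.indicator F) ≤ l), b.om A

/-- The outer-`L^p` quasinorm (defined as `‖F‖_S` for `p = ∞`). -/
def OuterSize.lp (S : OuterSize b X) (p : ℝ≥0∞) (F : Xs → X) : ℝ≥0∞ :=
  if p = ⊤ then S.sSize F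
  else (∫⁻ t in Set.Ioi (0:ℝ),
      ENNReal.ofReal (p.toReal * t ^ (p.toReal - 1)) * S.slm F (ENNReal.ofReal t)) ^ (1 / p.toReal)

/-- The weak outer-`L^p` quasinorm (defined as `‖F‖_S` for `p = ∞`). -/
def OuterSize.lpWeak (S : OuterSize b X) (p : ℝ≥0∞) (F : Xs → X) : ℝ≥0∞ :=
  if p = ⊤ then S.sSize F
  else ⨆ (l : ℝ≥0∞) (_ : 0 < l) (_ : l ≠ ⊤), l * S.slm F l ^ (1 / p.toReal)

open MeasureTheory

section Aux

lemma OuterBase.om_empty : b.om (∅ : Set Xs) = 0 := by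
  refine le_antisymm ?_ (zero_le)
  have : b.om (∅ : Set Xs) ≤ ∑' E : ((∅ : Set (Set Xs)) : Set (Set Xs)), b.pre E := by
    refine iInf_le_of_le ∅ (iInf_le_of_le Set.countable_empty
      (iInf_le_of_le (Set.empty_subset _) (iInf_le_of_le (by simp) le_rfl)))
  simpa using this

lemma OuterBase.om_le {A : Set Xs} {c : Set (Set Xs)} (hc : c.Countable) (hg : c ⊆ b.gen)
    (hA : A ⊆ ⋃₀ c) : b.om A ≤ ∑' E : c, b.pre E :=
  iInf_le_of_le c (iInf_le_of_le hc (iInf_le_of_le hg (iInf_le_of_le hA le_rfl)))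

lemma OuterSize.size_zero (S : OuterSize b X) {E : Set Xs} (hE : E ∈ b.gen) :
    S.size E (0 : Xs → X) = 0 := by
  have h := S.homog E hE 0 (0 : Xs → X)
  simpa using h

lemma OuterSize.sSize_zero (S : OuterSize b X) : S.sSize (0 : Xs → X) = 0 := by
  refine le_antisymm ?_ (zero_le)
  exact iSup₂_le fun E hE => le_of_eq (S.size_zero hE)

lemma OuterSize.slm_le (S : OuterSize b X) {F : Xs → X} {l : ℝ≥0∞} {A : Set Xs}
    (h : S.sSize (Aᶜ.indicator F) ≤ l) : S.slm F l ≤ b.om A :=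
  iInf_le_of_le A (iInf_le_of_le h le_rfl)

lemma OuterSize.slm_anti (S : OuterSize b X) {F : Xs → X} {l l' : ℝ≥0∞} (h : l ≤ l') :
    S.slm F l' ≤ S.slm F l :=
  le_iInf fun A => le_iInf fun hA => S.slm_le (hA.trans h)

lemma OuterSize.slm_eq_zero_of_sSize_le (S : OuterSize b X) {F : Xs → X} {l : ℝ≥0∞}
    (h : S.sSize F ≤ l) : S.slm F l = 0 := by
  refine le_antisymm ?_ (zero_le)
  have h' : S.sSize ((∅ : Set Xs)ᶜ.indicator F) ≤ l := by
    simpa [Set.indicator_univ] using h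
  calc S.slm F l ≤ b.om ∅ := S.slm_le h'
  _ = 0 := OuterBase.om_empty

lemma OuterSize.slm_top (S : OuterSize b X) (F : Xs → X) : S.slm F ⊤ = 0 :=
  S.slm_eq_zero_of_sSize_le le_top

/-- Restriction to the complement of a countable union of generating sets. -/
lemma OuterSize.sSize_indicator_compl_le (S : OuterSize b X) {c : Set (Set Xs)}
    (hcc : c.Countable) (hcg : c ⊆ b.gen) (F : Xs → X) :
    S.sSize ((⋃₀ c)ᶜ.indicator F) ≤ S.C * (1 + S.C) * S.sSize F := by
  refine iSup₂_le fun E hE => ?_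
  have hdec : (⋃₀ c)ᶜ.indicator F = F + (-1 : ℂ) • ((⋃₀ c).indicator F) := by
    funext x
    by_cases hx : x ∈ ⋃₀ c <;>
      simp [Set.indicator_of_mem, Set.indicator_of_notMem, hx]
  have h1 : S.size E ((⋃₀ c).indicator F) ≤ S.C * S.size E F :=
    S.uncond E hE _ ⟨c, hcc, hcg, rfl⟩ F
  have h2 : S.size E ((-1 : ℂ) • ((⋃₀ c).indicator F)) = S.size E ((⋃₀ c).indicator F) := by
    rw [S.homog E hE]; simp
  have h3 : S.size E F ≤ S.sSize F := le_iSup₂ (f := fun E _ => S.size E F) E hE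
  calc S.size E ((⋃₀ c)ᶜ.indicator F)
      ≤ S.C * (S.size E F + S.size E ((-1 : ℂ) • ((⋃₀ c).indicator F))) := by
        rw [hdec]; exact S.tri E hE _ _
    _ ≤ S.C * (S.sSize F + S.C * S.sSize F) := by
        rw [h2]
        exact mul_le_mul_right (add_le_add h3 (h1.trans (mul_le_mul_right h3 _))) _
    _ = S.C * (1 + S.C) * S.sSize F := by ring

lemma OuterBase.om_lt {A : Set Xs} {t : ℝ≥0∞} (h : b.om A < t) :
    ∃ c : Set (Set Xs), c.Countable ∧ c ⊆ b.gen ∧ A ⊆ ⋃₀ c ∧ ∑' E : c, b.pre E < t := by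
  unfold OuterBase.om at h
  obtain ⟨c, h⟩ := iInf_lt_iff.mp h
  obtain ⟨h1, h⟩ := iInf_lt_iff.mp h
  obtain ⟨h2, h⟩ := iInf_lt_iff.mp h
  obtain ⟨h3, h⟩ := iInf_lt_iff.mp h
  exact ⟨c, h1, h2, h3, h⟩

lemma OuterSize.slm_lt (S : OuterSize b X) {F : Xs → X} {l t : ℝ≥0∞} (h : S.slm F l < t) :
    ∃ A : Set Xs, S.sSize (Aᶜ.indicator F) ≤ l ∧ b.om A < t := by
  unfold OuterSize.slm at h
  obtain ⟨A, h⟩ := iInf_lt_iff.mp h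
  obtain ⟨h1, h⟩ := iInf_lt_iff.mp h
  exact ⟨A, h1, h⟩

end Aux

section Subst

open Real Set

lemma lintegral_image_eq_lintegral_abs_deriv_mul' {s : Set ℝ} {f f' : ℝ → ℝ}
    (hs : MeasurableSet s) (hf' : ∀ x ∈ s, HasDerivWithinAt f (f' x) s x)
    (hf : Set.InjOn f s) (g : ℝ → ℝ≥0∞) :
    ∫⁻ x in f '' s, g x = ∫⁻ x in s, ENNReal.ofReal |f' x| * g (f x) := by
  simpa only [ContinuousLinearMap.det_toSpanSingleton] using
    lintegral_image_eq_lintegral_abs_det_fderiv_mul volume hs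
      (fun x hx => (hf' x hx).hasFDerivWithinAt) hf g

lemma image_rpow_Ioi {a r : ℝ} (ha : 0 < a) (hr : 0 < r) :
    (fun t : ℝ => a * t ^ r) '' Set.Ioi 0 = Set.Ioi 0 := by
  ext s
  constructor
  · rintro ⟨t, ht, rfl⟩
    exact mul_pos ha (Real.rpow_pos_of_pos ht r)
  · intro hs
    refine ⟨(s / a) ^ (1 / r), Real.rpow_pos_of_pos (div_pos hs ha) _, ?_⟩
    show a * ((s / a) ^ (1 / r)) ^ r = s
    rw [← Real.rpow_mul (div_pos hs ha).le, one_div_mul_cancel hr.ne', Real.rpow_one,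
      mul_div_cancel₀ _ ha.ne']

lemma injOn_rpow_Ioi {a r : ℝ} (ha : 0 < a) (hr : 0 < r) :
    Set.InjOn (fun t : ℝ => a * t ^ r) (Set.Ioi 0) := by
  intro t1 ht1 t2 ht2 h
  have h' : t1 ^ r = t2 ^ r := mul_left_cancel₀ ha.ne' h
  have e1 : t1 = (t1 ^ r) ^ (1 / r) := by
    rw [← Real.rpow_mul (le_of_lt ht1), mul_one_div_cancel hr.ne', Real.rpow_one]
  have e2 : t2 = (t2 ^ r) ^ (1 / r) := by
    rw [← Real.rpow_mul (le_of_lt ht2), mul_one_div_cancel hr.ne', Real.rpow_one]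
  rw [e1, e2, h']

/-- Change of variables `s = a * t ^ r` for the weighted Lebesgue integral on `(0,∞)`. -/
lemma lintegral_subst {q r a : ℝ} (hq : 0 < q) (hr : 0 < r) (ha : 0 < a)
    (f : ℝ≥0∞ → ℝ≥0∞) :
    ENNReal.ofReal (a ^ q) * ∫⁻ t in Set.Ioi (0:ℝ),
        ENNReal.ofReal ((q * r) * t ^ (q * r - 1)) * f (ENNReal.ofReal (a * t ^ r))
      = ∫⁻ s in Set.Ioi (0:ℝ), ENNReal.ofReal (q * s ^ (q - 1)) * f (ENNReal.ofReal s) := by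
  have himg := image_rpow_Ioi ha hr
  have hderiv : ∀ t ∈ Set.Ioi (0:ℝ),
      HasDerivWithinAt (fun t : ℝ => a * t ^ r) (a * (r * t ^ (r - 1))) (Set.Ioi 0) t := by
    intro t ht
    exact ((Real.hasDerivAt_rpow_const (Or.inl (ne_of_gt ht))).const_mul a).hasDerivWithinAt
  have key := lintegral_image_eq_lintegral_abs_deriv_mul' measurableSet_Ioi hderiv
    (injOn_rpow_Ioi ha hr) (fun s => ENNReal.ofReal (q * s ^ (q - 1)) * f (ENNReal.ofReal s))
  rw [himg] at key
  rw [key, ← MeasureTheory.lintegral_const_mul' _ _ ENNReal.ofReal_ne_top]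
  refine MeasureTheory.lintegral_congr_ae ?_
  filter_upwards [MeasureTheory.ae_restrict_mem measurableSet_Ioi] with t ht
  have ht' : (0:ℝ) < t := ht
  have hpos : (0:ℝ) < a * (r * t ^ (r - 1)) :=
    mul_pos ha (mul_pos hr (Real.rpow_pos_of_pos ht' _))
  rw [abs_of_pos hpos, ← mul_assoc, ← mul_assoc, ← ENNReal.ofReal_mul (by positivity),
    ← ENNReal.ofReal_mul (by positivity)]
  congr 2
  have e1 : (a * t ^ r) ^ (q - 1) = a ^ (q - 1) * t ^ (r * (q - 1)) := by
    rw [Real.mul_rpow ha.le (Real.rpow_nonneg ht'.le r), ← Real.rpow_mul ht'.le]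
  have e2 : t ^ (r - 1) * t ^ (r * (q - 1)) = t ^ (q * r - 1) := by
    rw [← Real.rpow_add ht']; ring_nf
  have e3 : a * a ^ (q - 1) = a ^ q := by
    nth_rewrite 1 [show a = a ^ (1:ℝ) from (Real.rpow_one a).symm]
    rw [← Real.rpow_add ha]; ring_nf
  calc a ^ q * (q * r * t ^ (q * r - 1))
      = (a * a ^ (q - 1)) * (q * r * (t ^ (r - 1) * t ^ (r * (q - 1)))) := by rw [e3, e2]
    _ = a * (r * t ^ (r - 1)) * (q * (a * t ^ r) ^ (q - 1)) := by rw [e1]; ring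

end Subst

section Key

variable {X0 X1 X2 : Type*}
  [NormedAddCommGroup X0] [NormedSpace ℂ X0]
  [NormedAddCommGroup X1] [NormedSpace ℂ X1]
  [NormedAddCommGroup X2] [NormedSpace ℂ X2]

/-- The constant appearing in the restriction estimate. -/
def OuterSize.K (S : OuterSize b X) : ℝ≥0∞ := S.C * (1 + S.C)

lemma OuterSize.K_ne_top (S : OuterSize b X) : S.K ≠ ⊤ := by
  have h1 : S.C ≠ ⊤ := S.C_ne_top
  simp [OuterSize.K, ENNReal.mul_ne_top, ENNReal.add_ne_top, h1]

lemma OuterSize.one_le_K (S : OuterSize b X) : 1 ≤ S.K := by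
  have := S.one_le_C
  calc (1:ℝ≥0∞) = 1 * 1 := (one_mul 1).symm
  _ ≤ S.C * (1 + S.C) := mul_le_mul' this le_self_add
  _ = S.K := rfl

variable [MeasurableSpace Xs]

lemma OuterSize.sSize_res_le {b : OuterBase Xs} (S : OuterSize b X) {c : Set (Set Xs)}
    (hcc : c.Countable) (hcg : c ⊆ b.gen) {F : Xs → X} {A : Set Xs} {l : ℝ≥0∞}
    (hsub : A ⊆ ⋃₀ c) (hle : S.sSize (Aᶜ.indicator F) ≤ l) :
    S.sSize ((⋃₀ c)ᶜ.indicator F) ≤ S.K * l := by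
  have heq : (⋃₀ c)ᶜ.indicator F = (⋃₀ c)ᶜ.indicator (Aᶜ.indicator F) := by
    rw [Set.indicator_indicator,
      Set.inter_eq_self_of_subset_left (Set.compl_subset_compl.mpr hsub)]
  rw [heq]
  calc S.sSize ((⋃₀ c)ᶜ.indicator (Aᶜ.indicator F))
      ≤ S.C * (1 + S.C) * S.sSize (Aᶜ.indicator F) := S.sSize_indicator_compl_le hcc hcg _
    _ ≤ S.K * l := mul_le_mul_right hle _

/-- If all superlevel measures of `F` vanish, one can find covers of arbitrarily small
premeasure outside of which `F` has vanishing size. -/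
lemma OuterSize.exists_cover_vanish {b : OuterBase Xs} (S : OuterSize b X) (F : Xs → X)
    (h0 : ∀ t : ℝ≥0∞, 0 < t → S.slm F t = 0) {ε : ℝ≥0∞} (hε : ε ≠ 0) (hεt : ε ≠ ⊤) :
    ∃ c : Set (Set Xs), c.Countable ∧ c ⊆ b.gen ∧ (∑' E : c, b.pre E) ≤ ε ∧
      S.sSize ((⋃₀ c)ᶜ.indicator F) = 0 := by
  have hεn : ∀ n : ℕ, (0:ℝ≥0∞) < ε * 2⁻¹ ^ (n + 2) := fun n =>
    ENNReal.mul_pos hε (pow_ne_zero _ (by norm_num))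
  have hεnt : ∀ n : ℕ, ε * 2⁻¹ ^ (n + 2) ≠ ⊤ := fun n =>
    ENNReal.mul_ne_top hεt (by
      refine ENNReal.pow_ne_top ?_
      simp)
  -- choose near optimal sets at levels (n+1)⁻¹
  have hch : ∀ n : ℕ, ∃ c : Set (Set Xs), c.Countable ∧ c ⊆ b.gen ∧
      (∑' E : c, b.pre E) ≤ ε * 2⁻¹ ^ (n + 2) + ε * 2⁻¹ ^ (n + 2) ∧
      ∃ A : Set Xs, A ⊆ ⋃₀ c ∧ S.sSize (Aᶜ.indicator F) ≤ ((n : ℝ≥0∞) + 1)⁻¹ := by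
    intro n
    have hpos : (0:ℝ≥0∞) < ((n : ℝ≥0∞) + 1)⁻¹ :=
      ENNReal.inv_pos.mpr (ENNReal.add_ne_top.mpr ⟨ENNReal.natCast_ne_top n, ENNReal.one_ne_top⟩)
    have hzero : S.slm F ((n : ℝ≥0∞) + 1)⁻¹ = 0 := h0 _ hpos
    have hlt : S.slm F ((n : ℝ≥0∞) + 1)⁻¹ < ε * 2⁻¹ ^ (n + 2) := by
      rw [hzero]; exact hεn n
    obtain ⟨A, hA, homA⟩ := S.slm_lt hlt
    obtain ⟨c, hcc, hcg, hcs, hct⟩ := OuterBase.om_lt (ENNReal.lt_add_right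
      (homA.trans (hεnt n).lt_top).ne (hεn n).ne')
    exact ⟨c, hcc, hcg, (hct.le.trans (add_le_add_left homA.le _)), A, hcs, hA⟩
  choose cn hcnc hcng hcnt An hAn hAs using hch
  set c : Set (Set Xs) := ⋃ n, cn n with hcdef
  have hcc : c.Countable := Set.countable_iUnion hcnc
  have hcg : c ⊆ b.gen := Set.iUnion_subset hcng
  refine ⟨c, hcc, hcg, ?_, ?_⟩
  · calc (∑' E : c, b.pre E) ≤ ∑' n, ∑' E : cn n, b.pre E :=
        ENNReal.tsum_iUnion_le_tsum (b.pre) cn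
    _ ≤ ∑' n, (2 * ε) * 2⁻¹ ^ (n + 2) := by
        refine ENNReal.tsum_le_tsum fun n => ?_
        calc (∑' E : cn n, b.pre E) ≤ ε * 2⁻¹ ^ (n + 2) + ε * 2⁻¹ ^ (n + 2) := hcnt n
        _ = (2 * ε) * 2⁻¹ ^ (n + 2) := by ring
    _ = ε := by
        rw [ENNReal.tsum_mul_left]
        have h1 : ∑' n : ℕ, (2:ℝ≥0∞)⁻¹ ^ (n + 2) = 2⁻¹ := by
          simp_rw [pow_add]
          rw [ENNReal.tsum_mul_right, ENNReal.tsum_geometric]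
          have h2 : (1:ℝ≥0∞) - 2⁻¹ = 2⁻¹ := by
            rw [← ENNReal.inv_two_add_inv_two, ENNReal.add_sub_cancel_right]
            simp
          rw [h2, inv_inv]
          rw [pow_two, ← mul_assoc, ENNReal.mul_inv_cancel (by norm_num) (by norm_num), one_mul]
        rw [h1]
        calc (2 * ε) * 2⁻¹ = ε * (2 * 2⁻¹) := by ring
        _ = ε := by rw [ENNReal.mul_inv_cancel (by norm_num) (by norm_num), mul_one]
  · have hle : ∀ n : ℕ, S.sSize ((⋃₀ c)ᶜ.indicator F) ≤ S.K * ((n : ℝ≥0∞) + 1)⁻¹ := by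
      intro n
      refine S.sSize_res_le hcc hcg ((hAn n).trans (Set.sUnion_subset_sUnion ?_)) (hAs n)
      exact Set.subset_iUnion cn n
    refine le_antisymm ?_ (zero_le)
    have htend : Filter.Tendsto (fun n : ℕ => S.K * ((n : ℝ≥0∞) + 1)⁻¹)
        Filter.atTop (nhds 0) := by
      have h2 : Filter.Tendsto (fun n : ℕ => ((n : ℝ≥0∞) + 1)⁻¹) Filter.atTop (nhds 0) := by
        have h3 := ENNReal.tendsto_inv_nat_nhds_zero.comp (Filter.tendsto_add_atTop_nat 1)
        refine h3.congr fun n => ?_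
        simp [Function.comp]
      have h4 := ENNReal.Tendsto.const_mul (a := S.K) h2 (Or.inr S.K_ne_top)
      simpa using h4
    exact ge_of_tendsto htend (Filter.Eventually.of_forall hle)

/-- **Key level-set inequality.** -/
lemma key_levelset {b : OuterBase Xs}
    (S0 : OuterSize b X0) (S1 : OuterSize b X1) (S2 : OuterSize b X2) (S : OuterSize b X)
    (T : X0 →L[ℂ] X1 →L[ℂ] X2 →L[ℂ] X) (C0 : ℝ≥0∞)
    (hsize : ∀ (F0 : Xs → X0) (F1 : Xs → X1) (F2 : Xs → X2),
      StronglyMeasurable F0 → StronglyMeasurable F1 → StronglyMeasurable F2 →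
      S.sSize (fun x => T (F0 x) (F1 x) (F2 x))
        ≤ C0 * (S0.sSize F0 * S1.sSize F1 * S2.sSize F2))
    (F0 : Xs → X0) (F1 : Xs → X1) (F2 : Xs → X2)
    (m0 : StronglyMeasurable F0) (m1 : StronglyMeasurable F1) (m2 : StronglyMeasurable F2)
    (l0 l1 l2 : ℝ≥0∞) :
    S.slm (fun x => T (F0 x) (F1 x) (F2 x)) (C0 * (S0.K * l0 * (S1.K * l1) * (S2.K * l2)))
      ≤ S0.slm F0 l0 + S1.slm F1 l1 + S2.slm F2 l2 := by
  refine ENNReal.le_of_forall_pos_le_add fun ε hε hfin => ?_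
  set s0 := S0.slm F0 l0 with hs0def
  set s1 := S1.slm F1 l1 with hs1def
  set s2 := S2.slm F2 l2 with hs2def
  have hs0 : s0 ≠ ⊤ := ne_top_of_le_ne_top hfin.ne (le_add_right (le_add_right le_rfl))
  have hs1 : s1 ≠ ⊤ := ne_top_of_le_ne_top hfin.ne (le_add_right (le_add_left le_rfl))
  have hs2 : s2 ≠ ⊤ := ne_top_of_le_ne_top hfin.ne (le_add_left le_rfl)
  set δ : ℝ≥0∞ := (ε : ℝ≥0∞) / 6 with hδdef
  have hδpos : δ ≠ 0 := by
    simp only [hδdef, ne_eq, ENNReal.div_eq_zero_iff]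
    push_neg
    exact ⟨by exact_mod_cast hε.ne', by norm_num⟩
  -- choose near-optimal sets
  obtain ⟨A0, hA0, hom0⟩ := S0.slm_lt (ENNReal.lt_add_right hs0 hδpos)
  obtain ⟨A1, hA1, hom1⟩ := S1.slm_lt (ENNReal.lt_add_right hs1 hδpos)
  obtain ⟨A2, hA2, hom2⟩ := S2.slm_lt (ENNReal.lt_add_right hs2 hδpos)
  have hδtop : δ ≠ ⊤ := by
    simp [hδdef, ENNReal.div_eq_top]
  have homt0 : b.om A0 ≠ ⊤ :=
    (hom0.trans (ENNReal.add_lt_top.mpr ⟨hs0.lt_top, hδtop.lt_top⟩)).ne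
  have homt1 : b.om A1 ≠ ⊤ :=
    (hom1.trans (ENNReal.add_lt_top.mpr ⟨hs1.lt_top, hδtop.lt_top⟩)).ne
  have homt2 : b.om A2 ≠ ⊤ :=
    (hom2.trans (ENNReal.add_lt_top.mpr ⟨hs2.lt_top, hδtop.lt_top⟩)).ne
  -- choose near-optimal covers
  obtain ⟨c0, hc0c, hc0g, hc0s, hc0t⟩ := OuterBase.om_lt (ENNReal.lt_add_right homt0 hδpos)
  obtain ⟨c1, hc1c, hc1g, hc1s, hc1t⟩ := OuterBase.om_lt (ENNReal.lt_add_right homt1 hδpos)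
  obtain ⟨c2, hc2c, hc2g, hc2s, hc2t⟩ := OuterBase.om_lt (ENNReal.lt_add_right homt2 hδpos)
  set c : Set (Set Xs) := c0 ∪ c1 ∪ c2 with hcdef
  have hcc : c.Countable := ((hc0c.union hc1c).union hc2c)
  have hcg : c ⊆ b.gen := Set.union_subset (Set.union_subset hc0g hc1g) hc2g
  set B : Set Xs := ⋃₀ c with hBdef
  have hsub0 : A0 ⊆ B := hc0s.trans (Set.sUnion_subset_sUnion
    (Set.subset_union_left.trans Set.subset_union_left))
  have hsub1 : A1 ⊆ B := hc1s.trans (Set.sUnion_subset_sUnion (Set.subset_union_right.trans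
    Set.subset_union_left))
  have hsub2 : A2 ⊆ B := hc2s.trans (Set.sUnion_subset_sUnion Set.subset_union_right)
  -- the restricted functions
  have hBmeas : MeasurableSet B :=
    MeasurableSet.sUnion hcc fun E hE => b.genMeas E (hcg hE)
  have hind : Bᶜ.indicator (fun x => T (F0 x) (F1 x) (F2 x))
      = fun x => T (Bᶜ.indicator F0 x) (Bᶜ.indicator F1 x) (Bᶜ.indicator F2 x) := by
    funext x
    by_cases hx : x ∈ Bᶜ <;>
      simp [Set.indicator_of_mem, Set.indicator_of_notMem, hx]
  have hG0 := S0.sSize_res_le hcc hcg hsub0 hA0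
  have hG1 := S1.sSize_res_le hcc hcg hsub1 hA1
  have hG2 := S2.sSize_res_le hcc hcg hsub2 hA2
  have hsizeB : S.sSize (Bᶜ.indicator (fun x => T (F0 x) (F1 x) (F2 x)))
      ≤ C0 * (S0.K * l0 * (S1.K * l1) * (S2.K * l2)) := by
    rw [hind]
    calc S.sSize (fun x => T (Bᶜ.indicator F0 x) (Bᶜ.indicator F1 x) (Bᶜ.indicator F2 x))
        ≤ C0 * (S0.sSize (Bᶜ.indicator F0) * S1.sSize (Bᶜ.indicator F1)
            * S2.sSize (Bᶜ.indicator F2)) :=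
          hsize _ _ _ (m0.indicator hBmeas.compl) (m1.indicator hBmeas.compl)
            (m2.indicator hBmeas.compl)
      _ ≤ C0 * (S0.K * l0 * (S1.K * l1) * (S2.K * l2)) :=
          mul_le_mul_right (mul_le_mul' (mul_le_mul' hG0 hG1) hG2) _
  calc S.slm (fun x => T (F0 x) (F1 x) (F2 x)) (C0 * (S0.K * l0 * (S1.K * l1) * (S2.K * l2)))
      ≤ b.om B := S.slm_le hsizeB
    _ ≤ ∑' E : c, b.pre E := OuterBase.om_le hcc hcg le_rfl
    _ ≤ (∑' E : ↥(c0 ∪ c1), b.pre E) + ∑' E : c2, b.pre E := ENNReal.tsum_union_le _ _ _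
    _ ≤ ((∑' E : c0, b.pre E) + ∑' E : c1, b.pre E) + ∑' E : c2, b.pre E :=
        add_le_add_left (ENNReal.tsum_union_le _ _ _) _
    _ ≤ ((b.om A0 + δ) + (b.om A1 + δ)) + (b.om A2 + δ) :=
        add_le_add (add_le_add hc0t.le hc1t.le) hc2t.le
    _ ≤ (((s0 + δ) + δ) + ((s1 + δ) + δ)) + ((s2 + δ) + δ) :=
        add_le_add (add_le_add (add_le_add_left hom0.le _) (add_le_add_left hom1.le _))
          (add_le_add_left hom2.le _)
    _ = (s0 + s1 + s2) + 6 * δ := by ring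
    _ = (s0 + s1 + s2) + ε := by rw [hδdef, ENNReal.mul_div_cancel' (by norm_num) (by norm_num)]

end Key

section LpAux

/-- If arbitrarily cheap covers with vanishing outside size exist, all superlevel
measures vanish. -/
lemma OuterSize.slm_all_zero {b : OuterBase Xs} (S : OuterSize b X) (G : Xs → X)
    (h : ∀ ε : ℝ≥0∞, ε ≠ 0 → ε ≠ ⊤ → ∃ c : Set (Set Xs), c.Countable ∧ c ⊆ b.gen ∧
      (∑' E : c, b.pre E) ≤ ε ∧ S.sSize ((⋃₀ c)ᶜ.indicator G) = 0) :
    ∀ l : ℝ≥0∞, S.slm G l = 0 := by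
  intro l
  refine le_antisymm (ENNReal.le_of_forall_pos_le_add fun ε hε _ => ?_) (zero_le)
  obtain ⟨c, hcc, hcg, hct, hcs⟩ := h ε (by exact_mod_cast hε.ne') ENNReal.coe_ne_top
  calc S.slm G l ≤ b.om (⋃₀ c) := S.slm_le (le_of_eq_of_le hcs (zero_le))
  _ ≤ ∑' E : c, b.pre E := OuterBase.om_le hcc hcg le_rfl
  _ ≤ ε := hct
  _ ≤ 0 + ε := by rw [zero_add]

lemma OuterSize.lp_eq_zero {b : OuterBase Xs} (S : OuterSize b X) {p : ℝ≥0∞} {F : Xs → X}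
    (hp0 : p ≠ 0) (hpt : p ≠ ⊤) (h : ∀ l : ℝ≥0∞, 0 < l → S.slm F l = 0) :
    S.lp p F = 0 := by
  rw [OuterSize.lp, if_neg hpt]
  have hq : 0 < p.toReal := ENNReal.toReal_pos hp0 hpt
  have hI : (∫⁻ t in Set.Ioi (0:ℝ),
      ENNReal.ofReal (p.toReal * t ^ (p.toReal - 1)) * S.slm F (ENNReal.ofReal t)) = 0 := by
    calc (∫⁻ t in Set.Ioi (0:ℝ),
        ENNReal.ofReal (p.toReal * t ^ (p.toReal - 1)) * S.slm F (ENNReal.ofReal t))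
        = ∫⁻ _ in Set.Ioi (0:ℝ), 0 := by
          refine MeasureTheory.lintegral_congr_ae ?_
          filter_upwards [MeasureTheory.ae_restrict_mem measurableSet_Ioi] with t ht
          rw [h _ (ENNReal.ofReal_pos.mpr ht), mul_zero]
      _ = 0 := MeasureTheory.lintegral_zero
  rw [hI]
  exact ENNReal.zero_rpow_of_pos (by positivity)

lemma OuterSize.slm_zero_of_lp_eq_zero {b : OuterBase Xs} (S : OuterSize b X)
    {p : ℝ≥0∞} {F : Xs → X} (hq1 : 1 ≤ p.toReal) (hpt : p ≠ ⊤) (h : S.lp p F = 0) :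
    ∀ l : ℝ≥0∞, 0 < l → S.slm F l = 0 := by
  have hq : 0 < p.toReal := lt_of_lt_of_le one_pos hq1
  rw [OuterSize.lp, if_neg hpt] at h
  have hI : (∫⁻ t in Set.Ioi (0:ℝ),
      ENNReal.ofReal (p.toReal * t ^ (p.toReal - 1)) * S.slm F (ENNReal.ofReal t)) = 0 := by
    rcases ENNReal.rpow_eq_zero_iff.mp h with ⟨h1, _⟩ | ⟨_, h2⟩
    · exact h1
    · exfalso
      have : (0:ℝ) < 1 / p.toReal := by positivity
      linarith
  by_contra hcon
  push_neg at hcon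
  obtain ⟨l0, hl0, hm⟩ := hcon
  -- pick a positive real threshold below `l0`
  obtain ⟨t0, ht0, ht0le⟩ : ∃ t0 : ℝ, 0 < t0 ∧ ENNReal.ofReal t0 ≤ l0 := by
    rcases eq_or_ne l0 ⊤ with rfl | hl0t
    · exact ⟨1, one_pos, le_top⟩
    · refine ⟨l0.toReal, ENNReal.toReal_pos hl0.ne' hl0t, ?_⟩
      rw [ENNReal.ofReal_toReal hl0t]
  set m := S.slm F l0 with hmdef
  have hslm : ∀ t : ℝ, t ∈ Set.Ioc (t0 / 2) t0 → m ≤ S.slm F (ENNReal.ofReal t) := by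
    intro t ht
    exact S.slm_anti ((ENNReal.ofReal_le_ofReal ht.2).trans ht0le)
  set w0 : ℝ≥0∞ := ENNReal.ofReal (p.toReal * (t0 / 2) ^ (p.toReal - 1)) with hw0def
  have hw0 : w0 ≠ 0 := by
    rw [hw0def, ne_eq, ENNReal.ofReal_eq_zero, not_le]
    have : (0:ℝ) < (t0 / 2) ^ (p.toReal - 1) := Real.rpow_pos_of_pos (by linarith) _
    positivity
  have hlow : ∀ t : ℝ, t ∈ Set.Ioc (t0 / 2) t0 →
      w0 * m ≤ ENNReal.ofReal (p.toReal * t ^ (p.toReal - 1)) * S.slm F (ENNReal.ofReal t) := by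
    intro t ht
    refine mul_le_mul' ?_ (hslm t ht)
    refine ENNReal.ofReal_le_ofReal ?_
    have h1 : (t0 / 2) ^ (p.toReal - 1) ≤ t ^ (p.toReal - 1) :=
      Real.rpow_le_rpow (by linarith) ht.1.le (by linarith)
    nlinarith
  have hIlow : w0 * m * ENNReal.ofReal (t0 - t0 / 2)
      ≤ ∫⁻ t in Set.Ioi (0:ℝ),
        ENNReal.ofReal (p.toReal * t ^ (p.toReal - 1)) * S.slm F (ENNReal.ofReal t) := by
    calc w0 * m * ENNReal.ofReal (t0 - t0 / 2)
        = w0 * m * (MeasureTheory.volume (Set.Ioc (t0/2) t0)) := by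
          rw [Real.volume_Ioc]
      _ = ∫⁻ _ in Set.Ioc (t0/2) t0, w0 * m := by
          rw [MeasureTheory.setLIntegral_const]
      _ ≤ ∫⁻ t in Set.Ioc (t0/2) t0,
            ENNReal.ofReal (p.toReal * t ^ (p.toReal - 1)) * S.slm F (ENNReal.ofReal t) := by
          refine MeasureTheory.lintegral_mono_ae ?_
          filter_upwards [MeasureTheory.ae_restrict_mem measurableSet_Ioc] with t ht
          exact hlow t ht
      _ ≤ _ := MeasureTheory.lintegral_mono_set (fun t ht => lt_trans (by linarith) ht.1)
  rw [hI] at hIlow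
  have : w0 * m * ENNReal.ofReal (t0 - t0 / 2) = 0 := le_antisymm hIlow (zero_le)
  rcases mul_eq_zero.mp this with h' | h'
  · rcases mul_eq_zero.mp h' with h'' | h''
    · exact hw0 h''
    · exact hm h''
  · rw [ENNReal.ofReal_eq_zero] at h'
    linarith

/-- Evaluation of one term in the outer Hölder argument, by substitution. -/
lemma OuterSize.term_eval {b : OuterBase Xs} (Su : OuterSize b X) (Fu : Xs → X)
    {pu : ℝ≥0∞} (hpu1 : 1 ≤ pu) {q : ℝ} (hq : 0 < q) {mm : ℝ≥0∞} (hmm0 : mm ≠ 0)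
    (hmmt : mm ≠ ⊤) (hA0 : Su.lp pu Fu ≠ 0) (hAt : Su.lp pu Fu ≠ ⊤) :
    (∫⁻ t in Set.Ioi (0:ℝ), ENNReal.ofReal (q * t ^ (q - 1)) *
        Su.slm Fu (Su.lp pu Fu * (ENNReal.ofReal t / mm) ^ (q * pu.toReal⁻¹)))
      ≤ mm ^ q := by
  rcases eq_or_ne pu ⊤ with hput | hput
  · -- `pu = ⊤`: the exponent is `0` and the term vanishes
    have hr : q * pu.toReal⁻¹ = 0 := by rw [hput]; simp
    have hcalc : (∫⁻ t in Set.Ioi (0:ℝ), ENNReal.ofReal (q * t ^ (q - 1)) *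
        Su.slm Fu (Su.lp pu Fu * (ENNReal.ofReal t / mm) ^ (q * pu.toReal⁻¹))) = 0 := by
      calc _ = ∫⁻ _ in Set.Ioi (0:ℝ), 0 := by
            refine MeasureTheory.lintegral_congr_ae (Filter.Eventually.of_forall fun t => ?_)
            simp only [hr, ENNReal.rpow_zero, mul_one]
            rw [show Su.lp pu Fu = Su.sSize Fu by rw [OuterSize.lp, if_pos hput]]
            rw [Su.slm_eq_zero_of_sSize_le le_rfl, mul_zero]
        _ = 0 := MeasureTheory.lintegral_zero
    rw [hcalc]
    exact zero_le
  · -- `pu` finite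
    set A : ℝ≥0∞ := Su.lp pu Fu with hAdef
    set qu : ℝ := pu.toReal with hqudef
    have hqu1 : 1 ≤ qu := by
      have := ENNReal.toReal_mono hput hpu1
      simpa [hqudef] using this
    have hqu0 : 0 < qu := lt_of_lt_of_le one_pos hqu1
    set r : ℝ := q * qu⁻¹ with hrdef
    have hr0 : 0 < r := mul_pos hq (inv_pos.mpr hqu0)
    have hqr : qu * r = q := by
      rw [hrdef]; field_simp
    have hAtR : 0 < A.toReal := ENNReal.toReal_pos hA0 hAt
    have hmmR : 0 < mm.toReal := ENNReal.toReal_pos hmm0 hmmt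
    set a : ℝ := A.toReal / mm.toReal ^ r with hadef
    have hapos : 0 < a := div_pos hAtR (Real.rpow_pos_of_pos hmmR r)
    have harg : ∀ t : ℝ, 0 < t →
        A * (ENNReal.ofReal t / mm) ^ r = ENNReal.ofReal (a * t ^ r) := by
      intro t ht
      have h1 : ENNReal.ofReal t / mm = ENNReal.ofReal (t / mm.toReal) := by
        rw [ENNReal.ofReal_div_of_pos hmmR, ENNReal.ofReal_toReal hmmt]
      have h2 : (0:ℝ) < t / mm.toReal := div_pos ht hmmR
      rw [h1, ENNReal.ofReal_rpow_of_pos h2, ← ENNReal.ofReal_toReal hAt,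
        ← ENNReal.ofReal_mul ENNReal.toReal_nonneg]
      congr 1
      rw [Real.div_rpow ht.le hmmR.le, hadef]
      ring
    have hTrw : (∫⁻ t in Set.Ioi (0:ℝ), ENNReal.ofReal (q * t ^ (q - 1)) *
          Su.slm Fu (A * (ENNReal.ofReal t / mm) ^ r))
        = ∫⁻ t in Set.Ioi (0:ℝ), ENNReal.ofReal ((qu * r) * t ^ (qu * r - 1)) *
            Su.slm Fu (ENNReal.ofReal (a * t ^ r)) := by
      refine MeasureTheory.lintegral_congr_ae ?_
      filter_upwards [MeasureTheory.ae_restrict_mem measurableSet_Ioi] with t ht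
      rw [harg t ht, hqr]
    have hsub := lintegral_subst hqu0 hr0 hapos (Su.slm Fu)
    have hlpval : (∫⁻ s in Set.Ioi (0:ℝ),
        ENNReal.ofReal (qu * s ^ (qu - 1)) * Su.slm Fu (ENNReal.ofReal s)) = A ^ qu := by
      have hA' : A = (∫⁻ s in Set.Ioi (0:ℝ),
          ENNReal.ofReal (qu * s ^ (qu - 1)) * Su.slm Fu (ENNReal.ofReal s)) ^ (1 / qu) := by
        rw [hAdef, OuterSize.lp, if_neg hput]
      rw [hA', ← ENNReal.rpow_mul, one_div_mul_cancel hqu0.ne', ENNReal.rpow_one]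
    have hfin : ENNReal.ofReal (a ^ qu) * (∫⁻ t in Set.Ioi (0:ℝ),
        ENNReal.ofReal (q * t ^ (q - 1)) * Su.slm Fu (A * (ENNReal.ofReal t / mm) ^ r))
        = A ^ qu := by
      rw [hTrw, hsub, hlpval]
    have hX : ENNReal.ofReal (a ^ qu) = A ^ qu * (mm ^ q)⁻¹ := by
      rw [hadef, Real.div_rpow hAtR.le (Real.rpow_nonneg hmmR.le r),
        ← Real.rpow_mul hmmR.le, show r * qu = q by rw [← hqr]; ring,
        ENNReal.ofReal_div_of_pos (Real.rpow_pos_of_pos hmmR q),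
        ← ENNReal.ofReal_rpow_of_pos hAtR, ← ENNReal.ofReal_rpow_of_pos hmmR,
        ENNReal.ofReal_toReal hAt, ENNReal.ofReal_toReal hmmt, div_eq_mul_inv]
    have hAq0 : A ^ qu ≠ 0 := (ENNReal.rpow_pos (zero_lt_iff.mpr hA0) hAt).ne'
    have hAqt : A ^ qu ≠ ⊤ := ENNReal.rpow_ne_top_of_nonneg (by positivity) hAt
    have hmq0 : mm ^ q ≠ 0 := (ENNReal.rpow_pos (zero_lt_iff.mpr hmm0) hmmt).ne'
    have hmqt : mm ^ q ≠ ⊤ := ENNReal.rpow_ne_top_of_nonneg hq.le hmmt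
    have hXne0 : ENNReal.ofReal (a ^ qu) ≠ 0 := by
      rw [hX]; exact mul_ne_zero hAq0 (ENNReal.inv_ne_zero.mpr hmqt)
    have hXnet : ENNReal.ofReal (a ^ qu) ≠ ⊤ := ENNReal.ofReal_ne_top
    refine le_of_eq ?_
    calc (∫⁻ t in Set.Ioi (0:ℝ), ENNReal.ofReal (q * t ^ (q - 1)) *
          Su.slm Fu (A * (ENNReal.ofReal t / mm) ^ r))
        = (ENNReal.ofReal (a ^ qu))⁻¹ * (ENNReal.ofReal (a ^ qu) *
            ∫⁻ t in Set.Ioi (0:ℝ), ENNReal.ofReal (q * t ^ (q - 1)) *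
              Su.slm Fu (A * (ENNReal.ofReal t / mm) ^ r)) := by
          rw [← mul_assoc, ENNReal.inv_mul_cancel hXne0 hXnet, one_mul]
      _ = (ENNReal.ofReal (a ^ qu))⁻¹ * A ^ qu := by rw [hfin]
      _ = mm ^ q := by
          rw [hX, ENNReal.mul_inv (Or.inl hAq0) (Or.inl hAqt), inv_inv]
          rw [mul_comm ((A ^ qu)⁻¹) (mm ^ q), mul_assoc, ENNReal.inv_mul_cancel hAq0 hAqt,
            mul_one]

end LpAux


/-- Outer Hölder inequality: if a bounded trilinear map satisfies a
size-Hölder inequality with respect to sizes `S_u`, `S` over a common outer base, then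
for every Hölder relation `1/p = Σ 1/p_u` with `p_u ∈ [1,∞]` the corresponding
outer-`L^p` Hölder inequality holds. -/
theorem stmt11 (Xs : Type) [TopologicalSpace Xs] [PolishSpace Xs]
    [MeasurableSpace Xs] [BorelSpace Xs]
    (b : OuterBase Xs)
    (X0 X1 X2 X : Type)
    [NormedAddCommGroup X0] [NormedSpace ℂ X0]
    [NormedAddCommGroup X1] [NormedSpace ℂ X1]
    [NormedAddCommGroup X2] [NormedSpace ℂ X2]
    [NormedAddCommGroup X] [NormedSpace ℂ X]
    (S0 : OuterSize b X0) (S1 : OuterSize b X1) (S2 : OuterSize b X2) (S : OuterSize b X)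
    (T : X0 →L[ℂ] X1 →L[ℂ] X2 →L[ℂ] X)
    (C0 : ℝ≥0∞) (hC0 : C0 ≠ ⊤)
    (hsize : ∀ (F0 : Xs → X0) (F1 : Xs → X1) (F2 : Xs → X2),
      StronglyMeasurable F0 → StronglyMeasurable F1 → StronglyMeasurable F2 →
      S.sSize (fun x => T (F0 x) (F1 x) (F2 x))
        ≤ C0 * (S0.sSize F0 * S1.sSize F1 * S2.sSize F2))
    (p0 p1 p2 p : ℝ≥0∞) (h0 : 1 ≤ p0) (h1 : 1 ≤ p1) (h2 : 1 ≤ p2)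
    (hp : p⁻¹ = p0⁻¹ + p1⁻¹ + p2⁻¹) :
    ∃ C : ℝ≥0∞, C ≠ ⊤ ∧ ∀ (F0 : Xs → X0) (F1 : Xs → X1) (F2 : Xs → X2),
      StronglyMeasurable F0 → StronglyMeasurable F1 → StronglyMeasurable F2 →
      S.lp p (fun x => T (F0 x) (F1 x) (F2 x))
        ≤ C * (S0.lp p0 F0 * S1.lp p1 F1 * S2.lp p2 F2) := by
  classical
  set C0' : ℝ≥0∞ := max C0 1 with hC0'def
  have hC0'1 : 1 ≤ C0' := le_max_right _ _
  have hC0'0 : C0' ≠ 0 := (lt_of_lt_of_le zero_lt_one hC0'1).ne'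
  have hC0't : C0' ≠ ⊤ := (max_lt hC0.lt_top ENNReal.one_lt_top).ne
  have hsize' : ∀ (G0 : Xs → X0) (G1 : Xs → X1) (G2 : Xs → X2),
      StronglyMeasurable G0 → StronglyMeasurable G1 → StronglyMeasurable G2 →
      S.sSize (fun x => T (G0 x) (G1 x) (G2 x))
        ≤ C0' * (S0.sSize G0 * S1.sSize G1 * S2.sSize G2) := fun G0 G1 G2 n0 n1 n2 =>
    (hsize G0 G1 G2 n0 n1 n2).trans (mul_le_mul_left (le_max_left _ _) _)
  set K : ℝ≥0∞ := S0.K * S1.K * S2.K with hKdef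
  have hK1 : 1 ≤ K := by
    calc (1:ℝ≥0∞) = 1 * 1 * 1 := by norm_num
    _ ≤ S0.K * S1.K * S2.K := mul_le_mul' (mul_le_mul' S0.one_le_K S1.one_le_K) S2.one_le_K
  have hK0 : K ≠ 0 := (lt_of_lt_of_le zero_lt_one hK1).ne'
  have hKt : K ≠ ⊤ :=
    ENNReal.mul_ne_top (ENNReal.mul_ne_top S0.K_ne_top S1.K_ne_top) S2.K_ne_top
  refine ⟨27 * C0' * K, ENNReal.mul_ne_top (ENNReal.mul_ne_top (by norm_num) hC0't) hKt, ?_⟩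
  intro F0 F1 F2 m0 m1 m2
  set Pi : Xs → X := fun x => T (F0 x) (F1 x) (F2 x) with hPidef
  set A0 : ℝ≥0∞ := S0.lp p0 F0 with hA0def
  set A1 : ℝ≥0∞ := S1.lp p1 F1 with hA1def
  set A2 : ℝ≥0∞ := S2.lp p2 F2 with hA2def
  have hindPi : ∀ D : Set Xs, D.indicator Pi
      = fun x => T (D.indicator F0 x) (D.indicator F1 x) (D.indicator F2 x) := by
    intro D; funext x
    by_cases hx : x ∈ D <;>
      simp [hPidef, Set.indicator_of_mem, Set.indicator_of_notMem, hx]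
  have hi0 : p0⁻¹ ≤ 1 := ENNReal.inv_le_one.mpr h0
  have hi1 : p1⁻¹ ≤ 1 := ENNReal.inv_le_one.mpr h1
  have hi2 : p2⁻¹ ≤ 1 := ENNReal.inv_le_one.mpr h2
  have hpinvt : p⁻¹ ≠ ⊤ := by
    rw [hp]
    exact ENNReal.add_ne_top.mpr ⟨ENNReal.add_ne_top.mpr
      ⟨(hi0.trans_lt ENNReal.one_lt_top).ne, (hi1.trans_lt ENNReal.one_lt_top).ne⟩,
      (hi2.trans_lt ENNReal.one_lt_top).ne⟩
  have hpne0 : p ≠ 0 := by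
    intro h
    rw [h] at hpinvt
    simp at hpinvt
  -- helper: the `lp` norm of `Pi` vanishes whenever one factor degenerates to zero
  have hvanish0 : A0 = 0 → S.lp p Pi = 0 := by
    intro hz0
    rcases eq_or_ne p0 ⊤ with hp0t | hp0t
    · have hs0 : S0.sSize F0 = 0 := by
        rw [hA0def, OuterSize.lp, if_pos hp0t] at hz0; exact hz0
      have hS : S.sSize Pi = 0 := le_antisymm
        ((hsize' F0 F1 F2 m0 m1 m2).trans (by rw [hs0]; simp)) (zero_le)
      rcases eq_or_ne p ⊤ with hpt | hpt
      · rw [OuterSize.lp, if_pos hpt]; exact hS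
      · exact S.lp_eq_zero hpne0 hpt fun l hl =>
          S.slm_eq_zero_of_sSize_le (by rw [hS]; exact zero_le)
    · have h1q : 1 ≤ p0.toReal := by
        have := ENNReal.toReal_mono hp0t h0; simpa using this
      have hsl : ∀ l : ℝ≥0∞, 0 < l → S0.slm F0 l = 0 :=
        S0.slm_zero_of_lp_eq_zero h1q hp0t hz0
      have hpt : p ≠ ⊤ := by
        intro hT'
        rw [hT'] at hp
        simp only [ENNReal.inv_top, eq_comm, add_eq_zero] at hp
        exact hp0t (ENNReal.inv_eq_zero.mp hp.1.1)
      refine S.lp_eq_zero hpne0 hpt fun l hl => ?_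
      refine S.slm_all_zero Pi (fun ε hε hεt => ?_) l
      obtain ⟨c, hcc, hcg, hct, hcs⟩ := S0.exists_cover_vanish F0 hsl hε hεt
      refine ⟨c, hcc, hcg, hct, ?_⟩
      have hB : MeasurableSet (⋃₀ c) :=
        MeasurableSet.sUnion hcc fun E hE => b.genMeas E (hcg hE)
      rw [hindPi]
      refine le_antisymm ((hsize' _ _ _ (m0.indicator hB.compl) (m1.indicator hB.compl)
        (m2.indicator hB.compl)).trans ?_) (zero_le)
      rw [hcs, zero_mul, zero_mul, mul_zero]
  have hvanish1 : A1 = 0 → S.lp p Pi = 0 := by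
    intro hz1
    rcases eq_or_ne p1 ⊤ with hp1t | hp1t
    · have hs1 : S1.sSize F1 = 0 := by
        rw [hA1def, OuterSize.lp, if_pos hp1t] at hz1; exact hz1
      have hS : S.sSize Pi = 0 := le_antisymm
        ((hsize' F0 F1 F2 m0 m1 m2).trans (by rw [hs1]; simp)) (zero_le)
      rcases eq_or_ne p ⊤ with hpt | hpt
      · rw [OuterSize.lp, if_pos hpt]; exact hS
      · exact S.lp_eq_zero hpne0 hpt fun l hl =>
          S.slm_eq_zero_of_sSize_le (by rw [hS]; exact zero_le)
    · have h1q : 1 ≤ p1.toReal := by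
        have := ENNReal.toReal_mono hp1t h1; simpa using this
      have hsl : ∀ l : ℝ≥0∞, 0 < l → S1.slm F1 l = 0 :=
        S1.slm_zero_of_lp_eq_zero h1q hp1t hz1
      have hpt : p ≠ ⊤ := by
        intro hT'
        rw [hT'] at hp
        simp only [ENNReal.inv_top, eq_comm, add_eq_zero] at hp
        exact hp1t (ENNReal.inv_eq_zero.mp hp.1.2)
      refine S.lp_eq_zero hpne0 hpt fun l hl => ?_
      refine S.slm_all_zero Pi (fun ε hε hεt => ?_) l
      obtain ⟨c, hcc, hcg, hct, hcs⟩ := S1.exists_cover_vanish F1 hsl hε hεt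
      refine ⟨c, hcc, hcg, hct, ?_⟩
      have hB : MeasurableSet (⋃₀ c) :=
        MeasurableSet.sUnion hcc fun E hE => b.genMeas E (hcg hE)
      rw [hindPi]
      refine le_antisymm ((hsize' _ _ _ (m0.indicator hB.compl) (m1.indicator hB.compl)
        (m2.indicator hB.compl)).trans ?_) (zero_le)
      rw [hcs, mul_zero, zero_mul, mul_zero]
  have hvanish2 : A2 = 0 → S.lp p Pi = 0 := by
    intro hz2
    rcases eq_or_ne p2 ⊤ with hp2t | hp2t
    · have hs2 : S2.sSize F2 = 0 := by
        rw [hA2def, OuterSize.lp, if_pos hp2t] at hz2; exact hz2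
      have hS : S.sSize Pi = 0 := le_antisymm
        ((hsize' F0 F1 F2 m0 m1 m2).trans (by rw [hs2]; simp)) (zero_le)
      rcases eq_or_ne p ⊤ with hpt | hpt
      · rw [OuterSize.lp, if_pos hpt]; exact hS
      · exact S.lp_eq_zero hpne0 hpt fun l hl =>
          S.slm_eq_zero_of_sSize_le (by rw [hS]; exact zero_le)
    · have h1q : 1 ≤ p2.toReal := by
        have := ENNReal.toReal_mono hp2t h2; simpa using this
      have hsl : ∀ l : ℝ≥0∞, 0 < l → S2.slm F2 l = 0 :=
        S2.slm_zero_of_lp_eq_zero h1q hp2t hz2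
      have hpt : p ≠ ⊤ := by
        intro hT'
        rw [hT'] at hp
        simp only [ENNReal.inv_top, eq_comm, add_eq_zero] at hp
        exact hp2t (ENNReal.inv_eq_zero.mp hp.2)
      refine S.lp_eq_zero hpne0 hpt fun l hl => ?_
      refine S.slm_all_zero Pi (fun ε hε hεt => ?_) l
      obtain ⟨c, hcc, hcg, hct, hcs⟩ := S2.exists_cover_vanish F2 hsl hε hεt
      refine ⟨c, hcc, hcg, hct, ?_⟩
      have hB : MeasurableSet (⋃₀ c) :=
        MeasurableSet.sUnion hcc fun E hE => b.genMeas E (hcg hE)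
      rw [hindPi]
      refine le_antisymm ((hsize' _ _ _ (m0.indicator hB.compl) (m1.indicator hB.compl)
        (m2.indicator hB.compl)).trans ?_) (zero_le)
      rw [hcs, mul_zero, mul_zero]
  by_cases hz0 : A0 = 0
  · rw [hvanish0 hz0]; exact zero_le
  by_cases hz1 : A1 = 0
  · rw [hvanish1 hz1]; exact zero_le
  by_cases hz2 : A2 = 0
  · rw [hvanish2 hz2]; exact zero_le
  -- top cases
  by_cases htop : A0 = ⊤ ∨ A1 = ⊤ ∨ A2 = ⊤
  · have hprod : A0 * A1 * A2 = ⊤ := by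
      rcases htop with h | h | h <;>
        simp [h, ENNReal.mul_eq_top, hz0, hz1, hz2]
    have : 27 * C0' * K * (A0 * A1 * A2) = ⊤ := by
      rw [hprod, ENNReal.mul_top]
      exact mul_ne_zero (mul_ne_zero (by norm_num) hC0'0) hK0
    rw [this]
    exact le_top
  push_neg at htop
  obtain ⟨ht0, ht1, ht2⟩ := htop
  -- the `p = ⊤` case
  rcases eq_or_ne p ⊤ with hpt | hpt
  · have hptop := hp
    rw [hpt] at hptop
    simp only [ENNReal.inv_top, eq_comm, add_eq_zero] at hptop
    obtain ⟨⟨e0, e1⟩, e2⟩ := hptop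
    have hp0T : p0 = ⊤ := ENNReal.inv_eq_zero.mp e0
    have hp1T : p1 = ⊤ := ENNReal.inv_eq_zero.mp e1
    have hp2T : p2 = ⊤ := ENNReal.inv_eq_zero.mp e2
    rw [OuterSize.lp, if_pos hpt]
    have hA0' : A0 = S0.sSize F0 := by rw [hA0def, OuterSize.lp, if_pos hp0T]
    have hA1' : A1 = S1.sSize F1 := by rw [hA1def, OuterSize.lp, if_pos hp1T]
    have hA2' : A2 = S2.sSize F2 := by rw [hA2def, OuterSize.lp, if_pos hp2T]
    calc S.sSize Pi ≤ C0' * (S0.sSize F0 * S1.sSize F1 * S2.sSize F2) :=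
          hsize' F0 F1 F2 m0 m1 m2
      _ = C0' * (A0 * A1 * A2) := by rw [hA0', hA1', hA2']
      _ ≤ 27 * C0' * K * (A0 * A1 * A2) := by
          refine mul_le_mul_left ?_ _
          calc C0' = 1 * C0' * 1 := by ring
            _ ≤ 27 * C0' * K := mul_le_mul' (mul_le_mul' (by norm_num) le_rfl) hK1
  -- main case: `p` finite
  have hq0 : 0 < p.toReal := ENNReal.toReal_pos hpne0 hpt
  set q : ℝ := p.toReal with hqdef
  set r0 : ℝ := q * p0.toReal⁻¹ with hr0def
  set r1 : ℝ := q * p1.toReal⁻¹ with hr1def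
  set r2 : ℝ := q * p2.toReal⁻¹ with hr2def
  have hr0nn : 0 ≤ r0 := mul_nonneg hq0.le (inv_nonneg.mpr ENNReal.toReal_nonneg)
  have hr1nn : 0 ≤ r1 := mul_nonneg hq0.le (inv_nonneg.mpr ENNReal.toReal_nonneg)
  have hr2nn : 0 ≤ r2 := mul_nonneg hq0.le (inv_nonneg.mpr ENNReal.toReal_nonneg)
  have hrsum : r0 + r1 + r2 = 1 := by
    have e : q⁻¹ = p0.toReal⁻¹ + p1.toReal⁻¹ + p2.toReal⁻¹ := by
      have h' := congrArg ENNReal.toReal hp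
      rwa [ENNReal.toReal_add (ENNReal.add_ne_top.mpr
          ⟨(hi0.trans_lt ENNReal.one_lt_top).ne, (hi1.trans_lt ENNReal.one_lt_top).ne⟩)
          (hi2.trans_lt ENNReal.one_lt_top).ne,
        ENNReal.toReal_add (hi0.trans_lt ENNReal.one_lt_top).ne
          (hi1.trans_lt ENNReal.one_lt_top).ne,
        ENNReal.toReal_inv, ENNReal.toReal_inv, ENNReal.toReal_inv, ENNReal.toReal_inv] at h'
    rw [hr0def, hr1def, hr2def, ← mul_add, ← mul_add, ← e, mul_inv_cancel₀ hq0.ne']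
  set N : ℝ≥0∞ := (if p0 = ⊤ then 1 else A0) * (if p1 = ⊤ then 1 else A1) *
    (if p2 = ⊤ then 1 else A2) with hNdef
  set M : ℝ≥0∞ := (if p0 = ⊤ then A0 else 1) * (if p1 = ⊤ then A1 else 1) *
    (if p2 = ⊤ then A2 else 1) with hMdef
  have hN0 : N ≠ 0 := by
    refine mul_ne_zero (mul_ne_zero ?_ ?_) ?_ <;> split_ifs <;> simp [hz0, hz1, hz2]
  have hNt : N ≠ ⊤ := by
    refine ENNReal.mul_ne_top (ENNReal.mul_ne_top ?_ ?_) ?_ <;> split_ifs <;>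
      simp [ht0, ht1, ht2]
  have hM0 : M ≠ 0 := by
    refine mul_ne_zero (mul_ne_zero ?_ ?_) ?_ <;> split_ifs <;> simp [hz0, hz1, hz2]
  have hMt : M ≠ ⊤ := by
    refine ENNReal.mul_ne_top (ENNReal.mul_ne_top ?_ ?_) ?_ <;> split_ifs <;>
      simp [ht0, ht1, ht2]
  have hMN : M * N = A0 * A1 * A2 := by
    by_cases e0 : p0 = ⊤ <;> by_cases e1 : p1 = ⊤ <;> by_cases e2 : p2 = ⊤ <;>
      simp only [hMdef, hNdef, e0, e1, e2, if_true, if_false] <;> ring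
  set cc : ℝ≥0∞ := C0' * K * M with hccdef
  have hcc0 : cc ≠ 0 := mul_ne_zero (mul_ne_zero hC0'0 hK0) hM0
  have hcct : cc ≠ ⊤ := ENNReal.mul_ne_top (ENNReal.mul_ne_top hC0't hKt) hMt
  set mm : ℝ≥0∞ := cc * N with hmmdef
  have hmm0 : mm ≠ 0 := mul_ne_zero hcc0 hN0
  have hmmt : mm ≠ ⊤ := ENNReal.mul_ne_top hcct hNt
  -- per-level inequality
  have hkey : ∀ t : ℝ, 0 < t → S.slm Pi (ENNReal.ofReal t)
      ≤ S0.slm F0 (A0 * (ENNReal.ofReal t / mm) ^ r0)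
        + S1.slm F1 (A1 * (ENNReal.ofReal t / mm) ^ r1)
        + S2.slm F2 (A2 * (ENNReal.ofReal t / mm) ^ r2) := by
    intro t ht
    set x : ℝ≥0∞ := ENNReal.ofReal t / mm with hxdef
    have hx0 : x ≠ 0 := by
      rw [hxdef]
      simp only [ne_eq, ENNReal.div_eq_zero_iff, not_or]
      exact ⟨by simp [ENNReal.ofReal_eq_zero]; linarith, hmmt⟩
    have hxt : x ≠ ⊤ := by
      rw [hxdef]
      simp [ENNReal.div_eq_top, hmm0, ENNReal.ofReal_ne_top]
    have hlev := key_levelset S0 S1 S2 S T C0' hsize' F0 F1 F2 m0 m1 m2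
      (A0 * x ^ r0) (A1 * x ^ r1) (A2 * x ^ r2)
    have hlevel : C0' * (S0.K * (A0 * x ^ r0) * (S1.K * (A1 * x ^ r1))
        * (S2.K * (A2 * x ^ r2))) = ENNReal.ofReal t := by
      calc C0' * (S0.K * (A0 * x ^ r0) * (S1.K * (A1 * x ^ r1)) * (S2.K * (A2 * x ^ r2)))
          = C0' * K * (A0 * A1 * A2) * (x ^ r0 * x ^ r1 * x ^ r2) := by
            rw [hKdef]; ring
        _ = C0' * K * (A0 * A1 * A2) * x := by
            rw [← ENNReal.rpow_add _ _ hx0 hxt, ← ENNReal.rpow_add _ _ hx0 hxt, hrsum,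
              ENNReal.rpow_one]
        _ = cc * (N * x) := by rw [← hMN, hccdef]; ring
        _ = cc * (N * (ENNReal.ofReal t / cc / N)) := by
            rw [hxdef, hmmdef]
            congr 2
            rw [div_eq_mul_inv, div_eq_mul_inv, div_eq_mul_inv,
              ENNReal.mul_inv (Or.inl hcc0) (Or.inl hcct), mul_assoc]
        _ = ENNReal.ofReal t := by
            rw [ENNReal.mul_div_cancel hN0 hNt, ENNReal.mul_div_cancel hcc0 hcct]
    rw [← hlevel]
    exact hlev
  -- measurability of the summands
  have hw : Measurable fun t : ℝ => ENNReal.ofReal (q * t ^ (q - 1)) :=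
    ((measurable_id.pow measurable_const).const_mul q).ennreal_ofReal
  have hg0 : Measurable fun t : ℝ => S0.slm F0 (A0 * (ENNReal.ofReal t / mm) ^ r0) := by
    refine Antitone.measurable fun t1 t2 hle => ?_
    exact S0.slm_anti (mul_le_mul_right (ENNReal.rpow_le_rpow
      (ENNReal.div_le_div_right (ENNReal.ofReal_le_ofReal hle) mm) hr0nn) _)
  have hg1 : Measurable fun t : ℝ => S1.slm F1 (A1 * (ENNReal.ofReal t / mm) ^ r1) := by
    refine Antitone.measurable fun t1 t2 hle => ?_
    exact S1.slm_anti (mul_le_mul_right (ENNReal.rpow_le_rpow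
      (ENNReal.div_le_div_right (ENNReal.ofReal_le_ofReal hle) mm) hr1nn) _)
  have hg2 : Measurable fun t : ℝ => S2.slm F2 (A2 * (ENNReal.ofReal t / mm) ^ r2) := by
    refine Antitone.measurable fun t1 t2 hle => ?_
    exact S2.slm_anti (mul_le_mul_right (ENNReal.rpow_le_rpow
      (ENNReal.div_le_div_right (ENNReal.ofReal_le_ofReal hle) mm) hr2nn) _)
  -- split the integral
  have hsplit : (∫⁻ t in Set.Ioi (0:ℝ),
      ENNReal.ofReal (q * t ^ (q - 1)) * S.slm Pi (ENNReal.ofReal t))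
      ≤ (∫⁻ t in Set.Ioi (0:ℝ), ENNReal.ofReal (q * t ^ (q - 1)) *
          S0.slm F0 (A0 * (ENNReal.ofReal t / mm) ^ r0))
        + (∫⁻ t in Set.Ioi (0:ℝ), ENNReal.ofReal (q * t ^ (q - 1)) *
          S1.slm F1 (A1 * (ENNReal.ofReal t / mm) ^ r1))
        + (∫⁻ t in Set.Ioi (0:ℝ), ENNReal.ofReal (q * t ^ (q - 1)) *
          S2.slm F2 (A2 * (ENNReal.ofReal t / mm) ^ r2)) := by
    have hmono : (∫⁻ t in Set.Ioi (0:ℝ),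
        ENNReal.ofReal (q * t ^ (q - 1)) * S.slm Pi (ENNReal.ofReal t))
        ≤ ∫⁻ t in Set.Ioi (0:ℝ),
          (ENNReal.ofReal (q * t ^ (q - 1)) * S0.slm F0 (A0 * (ENNReal.ofReal t / mm) ^ r0)
          + ENNReal.ofReal (q * t ^ (q - 1)) * S1.slm F1 (A1 * (ENNReal.ofReal t / mm) ^ r1)
          + ENNReal.ofReal (q * t ^ (q - 1)) *
              S2.slm F2 (A2 * (ENNReal.ofReal t / mm) ^ r2)) := by
      refine MeasureTheory.lintegral_mono_ae ?_
      filter_upwards [MeasureTheory.ae_restrict_mem measurableSet_Ioi] with t ht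
      calc ENNReal.ofReal (q * t ^ (q - 1)) * S.slm Pi (ENNReal.ofReal t)
          ≤ ENNReal.ofReal (q * t ^ (q - 1)) *
            (S0.slm F0 (A0 * (ENNReal.ofReal t / mm) ^ r0)
              + S1.slm F1 (A1 * (ENNReal.ofReal t / mm) ^ r1)
              + S2.slm F2 (A2 * (ENNReal.ofReal t / mm) ^ r2)) :=
            mul_le_mul_right (hkey t ht) _
        _ = _ := by ring
    refine hmono.trans (le_of_eq ?_)
    rw [MeasureTheory.lintegral_add_left (show Measurable fun t : ℝ =>
        ENNReal.ofReal (q * t ^ (q - 1)) * S0.slm F0 (A0 * (ENNReal.ofReal t / mm) ^ r0)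
        + ENNReal.ofReal (q * t ^ (q - 1)) * S1.slm F1 (A1 * (ENNReal.ofReal t / mm) ^ r1)
        from (hw.mul hg0).add (hw.mul hg1)),
      MeasureTheory.lintegral_add_left (show Measurable fun t : ℝ =>
        ENNReal.ofReal (q * t ^ (q - 1)) * S0.slm F0 (A0 * (ENNReal.ofReal t / mm) ^ r0)
        from hw.mul hg0)]
  -- evaluate each term
  have hT0 : (∫⁻ t in Set.Ioi (0:ℝ), ENNReal.ofReal (q * t ^ (q - 1)) *
      S0.slm F0 (A0 * (ENNReal.ofReal t / mm) ^ r0)) ≤ mm ^ q :=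
    S0.term_eval F0 h0 hq0 hmm0 hmmt hz0 ht0
  have hT1 : (∫⁻ t in Set.Ioi (0:ℝ), ENNReal.ofReal (q * t ^ (q - 1)) *
      S1.slm F1 (A1 * (ENNReal.ofReal t / mm) ^ r1)) ≤ mm ^ q :=
    S1.term_eval F1 h1 hq0 hmm0 hmmt hz1 ht1
  have hT2 : (∫⁻ t in Set.Ioi (0:ℝ), ENNReal.ofReal (q * t ^ (q - 1)) *
      S2.slm F2 (A2 * (ENNReal.ofReal t / mm) ^ r2)) ≤ mm ^ q :=
    S2.term_eval F2 h2 hq0 hmm0 hmmt hz2 ht2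
  have hInt : (∫⁻ t in Set.Ioi (0:ℝ),
      ENNReal.ofReal (q * t ^ (q - 1)) * S.slm Pi (ENNReal.ofReal t)) ≤ 3 * mm ^ q := by
    refine hsplit.trans ?_
    calc _ ≤ mm ^ q + mm ^ q + mm ^ q := add_le_add (add_le_add hT0 hT1) hT2
      _ = 3 * mm ^ q := by ring
  -- the exponent bound `3 ^ (1/q) ≤ 27`
  have hq13 : (1:ℝ)/3 ≤ q := by
    have hple : p⁻¹ ≤ 3 := by
      rw [hp]
      calc p0⁻¹ + p1⁻¹ + p2⁻¹ ≤ 1 + 1 + 1 := add_le_add (add_le_add hi0 hi1) hi2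
        _ = 3 := by norm_num
    have h3p : (3:ℝ≥0∞)⁻¹ ≤ p := by
      rw [← ENNReal.inv_le_inv, inv_inv]
      exact hple
    have h' := ENNReal.toReal_mono hpt h3p
    have h33 : ((3:ℝ≥0∞)).toReal = 3 := by simp
    rw [ENNReal.toReal_inv, h33] at h'
    rw [hqdef]
    linarith
  have h3 : (3:ℝ≥0∞) ^ (1/q) ≤ 27 := by
    have h13 : 1/q ≤ 3 := by
      rw [div_le_iff₀ hq0]
      nlinarith
    calc (3:ℝ≥0∞) ^ (1/q) ≤ 3 ^ (3:ℝ) := ENNReal.rpow_le_rpow_of_exponent_le (by norm_num) h13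
      _ = 27 := by
        rw [show (3:ℝ) = ((3:ℕ):ℝ) by norm_num, ENNReal.rpow_natCast]
        norm_num
  -- conclude
  calc S.lp p Pi
      = (∫⁻ t in Set.Ioi (0:ℝ),
          ENNReal.ofReal (q * t ^ (q - 1)) * S.slm Pi (ENNReal.ofReal t)) ^ (1/q) := by
        rw [OuterSize.lp, if_neg hpt]
    _ ≤ (3 * mm ^ q) ^ (1/q) := ENNReal.rpow_le_rpow hInt (by positivity)
    _ = 3 ^ (1/q) * mm := by
        rw [ENNReal.mul_rpow_of_nonneg _ _ (by positivity), ← ENNReal.rpow_mul,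
          mul_one_div_cancel hq0.ne', ENNReal.rpow_one]
    _ ≤ 27 * mm := mul_le_mul_left h3 _
    _ = 27 * C0' * K * (A0 * A1 * A2) := by
        rw [hmmdef, hccdef, ← hMN]; ring
end
end

section
/- Radon–Nikodym-type domination: Let 𝕏 be a Polish space with an outer structure (𝔼, σ, X, S) such that 𝕏 is a countable union of generating sets. If 𝔪 is a positive Borel measure on 𝕏 with ∫_E ‖F(x)‖_X d𝔪(x) ≲ ‖F‖_{S(E)} σ(E) for all E ∈ 𝔼 and all Borel F : 𝕏 → X, and if σ(A) = 0 implies 𝔪(A) = 0 for Borel A, then ∫_𝕏 ‖F(x)‖_X d𝔪(x) ≲ ‖F‖_{L¹_σ S} for all Borel F : 𝕏 → X. -/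
open scoped ENNReal NNReal Classical

noncomputable section


variable {Xs : Type*} [MeasurableSpace Xs] {b : OuterBase Xs}
  {X : Type*} [NormedAddCommGroup X] [NormedSpace ℂ X]

open MeasureTheory

namespace Stmt12Aux

lemma om_mono {A B : Set Xs} (h : A ⊆ B) : b.om A ≤ b.om B := by
  refine le_iInf fun c => le_iInf fun hc => le_iInf fun hg => le_iInf fun hcov => ?_
  exact iInf_le_of_le c <| iInf_le_of_le hc <| iInf_le_of_le hg <|
    iInf_le_of_le (h.trans hcov) le_rfl

lemma om_le_pre {E : Set Xs} (hE : E ∈ b.gen) : b.om E ≤ b.pre E := by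
  refine le_trans (iInf_le_of_le {E} <| iInf_le_of_le (Set.countable_singleton E) <|
    iInf_le_of_le (by simpa using hE) <|
    iInf_le_of_le (Set.subset_sUnion_of_mem rfl) le_rfl) ?_
  rw [tsum_singleton]

lemma slm_anti (S : OuterSize b X) (F : Xs → X) {l l' : ℝ≥0∞} (h : l ≤ l') :
    S.slm F l' ≤ S.slm F l := by
  refine le_iInf fun A => le_iInf fun hA => ?_
  exact iInf_le_of_le A (iInf_le_of_le (hA.trans h) le_rfl)

lemma size_le_sSize (S : OuterSize b X) {E : Set Xs} (hE : E ∈ b.gen) (F : Xs → X) :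
    S.size E F ≤ S.sSize F :=
  le_iSup₂ (f := fun E (_ : E ∈ b.gen) => S.size E F) E hE

lemma ind_ind {s t : Set Xs} (h : s ⊆ t) (F : Xs → X) :
    s.indicator F = s.indicator (t.indicator F) := by
  funext x
  by_cases hx : x ∈ s
  · rw [Set.indicator_of_mem hx, Set.indicator_of_mem hx, Set.indicator_of_mem (h hx)]
  · rw [Set.indicator_of_notMem hx, Set.indicator_of_notMem hx]

lemma size_compl_ind (S : OuterSize b X) {E : Set Xs} (hE : E ∈ b.gen) {D : Set Xs}
    (hD : ∃ c : Set (Set Xs), c.Countable ∧ c ⊆ b.gen ∧ D = ⋃₀ c) (H : Xs → X) :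
    S.size E (Dᶜ.indicator H) ≤ S.C * (1 + S.C) * S.size E H := by
  have key : Dᶜ.indicator H = H + (-1 : ℂ) • (D.indicator H) := by
    funext x
    show Dᶜ.indicator H x = H x + (-1 : ℂ) • (D.indicator H x)
    by_cases hx : x ∈ D
    · rw [Set.indicator_of_notMem (by simpa using hx), Set.indicator_of_mem hx]
      simp
    · rw [Set.indicator_of_mem (by simpa using hx), Set.indicator_of_notMem hx]
      simp
  calc S.size E (Dᶜ.indicator H) = S.size E (H + (-1 : ℂ) • (D.indicator H)) := by rw [key]
    _ ≤ S.C * (S.size E H + S.size E ((-1 : ℂ) • (D.indicator H))) := S.tri E hE _ _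
    _ = S.C * (S.size E H + S.size E (D.indicator H)) := by
        rw [S.homog E hE]; norm_num
    _ ≤ S.C * (S.size E H + S.C * S.size E H) := by
        gcongr
        exact S.uncond E hE D hD H
    _ = S.C * (1 + S.C) * S.size E H := by ring

lemma two_zpow_mul (a c : ℤ) : (2 : ℝ≥0∞) ^ a * 2 ^ c = 2 ^ (a + c) :=
  (ENNReal.zpow_add two_ne_zero ENNReal.ofNat_ne_top a c).symm

lemma two_zpow_ne_top (a : ℤ) : (2 : ℝ≥0∞) ^ a ≠ ⊤ :=
  (ENNReal.zpow_lt_top two_ne_zero ENNReal.ofNat_ne_top a).ne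

lemma two_zpow_pos (a : ℤ) : (0 : ℝ≥0∞) < 2 ^ a :=
  ENNReal.zpow_pos two_ne_zero ENNReal.ofNat_ne_top a

lemma two_zpow_neg_nat (n : ℕ) : (2 : ℝ≥0∞) ^ (-(n : ℤ)) = 2⁻¹ ^ n := by
  rw [ENNReal.zpow_neg, ← ENNReal.inv_pow, zpow_natCast]

lemma two_zpow_neg_le_one (n : ℕ) : (2 : ℝ≥0∞) ^ (-(n : ℤ)) ≤ 1 := by
  rw [two_zpow_neg_nat]
  exact pow_le_one' (ENNReal.inv_le_one.2 one_le_two) n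

lemma two_zpow_two : (2 : ℝ≥0∞) ^ (2 : ℤ) = 4 := by
  rw [show (2 : ℤ) = ((2 : ℕ) : ℤ) from rfl, zpow_natCast]
  norm_num

lemma ofReal_two_zpow (k : ℤ) : ENNReal.ofReal ((2 : ℝ) ^ k) = (2 : ℝ≥0∞) ^ k := by
  obtain ⟨n, rfl | rfl⟩ := k.eq_nat_or_neg
  · rw [zpow_natCast, zpow_natCast, ENNReal.ofReal_pow (by norm_num)]
    norm_num
  · rw [zpow_neg, zpow_natCast, ENNReal.zpow_neg,
      zpow_natCast, ENNReal.ofReal_inv_of_pos (by positivity), ENNReal.ofReal_pow (by norm_num)]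
    norm_num

lemma tsum_geo : ∑' n : ℕ, (2 : ℝ≥0∞)⁻¹ ^ n = 2 := by
  rw [ENNReal.tsum_geometric, ENNReal.one_sub_inv_two, inv_inv]

lemma eq_zero_of_le_geo {M x : ℝ≥0∞} (hM : M ≠ ⊤) (h : ∀ n : ℕ, x ≤ M * 2⁻¹ ^ n) : x = 0 := by
  by_contra hx
  rcases eq_or_ne M 0 with rfl | hM0
  · exact hx (le_antisymm (by simpa using h 0) zero_le)
  · have hdiv : x / M ≠ 0 := by simp [ENNReal.div_eq_zero_iff, hx, hM]
    obtain ⟨n, hn⟩ := ENNReal.exists_inv_two_pow_lt hdiv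
    have h1 : M * 2⁻¹ ^ n < M * (x / M) := (ENNReal.mul_lt_mul_iff_right hM0 hM).2 hn
    exact (h n).not_gt (h1.trans_le ENNReal.mul_div_le)

def natEquiv (k : ℤ) : ℕ ≃ {j : ℤ // k ≤ j} where
  toFun n := ⟨k + n, by omega⟩
  invFun j := (j.1 - k).toNat
  left_inv n := by simp
  right_inv j := by
    ext
    simp only []
    omega

lemma natEquiv_coe (k : ℤ) (n : ℕ) : ((natEquiv k n : {j : ℤ // k ≤ j}) : ℤ) = k + n := rfl



end Stmt12Aux


/-- Radon–Nikodym-type domination: if a positive Borel measure `𝔪`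
is dominated on generating sets by the size times the outer measure, and is absolutely
continuous with respect to the outer measure, then
`∫ ‖F‖ d𝔪 ≲ ‖F‖_{L¹_σ S}` for all Borel `F`. -/
theorem stmt12 (Xs : Type) [TopologicalSpace Xs] [PolishSpace Xs]
    [MeasurableSpace Xs] [BorelSpace Xs]
    (b : OuterBase Xs)
    (hcover : ∃ c : Set (Set Xs), c.Countable ∧ c ⊆ b.gen ∧ ⋃₀ c = Set.univ)
    (X : Type) [NormedAddCommGroup X] [NormedSpace ℂ X]
    (S : OuterSize b X) (m : Measure Xs)
    (C0 : ℝ≥0∞) (hC0 : C0 ≠ ⊤)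
    (hdom : ∀ E ∈ b.gen, ∀ F : Xs → X, StronglyMeasurable F →
      ∫⁻ x in E, (‖F x‖₊ : ℝ≥0∞) ∂m ≤ C0 * (S.size E F * b.om E))
    (habs : ∀ A : Set Xs, b.om A = 0 → m A = 0) :
    ∃ C : ℝ≥0∞, C ≠ ⊤ ∧ ∀ F : Xs → X, StronglyMeasurable F →
      ∫⁻ x, (‖F x‖₊ : ℝ≥0∞) ∂m ≤ C * S.lp 1 F := by
  classical
  open Stmt12Aux in
  refine ⟨4 * C0 * (S.C * (1 + S.C)) + 1, ?_, ?_⟩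
  · have hQt : S.C * (1 + S.C) ≠ ⊤ :=
      ENNReal.mul_ne_top S.C_ne_top (ENNReal.add_ne_top.2 ⟨ENNReal.one_ne_top, S.C_ne_top⟩)
    exact ENNReal.add_ne_top.2 ⟨ENNReal.mul_ne_top
      (ENNReal.mul_ne_top (by norm_num) hC0) hQt, ENNReal.one_ne_top⟩
  intro F hF
  set Q : ℝ≥0∞ := S.C * (1 + S.C) with hQdef
  have hQt : Q ≠ ⊤ :=
    ENNReal.mul_ne_top S.C_ne_top (ENNReal.add_ne_top.2 ⟨ENNReal.one_ne_top, S.C_ne_top⟩)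
  -- the L¹ quasinorm is the integral of the superlevel measure
  have hI : S.lp 1 F = ∫⁻ t in Set.Ioi (0 : ℝ), S.slm F (ENNReal.ofReal t) := by
    simp only [OuterSize.lp, ENNReal.one_ne_top, if_false, ENNReal.toReal_one, sub_self,
      Real.rpow_zero, mul_one, one_mul, ENNReal.ofReal_one, one_div_one, ENNReal.rpow_one]
  rcases eq_or_ne (S.lp 1 F) ⊤ with htop | hfin
  · rw [htop, ENNReal.mul_top (zero_lt_one.trans_le le_add_self).ne']
    exact le_top
  set Iv : ℝ≥0∞ := ∫⁻ t in Set.Ioi (0 : ℝ), S.slm F (ENNReal.ofReal t) with hIv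
  have hIvfin : Iv ≠ ⊤ := hI ▸ hfin
  -- per-scale lower bounds on the integral
  have hJ1 : ∀ k : ℤ, (2 : ℝ≥0∞) ^ (k - 1) * S.slm F (2 ^ k) ≤
      ∫⁻ t in Set.Ioc ((2 : ℝ) ^ (k - 1)) ((2 : ℝ) ^ k), S.slm F (ENNReal.ofReal t) := by
    intro k
    have hvol : (volume : Measure ℝ) (Set.Ioc ((2 : ℝ) ^ (k - 1)) ((2 : ℝ) ^ k))
        = (2 : ℝ≥0∞) ^ (k - 1) := by
      rw [Real.volume_Ioc, show (2 : ℝ) ^ k - 2 ^ (k - 1) = 2 ^ (k - 1) by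
        rw [show k = (k - 1) + 1 by ring, zpow_add_one₀ (two_ne_zero)]; ring]
      exact ofReal_two_zpow _
    calc (2 : ℝ≥0∞) ^ (k - 1) * S.slm F (2 ^ k)
        = ∫⁻ _ in Set.Ioc ((2 : ℝ) ^ (k - 1)) ((2 : ℝ) ^ k), S.slm F (2 ^ k) := by
          rw [setLIntegral_const, hvol, mul_comm]
      _ ≤ ∫⁻ t in Set.Ioc ((2 : ℝ) ^ (k - 1)) ((2 : ℝ) ^ k), S.slm F (ENNReal.ofReal t) := by
          refine setLIntegral_mono' measurableSet_Ioc fun t ht => ?_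
          refine slm_anti S F ?_
          rw [← ofReal_two_zpow]
          exact ENNReal.ofReal_le_ofReal ht.2
  have hJsum : ∑' k : ℤ, ∫⁻ t in Set.Ioc ((2 : ℝ) ^ (k - 1)) ((2 : ℝ) ^ k),
      S.slm F (ENNReal.ofReal t) ≤ Iv := by
    have hdisj : Pairwise (Function.onFun Disjoint
        fun k : ℤ => Set.Ioc ((2 : ℝ) ^ (k - 1)) ((2 : ℝ) ^ k)) := by
      have key : ∀ k l : ℤ, k < l → Disjoint (Set.Ioc ((2 : ℝ) ^ (k - 1)) ((2 : ℝ) ^ k))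
          (Set.Ioc ((2 : ℝ) ^ (l - 1)) ((2 : ℝ) ^ l)) := by
        intro k l hkl
        rw [Set.Ioc_disjoint_Ioc]
        refine le_trans (min_le_left _ _) (le_trans ?_ (le_max_right _ _))
        exact zpow_le_zpow_right₀ one_le_two (by omega)
      intro k l hkl
      rcases hkl.lt_or_gt with h | h
      · exact key k l h
      · exact (key l k h).symm
    have hsub : (⋃ k : ℤ, Set.Ioc ((2 : ℝ) ^ (k - 1)) ((2 : ℝ) ^ k)) ⊆ Set.Ioi (0 : ℝ) := by
      rintro t ⟨s, ⟨k, rfl⟩, ht⟩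
      exact lt_trans (zpow_pos (by norm_num) _) ht.1
    rw [← lintegral_iUnion (fun k => measurableSet_Ioc) hdisj]
    exact lintegral_mono_set hsub
  have hslm_le : ∀ k : ℤ, S.slm F (2 ^ k) ≤ 2 ^ (1 - k) * Iv := by
    intro k
    calc S.slm F (2 ^ k) = 2 ^ (1 - k) * (2 ^ (k - 1) * S.slm F (2 ^ k)) := by
          rw [← mul_assoc, two_zpow_mul, show (1 - k) + (k - 1) = 0 by ring, zpow_zero, one_mul]
      _ ≤ 2 ^ (1 - k) * Iv := by
          refine mul_le_mul_right ((hJ1 k).trans ?_) _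
          exact le_trans (ENNReal.le_tsum k) hJsum
  have hslm_fin : ∀ k : ℤ, S.slm F (2 ^ k) ≠ ⊤ := fun k =>
    ((hslm_le k).trans_lt (ENNReal.mul_lt_top (two_zpow_ne_top _).lt_top hIvfin.lt_top)).ne
  -- main estimate with error ε
  have main : ∀ ε : ℝ≥0∞, 0 < ε → ε ≠ ⊤ →
      ∫⁻ x, (‖F x‖₊ : ℝ≥0∞) ∂m ≤ 4 * C0 * Q * Iv + 4 * C0 * Q * ε := by
    intro ε hε0 hεt
    set e : ℤ ≃ ℕ := Denumerable.eqv ℤ with he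
    set epsk : ℤ → ℝ≥0∞ := fun k => ε * 2 ^ (-(k + 1)) * 2 ^ (-(e k : ℤ)) with hepsk
    have hek0 : ∀ k, epsk k ≠ 0 := fun k =>
      (ENNReal.mul_pos (ENNReal.mul_pos hε0.ne' (two_zpow_pos _).ne').ne'
        (two_zpow_pos _).ne').ne'
    have hekt : ∀ k, epsk k ≠ ⊤ := fun k =>
      ENNReal.mul_ne_top (ENNReal.mul_ne_top hεt (two_zpow_ne_top _)) (two_zpow_ne_top _)
    -- choose near-optimal superlevel sets
    have hchooseA : ∀ k : ℤ, ∃ A : Set Xs,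
        S.sSize (Aᶜ.indicator F) ≤ 2 ^ k ∧ b.om A ≤ S.slm F (2 ^ k) + epsk k := by
      intro k
      have hlt : S.slm F (2 ^ k) < S.slm F (2 ^ k) + epsk k :=
        ENNReal.lt_add_right (hslm_fin k) (hek0 k)
      conv_lhs at hlt => rw [OuterSize.slm]
      obtain ⟨A, hA⟩ := iInf_lt_iff.mp hlt
      obtain ⟨hsz, hom⟩ := iInf_lt_iff.mp hA
      exact ⟨A, hsz, hom.le⟩
    choose A hA1 hA2 using hchooseA
    have homfin : ∀ k, b.om (A k) ≠ ⊤ := fun k =>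
      ((hA2 k).trans_lt (ENNReal.add_lt_top.2 ⟨(hslm_fin k).lt_top, (hekt k).lt_top⟩)).ne
    -- choose near-optimal covers
    have hchoosec : ∀ k : ℤ, ∃ c : Set (Set Xs), c.Countable ∧ c ⊆ b.gen ∧ A k ⊆ ⋃₀ c ∧
        ∑' E : c, b.pre E ≤ b.om (A k) + epsk k := by
      intro k
      have hlt : b.om (A k) < b.om (A k) + epsk k :=
        ENNReal.lt_add_right (homfin k) (hek0 k)
      conv_lhs at hlt => rw [OuterBase.om]
      obtain ⟨c, hc⟩ := iInf_lt_iff.mp hlt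
      obtain ⟨h1, hc⟩ := iInf_lt_iff.mp hc
      obtain ⟨h2, hc⟩ := iInf_lt_iff.mp hc
      obtain ⟨h3, hc⟩ := iInf_lt_iff.mp hc
      exact ⟨c, h1, h2, h3, hc.le⟩
    choose c hc1 hc2 hc3 hc4 using hchoosec
    set A' : ℤ → Set Xs := fun k => ⋃₀ c k with hA'
    have hA'meas : ∀ k, MeasurableSet (A' k) := fun k =>
      MeasurableSet.sUnion (hc1 k) (fun E hE => b.genMeas E (hc2 k hE))
    have hAA' : ∀ k, A k ⊆ A' k := fun k => hc3 k
    set D : ℤ → Set Xs := fun k => ⋃ (j : ℤ), ⋃ (_ : k ≤ j), A' j with hD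
    have hDmeas : ∀ k, MeasurableSet (D k) := fun k =>
      MeasurableSet.iUnion fun j => MeasurableSet.iUnion fun _ => hA'meas j
    have hAD : ∀ k j, k ≤ j → A' j ⊆ D k := fun k j hkj x hx => Set.mem_iUnion₂.mpr ⟨j, hkj, hx⟩
    have hDgenrep : ∀ k, ∃ cs : Set (Set Xs), cs.Countable ∧ cs ⊆ b.gen ∧ D k = ⋃₀ cs := by
      intro k
      refine ⟨⋃ (j : ℤ), ⋃ (_ : k ≤ j), c j, ?_, ?_, ?_⟩
      · exact Set.countable_iUnion fun j => Set.countable_iUnion fun _ => hc1 j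
      · exact Set.iUnion₂_subset fun j _ => hc2 j
      · simp only [hD, hA', Set.sUnion_iUnion]
    set Dall : Set Xs := ⋃ (j : ℤ), A' j with hDall
    have hDallmeas : MeasurableSet Dall := MeasurableSet.iUnion hA'meas
    have hDallrep : ∃ cs : Set (Set Xs), cs.Countable ∧ cs ⊆ b.gen ∧ Dall = ⋃₀ cs := by
      refine ⟨⋃ (j : ℤ), c j, Set.countable_iUnion fun j => hc1 j,
        Set.iUnion_subset fun j => hc2 j, ?_⟩
      simp only [hDall, hA', Set.sUnion_iUnion]
    -- cover premeasure sums
    have hpre_sum : ∀ k, ∑' E : c k, b.pre E ≤ S.slm F (2 ^ k) + 2 * epsk k := by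
      intro k
      refine (hc4 k).trans ?_
      calc b.om (A k) + epsk k ≤ (S.slm F (2 ^ k) + epsk k) + epsk k :=
            add_le_add_left (hA2 k) _
        _ = S.slm F (2 ^ k) + 2 * epsk k := by ring
    have hcov_sum : ∀ k, ∑' E : c k, b.om E ≤ S.slm F (2 ^ k) + 2 * epsk k := fun k =>
      (ENNReal.tsum_le_tsum fun E => om_le_pre (hc2 k E.2)).trans (hpre_sum k)
    -- size bound on complements of the D's
    have hsize : ∀ k : ℤ, ∀ E ∈ b.gen, S.size E ((D k)ᶜ.indicator F) ≤ Q * 2 ^ k := by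
      intro k E hE
      have hsub : (D k)ᶜ ⊆ (A k)ᶜ :=
        Set.compl_subset_compl.mpr ((hAA' k).trans (hAD k k le_rfl))
      rw [ind_ind hsub F]
      calc S.size E ((D k)ᶜ.indicator ((A k)ᶜ.indicator F))
          ≤ S.C * (1 + S.C) * S.size E ((A k)ᶜ.indicator F) :=
            size_compl_ind S hE (hDgenrep k) _
        _ ≤ Q * 2 ^ k := by
            rw [← hQdef]
            exact mul_le_mul_right ((size_le_sSize S hE _).trans (hA1 k)) Q
    -- F vanishes outside Dall
    have hNind : Dallᶜ.indicator F = 0 := by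
      apply S.nondeg
      intro E hE
      refine eq_zero_of_le_geo hQt fun n => ?_
      have hsub : Dallᶜ ⊆ (A (-(n : ℤ)))ᶜ :=
        Set.compl_subset_compl.mpr ((hAA' _).trans (Set.subset_iUnion A' (-(n : ℤ))))
      rw [ind_ind hsub F, ← two_zpow_neg_nat]
      calc S.size E (Dallᶜ.indicator ((A (-(n : ℤ)))ᶜ.indicator F))
          ≤ S.C * (1 + S.C) * S.size E ((A (-(n : ℤ)))ᶜ.indicator F) :=
            size_compl_ind S hE hDallrep _
        _ ≤ Q * 2 ^ (-(n : ℤ)) := by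
            rw [← hQdef]
            exact mul_le_mul_right ((size_le_sSize S hE _).trans (hA1 _)) Q
    -- the intersection of the D's is om-null
    have homD : ∀ k : ℤ, b.om (D k) ≤ (4 * Iv + 2 * ε) * 2 ^ (-k) := by
      intro k
      have hsubc : D k ⊆ ⋃₀ (⋃ (j : {j : ℤ // k ≤ j}), c j) := by
        intro x hx
        obtain ⟨j, hj, hxj⟩ := Set.mem_iUnion₂.mp hx
        obtain ⟨t, ht, hxt⟩ := hxj
        exact ⟨t, Set.mem_iUnion.mpr ⟨⟨j, hj⟩, ht⟩, hxt⟩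
      have step1 : b.om (D k) ≤ ∑' E : (⋃ (j : {j : ℤ // k ≤ j}), c j), b.pre E :=
        iInf_le_of_le (⋃ (j : {j : ℤ // k ≤ j}), c (j : ℤ)) <| iInf_le_of_le (Set.countable_iUnion fun j => hc1 j) <|
          iInf_le_of_le (Set.iUnion_subset fun j => hc2 j) <| iInf_le_of_le hsubc le_rfl
      have step2 : ∑' E : (⋃ (j : {j : ℤ // k ≤ j}), c j), b.pre E ≤
          ∑' (j : {j : ℤ // k ≤ j}), ∑' E : c (j : ℤ), b.pre E :=
        ENNReal.tsum_iUnion_le_tsum b.pre (fun j : {j : ℤ // k ≤ j} => c (j : ℤ))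
      have step3 : ∑' (j : {j : ℤ // k ≤ j}), ∑' E : c (j : ℤ), b.pre E ≤
          ∑' (j : {j : ℤ // k ≤ j}), (S.slm F (2 ^ (j : ℤ)) + 2 * epsk (j : ℤ)) :=
        ENNReal.tsum_le_tsum fun j => hpre_sum (j : ℤ)
      have step4 : ∑' (j : {j : ℤ // k ≤ j}), (S.slm F (2 ^ (j : ℤ)) + 2 * epsk (j : ℤ))
          = ∑' n : ℕ, (S.slm F (2 ^ (k + n : ℤ)) + 2 * epsk (k + n : ℤ)) := by
        rw [← Equiv.tsum_eq (natEquiv k) (fun j => S.slm F (2 ^ (j : ℤ)) + 2 * epsk (j : ℤ))]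
        rfl
      have step5 : ∀ n : ℕ, S.slm F (2 ^ (k + n : ℤ)) + 2 * epsk (k + n : ℤ) ≤
          (2 ^ (1 - k) * Iv) * 2⁻¹ ^ n + (2 * ε * 2 ^ (-(k + 1))) * 2⁻¹ ^ n := by
        intro n
        refine add_le_add ?_ ?_
        · refine (hslm_le _).trans (le_of_eq ?_)
          rw [mul_comm ((2:ℝ≥0∞) ^ (1 - k)) Iv, mul_assoc, ← two_zpow_neg_nat, two_zpow_mul]
          rw [mul_comm Iv, show (1 - k) + -(n:ℤ) = 1 - (k + n) by ring]
        · rw [hepsk]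
          calc 2 * (ε * 2 ^ (-(k + (n:ℤ) + 1)) * 2 ^ (-(e (k + n) : ℤ)))
              ≤ 2 * (ε * 2 ^ (-(k + (n:ℤ) + 1)) * 1) :=
                mul_le_mul_right (mul_le_mul_right (two_zpow_neg_le_one _) _) _
            _ = (2 * ε * 2 ^ (-(k + 1))) * 2⁻¹ ^ n := by
                rw [mul_one, ← two_zpow_neg_nat, mul_assoc, mul_assoc, two_zpow_mul,
                  show -(k + 1) + -(n:ℤ) = -(k + (n:ℤ) + 1) by ring, ← mul_assoc]
      have step6 : ∑' n : ℕ, ((2 ^ (1 - k) * Iv) * 2⁻¹ ^ n + (2 * ε * 2 ^ (-(k + 1))) * 2⁻¹ ^ n)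
          = (4 * Iv + 2 * ε) * 2 ^ (-k) := by
        rw [ENNReal.tsum_add, ENNReal.tsum_mul_left, ENNReal.tsum_mul_left, tsum_geo]
        have ha : (2:ℝ≥0∞) ^ (1 - k) * 2 = 4 * 2 ^ (-k) := by
          have h := Stmt12Aux.two_zpow_mul (1 - k) 1
          rw [zpow_one] at h
          rw [h, show (1:ℤ) - k + 1 = 2 + -k by ring, ← Stmt12Aux.two_zpow_mul,
            Stmt12Aux.two_zpow_two]
        have hb : (2:ℝ≥0∞) ^ (-(k + 1)) * 2 = 2 ^ (-k) := by
          have h := Stmt12Aux.two_zpow_mul (-(k + 1)) 1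
          rw [zpow_one] at h
          rw [h, show -(k + 1) + 1 = -k by ring]
        have e1 : (2:ℝ≥0∞) ^ (1 - k) * Iv * 2 = 4 * Iv * 2 ^ (-k) := by
          calc (2:ℝ≥0∞) ^ (1 - k) * Iv * 2 = ((2:ℝ≥0∞) ^ (1 - k) * 2) * Iv := by ring
            _ = (4 * 2 ^ (-k)) * Iv := by rw [ha]
            _ = 4 * Iv * 2 ^ (-k) := by ring
        have e2 : 2 * ε * (2:ℝ≥0∞) ^ (-(k + 1)) * 2 = 2 * ε * 2 ^ (-k) := by
          calc 2 * ε * (2:ℝ≥0∞) ^ (-(k + 1)) * 2 = ((2:ℝ≥0∞) ^ (-(k + 1)) * 2) * (2 * ε) := by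
                ring
            _ = 2 ^ (-k) * (2 * ε) := by rw [hb]
            _ = 2 * ε * 2 ^ (-k) := by ring
        rw [e1, e2]
        ring
      calc b.om (D k) ≤ _ := step1
        _ ≤ _ := step2
        _ ≤ _ := step3
        _ = _ := step4
        _ ≤ ∑' n : ℕ, ((2 ^ (1 - k) * Iv) * 2⁻¹ ^ n + (2 * ε * 2 ^ (-(k + 1))) * 2⁻¹ ^ n) :=
            ENNReal.tsum_le_tsum step5
        _ = (4 * Iv + 2 * ε) * 2 ^ (-k) := step6
    set Z : Set Xs := ⋂ (k : ℤ), D k with hZ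
    have hZom : b.om Z = 0 := by
      refine eq_zero_of_le_geo (M := 4 * Iv + 2 * ε) ?_ fun n => ?_
      · exact ENNReal.add_ne_top.2 ⟨ENNReal.mul_ne_top (by norm_num) hIvfin,
          ENNReal.mul_ne_top (by norm_num) hεt⟩
      · rw [← two_zpow_neg_nat]
        exact (om_mono (Set.iInter_subset D (n : ℤ))).trans (homD (n : ℤ))
    have hZm : m Z = 0 := habs Z hZom
    -- layers
    set L : ℤ → Set Xs := fun k => A' k ∩ (D (k + 1))ᶜ with hL
    have hLint : ∀ k : ℤ, ∫⁻ x in L k, (‖F x‖₊ : ℝ≥0∞) ∂m ≤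
        C0 * Q * (2 ^ (k + 1) * S.slm F (2 ^ k)) + C0 * Q * (2 ^ (k + 1) * (2 * epsk k)) := by
      intro k
      set G : Xs → X := (D (k + 1))ᶜ.indicator F with hG
      have hGsm : StronglyMeasurable G := hF.indicator (hDmeas (k + 1)).compl
      have hLmeas : MeasurableSet (L k) := (hA'meas k).inter (hDmeas (k + 1)).compl
      haveI : Countable (c k) := (hc1 k).to_subtype
      have h1 : ∫⁻ x in L k, (‖F x‖₊ : ℝ≥0∞) ∂m = ∫⁻ x in L k, (‖G x‖₊ : ℝ≥0∞) ∂m := by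
        refine setLIntegral_congr_fun hLmeas (fun x hx => ?_)
        rw [hG, Set.indicator_of_mem hx.2]
      have h2 : ∫⁻ x in L k, (‖G x‖₊ : ℝ≥0∞) ∂m ≤ ∑' E : c k, ∫⁻ x in (E : Set Xs),
          (‖G x‖₊ : ℝ≥0∞) ∂m := by
        have hsub2 : L k ⊆ ⋃ E : c k, (E : Set Xs) := by
          rw [← Set.sUnion_eq_iUnion]
          exact Set.inter_subset_left
        exact (lintegral_mono_set hsub2).trans
          (lintegral_iUnion_le (fun E : c k => (E : Set Xs)) (fun x => (‖G x‖₊ : ℝ≥0∞)))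
      have h3 : ∀ E : c k, ∫⁻ x in (E : Set Xs), (‖G x‖₊ : ℝ≥0∞) ∂m ≤
          (C0 * (Q * 2 ^ (k + 1))) * b.om E := by
        intro E
        refine le_trans (hdom E (hc2 k E.2) G hGsm) ?_
        rw [mul_assoc]
        refine mul_le_mul_right (mul_le_mul_left ?_ _) C0
        exact hsize (k + 1) E (hc2 k E.2)
      calc ∫⁻ x in L k, (‖F x‖₊ : ℝ≥0∞) ∂m
          ≤ ∑' E : c k, (C0 * (Q * 2 ^ (k + 1))) * b.om E := by
            rw [h1]; exact h2.trans (ENNReal.tsum_le_tsum h3)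
        _ = (C0 * (Q * 2 ^ (k + 1))) * ∑' E : c k, b.om E := ENNReal.tsum_mul_left
        _ ≤ (C0 * (Q * 2 ^ (k + 1))) * (S.slm F (2 ^ k) + 2 * epsk k) :=
            mul_le_mul_right (hcov_sum k) _
        _ = C0 * Q * (2 ^ (k + 1) * S.slm F (2 ^ k)) + C0 * Q * (2 ^ (k + 1) * (2 * epsk k)) := by
            ring
    -- decomposition of the space
    have hdecomp : (Set.univ : Set Xs) ⊆ Dallᶜ ∪ (Z ∪ ⋃ (k : ℤ), L k) := by
      intro x _
      by_cases hxD : x ∈ Dall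
      · right
        by_cases hxZ : x ∈ Z
        · exact Or.inl hxZ
        · right
          obtain ⟨j0, hj0⟩ := Set.mem_iUnion.mp hxD
          obtain ⟨m2, hm2⟩ : ∃ m2 : ℤ, x ∉ D m2 := by
            by_contra hcon
            push_neg at hcon
            exact hxZ (Set.mem_iInter.mpr hcon)
          have hbdd : ∃ bd : ℤ, ∀ z : ℤ, x ∈ A' z → z ≤ bd := by
            refine ⟨m2 - 1, fun z hz => ?_⟩
            by_contra hcontra
            push_neg at hcontra
            exact hm2 (hAD m2 z (by omega) hz)
          obtain ⟨jm, hjm1, hjm2⟩ := Int.exists_greatest_of_bdd hbdd ⟨j0, hj0⟩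
          refine Set.mem_iUnion.mpr ⟨jm, hjm1, fun hxd => ?_⟩
          obtain ⟨j, hj, hxj⟩ := Set.mem_iUnion₂.mp hxd
          exact absurd (hjm2 j hxj) (by omega)
      · exact Or.inl hxD
    -- the three pieces
    have hNzero : ∫⁻ x in Dallᶜ, (‖F x‖₊ : ℝ≥0∞) ∂m = 0 := by
      have heq : ∀ x ∈ Dallᶜ, (‖F x‖₊ : ℝ≥0∞) = (fun _ => (0:ℝ≥0∞)) x := by
        intro x hx
        have : F x = 0 := by
          have := congrFun hNind x
          rwa [Set.indicator_of_mem hx, Pi.zero_apply] at this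
        simp [this]
      rw [setLIntegral_congr_fun hDallmeas.compl heq]
      simp
    have hZzero : ∫⁻ x in Z, (‖F x‖₊ : ℝ≥0∞) ∂m = 0 := setLIntegral_measure_zero _ _ hZm
    -- sums over layers
    have hsum1 : ∑' k : ℤ, (2:ℝ≥0∞) ^ (k + 1) * S.slm F (2 ^ k) ≤ 4 * Iv := by
      have hterm : ∀ k : ℤ, (2:ℝ≥0∞) ^ (k + 1) * S.slm F (2 ^ k) ≤
          4 * ∫⁻ t in Set.Ioc ((2 : ℝ) ^ (k - 1)) ((2 : ℝ) ^ k), S.slm F (ENNReal.ofReal t) := by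
        intro k
        have : (2:ℝ≥0∞) ^ (k + 1) = 4 * 2 ^ (k - 1) := by
          rw [← two_zpow_two, two_zpow_mul, show (2:ℤ) + (k - 1) = k + 1 by ring]
        rw [this, mul_assoc]
        exact mul_le_mul_right (hJ1 k) 4
      refine (ENNReal.tsum_le_tsum hterm).trans ?_
      rw [ENNReal.tsum_mul_left]
      exact mul_le_mul_right hJsum 4
    have hsum2 : ∑' k : ℤ, (2:ℝ≥0∞) ^ (k + 1) * (2 * epsk k) = 4 * ε := by
      have hterm : ∀ k : ℤ, (2:ℝ≥0∞) ^ (k + 1) * (2 * epsk k) =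
          (2 * ε) * 2 ^ (-(e k : ℤ)) := by
        intro k
        rw [hepsk]
        calc (2:ℝ≥0∞) ^ (k + 1) * (2 * (ε * 2 ^ (-(k + 1)) * 2 ^ (-(e k : ℤ))))
            = (2 ^ (k + 1) * 2 ^ (-(k + 1))) * ((2 * ε) * 2 ^ (-(e k : ℤ))) := by ring
          _ = (2 * ε) * 2 ^ (-(e k : ℤ)) := by
              rw [two_zpow_mul, show (k + 1) + -(k + 1) = 0 by ring, zpow_zero, one_mul]
      calc ∑' k : ℤ, (2:ℝ≥0∞) ^ (k + 1) * (2 * epsk k)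
          = ∑' k : ℤ, (2 * ε) * 2 ^ (-(e k : ℤ)) := by
            exact tsum_congr hterm
        _ = (2 * ε) * ∑' k : ℤ, (2:ℝ≥0∞) ^ (-(e k : ℤ)) := ENNReal.tsum_mul_left
        _ = (2 * ε) * ∑' n : ℕ, (2:ℝ≥0∞) ^ (-(n : ℤ)) := by
            rw [Equiv.tsum_eq e (fun n : ℕ => (2:ℝ≥0∞) ^ (-(n : ℤ)))]
        _ = (2 * ε) * 2 := by
            rw [show (fun n : ℕ => (2:ℝ≥0∞) ^ (-(n : ℤ))) = fun n : ℕ => (2:ℝ≥0∞)⁻¹ ^ n from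
              funext fun n => two_zpow_neg_nat n]
            rw [tsum_geo]
        _ = 4 * ε := by ring
    -- assemble
    calc ∫⁻ x, (‖F x‖₊ : ℝ≥0∞) ∂m = ∫⁻ x in Set.univ, (‖F x‖₊ : ℝ≥0∞) ∂m :=
          (setLIntegral_univ _).symm
      _ ≤ ∫⁻ x in Dallᶜ ∪ (Z ∪ ⋃ (k : ℤ), L k), (‖F x‖₊ : ℝ≥0∞) ∂m :=
          lintegral_mono_set hdecomp
      _ ≤ (∫⁻ x in Dallᶜ, (‖F x‖₊ : ℝ≥0∞) ∂m) +
          ((∫⁻ x in Z, (‖F x‖₊ : ℝ≥0∞) ∂m) + ∫⁻ x in ⋃ (k : ℤ), L k, (‖F x‖₊ : ℝ≥0∞) ∂m) :=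
          le_trans (lintegral_union_le _ _ _) (add_le_add_right (lintegral_union_le _ _ _) _)
      _ = ∫⁻ x in ⋃ (k : ℤ), L k, (‖F x‖₊ : ℝ≥0∞) ∂m := by rw [hNzero, hZzero]; simp
      _ ≤ ∑' k : ℤ, ∫⁻ x in L k, (‖F x‖₊ : ℝ≥0∞) ∂m := lintegral_iUnion_le _ _
      _ ≤ ∑' k : ℤ, (C0 * Q * (2 ^ (k + 1) * S.slm F (2 ^ k)) +
            C0 * Q * (2 ^ (k + 1) * (2 * epsk k))) := ENNReal.tsum_le_tsum hLint
      _ = C0 * Q * (∑' k : ℤ, 2 ^ (k + 1) * S.slm F (2 ^ k)) +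
            C0 * Q * (∑' k : ℤ, 2 ^ (k + 1) * (2 * epsk k)) := by
          rw [ENNReal.tsum_add, ENNReal.tsum_mul_left, ENNReal.tsum_mul_left]
      _ ≤ C0 * Q * (4 * Iv) + C0 * Q * (4 * ε) :=
          add_le_add (mul_le_mul_right hsum1 _) (mul_le_mul_right hsum2.le _)
      _ = 4 * C0 * Q * Iv + 4 * C0 * Q * ε := by ring
  -- remove ε
  have hfinal : ∫⁻ x, (‖F x‖₊ : ℝ≥0∞) ∂m ≤ 4 * C0 * Q * Iv := by
    refine ENNReal.le_of_forall_pos_le_add fun ε hε hlt => ?_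
    have hd0 : (4 * C0 * Q + 1 : ℝ≥0∞) ≠ 0 := (zero_lt_one.trans_le le_add_self).ne'
    have hdt : (4 * C0 * Q + 1 : ℝ≥0∞) ≠ ⊤ :=
      ENNReal.add_ne_top.2 ⟨ENNReal.mul_ne_top (ENNReal.mul_ne_top (by norm_num) hC0) hQt,
        ENNReal.one_ne_top⟩
    set δ : ℝ≥0∞ := (ε : ℝ≥0∞) / (4 * C0 * Q + 1) with hδ
    have hδ0 : 0 < δ := ENNReal.div_pos (by exact_mod_cast hε.ne') hdt
    have hδt : δ ≠ ⊤ := by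
      rw [hδ]
      exact (ENNReal.div_lt_top ENNReal.coe_ne_top hd0).ne
    calc ∫⁻ x, (‖F x‖₊ : ℝ≥0∞) ∂m ≤ 4 * C0 * Q * Iv + 4 * C0 * Q * δ := main δ hδ0 hδt
      _ ≤ 4 * C0 * Q * Iv + (4 * C0 * Q + 1) * δ := by
          exact add_le_add_right (mul_le_mul_left le_self_add δ) _
      _ = 4 * C0 * Q * Iv + ε := by
          rw [hδ, ENNReal.mul_div_cancel hd0 hdt]
  calc ∫⁻ x, (‖F x‖₊ : ℝ≥0∞) ∂m ≤ 4 * C0 * Q * Iv := hfinal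
    _ ≤ (4 * C0 * (S.C * (1 + S.C)) + 1) * S.lp 1 F := by
        rw [hI]
        exact mul_le_mul_left le_self_add Iv
end
end
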